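/- arXiv:2306.17813 — 11 statements merged into one kernel-verified Lean document; each statement's English description precedes it below -/
import Mathlib

section
/- For (Lebesgue) almost every real number α > 3, the equation x + y = z has at most finitely many solutions (x, y, z) ∈ PS(α)³; that is, the set {(x, y, z) ∈ ℤ³ : x, y, z ∈ PS(α) and x + y = z} is finite. -/
open MeasureTheory
open Filter Set Finset
open scoped ENNReal

/-- The Piatetski–Shapiro set `PS(α) = {⌊n^α⌋ : n ∈ ℕ, n ≥ 1}`. -/
def PS (α : ℝ) : Set ℤ := {m : ℤ | ∃ n : ℕ, 1 ≤ n ∧ m = ⌊(n : ℝ) ^ α⌋}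

lemma escape (g g' : ℝ → ℝ) (hd : ∀ x, HasDerivAt g (g' x) x)
    {s t : ℝ}
    (hpos : ∀ x ∈ Set.Icc s t, g x = 2 → 0 < g' x)
    (hgt : g t ≤ 2) : ∀ r ∈ Set.Icc s t, g r ≤ 2 := by
  have hgc : Continuous g := by
    rw [continuous_iff_continuousAt]; exact fun x => (hd x).continuousAt
  rintro r ⟨hsr, hrt⟩
  by_contra hgr
  push_neg at hgr
  set A : Set ℝ := {x ∈ Set.Icc r t | g x ≤ 2} with hA
  have hAne : A.Nonempty := ⟨t, ⟨⟨hrt, le_refl t⟩, hgt⟩⟩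
  have hAbdd : BddBelow A := ⟨r, fun x hx => hx.1.1⟩
  have hAcl : IsClosed A := by
    have : A = Set.Icc r t ∩ g ⁻¹' Set.Iic 2 := rfl
    rw [this]
    exact isClosed_Icc.inter (isClosed_Iic.preimage hgc)
  set r1 := sInf A with hr1def
  have hr1A : r1 ∈ A := hAcl.csInf_mem hAne hAbdd
  have hrr1 : r < r1 := by
    rcases lt_or_ge r r1 with h | h
    · exact h
    · exfalso
      rcases eq_or_lt_of_le h with h' | h'
      · exact absurd hr1A.2 (by rw [h']; linarith)
      · exact absurd hr1A.1.1 (not_le.mpr h')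
  have hg2 : g r1 = 2 := by
    rcases eq_or_lt_of_le hr1A.2 with h | h
    · exact h
    · exfalso
      -- points slightly to the left of r1 are in A, contradicting sInf
      have hev : ∀ᶠ x in nhds r1, g x < 2 := (hgc.continuousAt).eventually_lt continuousAt_const h
      have hev' : ∀ᶠ x in nhdsWithin r1 (Set.Iio r1), g x < 2 := hev.filter_mono nhdsWithin_le_nhds
      have hev2 : Set.Ioo r r1 ∈ nhdsWithin r1 (Set.Iio r1) :=
        Ioo_mem_nhdsLT_of_mem ⟨hrr1, le_refl _⟩
      have : ∃ x, x ∈ Set.Ioo r r1 ∧ g x < 2 := by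
        have hne : (nhdsWithin r1 (Set.Iio r1)).NeBot := nhdsLT_neBot r1
        rcases (hev'.and (eventually_of_mem hev2 (fun x hx => hx))).exists with ⟨x, hx1, hx2⟩
        exact ⟨x, hx2, hx1⟩
      rcases this with ⟨x, hx, hgx⟩
      have hxA : x ∈ A := ⟨⟨hx.1.le, hx.2.le.trans hr1A.1.2⟩, hgx.le⟩
      exact absurd (csInf_le hAbdd hxA) (not_le.mpr hx.2)
  -- on [r, r1), g > 2
  have hgt2 : ∀ x ∈ Set.Ico r r1, 2 < g x := by
    rintro x ⟨hx1, hx2⟩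
    by_contra h
    push_neg at h
    have hxA : x ∈ A := ⟨⟨hx1, hx2.le.trans hr1A.1.2⟩, h⟩
    exact absurd (csInf_le hAbdd hxA) (not_le.mpr hx2)
  -- derivative at r1 from the left is ≤ 0
  have hder : g' r1 ≤ 0 := by
    have h1 : HasDerivWithinAt g (g' r1) (Set.Iio r1) r1 :=
      (hd r1).hasDerivWithinAt
    rw [hasDerivWithinAt_iff_tendsto_slope] at h1
    have hsub : Set.Iio r1 \ {r1} = Set.Iio r1 := by
      ext x; simp only [Set.mem_diff, Set.mem_Iio, Set.mem_singleton_iff, and_iff_left_iff_imp]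
      intro h; exact ne_of_lt h
    rw [hsub] at h1
    have hne : (nhdsWithin r1 (Set.Iio r1)).NeBot := nhdsLT_neBot r1
    refine le_of_tendsto h1 ?_
    filter_upwards [Ioo_mem_nhdsLT_of_mem (⟨hrr1, le_refl _⟩ : r1 ∈ Set.Ioc r r1)] with x hx
    rw [slope_def_field]
    have h2 : 2 < g x := hgt2 x ⟨hx.1.le, hx.2⟩
    have h3 : g x - g r1 > 0 := by rw [hg2]; linarith
    have h4 : x - r1 < 0 := by linarith [hx.2]
    exact le_of_lt (div_neg_of_pos_of_neg h3 h4)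
  have hr1mem : r1 ∈ Set.Icc s t := ⟨hsr.trans hr1A.1.1, hr1A.1.2⟩
  exact absurd (hpos r1 hr1mem hg2) (not_lt.mpr hder)

lemma twosided (g g' : ℝ → ℝ) (hd : ∀ x, HasDerivAt g (g' x) x)
    {δ s t : ℝ} (hδ : 0 < δ) (hst : s ≤ t)
    (hpos : ∀ x ∈ Set.Icc s t, |g x| ≤ 2 → δ ≤ g' x)
    (hgs : |g s| ≤ 2) (hgt : |g t| ≤ 2) : t - s ≤ 4 / δ := by
  have habs : ∀ x, |g x| ≤ 2 ↔ -2 ≤ g x ∧ g x ≤ 2 := fun x => abs_le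
  have hub : ∀ r ∈ Set.Icc s t, g r ≤ 2 := by
    refine escape g g' hd (fun x hx h2 => ?_) ((habs t).mp hgt).2
    exact lt_of_lt_of_le hδ (hpos x hx (by rw [h2]; norm_num))
  have hlb : ∀ r ∈ Set.Icc s t, -2 ≤ g r := by
    set G : ℝ → ℝ := fun x => -g (s + t - x) with hG
    set G' : ℝ → ℝ := fun x => g' (s + t - x) with hG'
    have hdG : ∀ x, HasDerivAt G (G' x) x := by
      intro x
      have h1 : HasDerivAt (fun x : ℝ => s + t - x) (-1) x := by
        simpa using (hasDerivAt_id x).const_sub (s + t)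
      have h2 := ((hd (s + t - x)).comp x h1).neg
      simpa [hG, hG', Function.comp_def, Pi.neg_def] using h2
    have key : ∀ r ∈ Set.Icc s t, G r ≤ 2 := by
      refine escape G G' hdG (fun x hx h2 => ?_) ?_
      · have hxm : s + t - x ∈ Set.Icc s t := ⟨by linarith [hx.2], by linarith [hx.1]⟩
        have : g (s + t - x) = -2 := by
          have : -g (s + t - x) = 2 := h2
          linarith
        refine lt_of_lt_of_le hδ (hpos _ hxm ?_)
        rw [this]; norm_num
      · show -g (s + t - t) ≤ 2
        simp only [add_sub_cancel_right]
        linarith [((habs s).mp hgs).1]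
    intro r hr
    have := key (s + t - r) ⟨by linarith [hr.2], by linarith [hr.1]⟩
    have h2 : -g (s + t - (s + t - r)) ≤ 2 := this
    simp only [sub_sub_cancel] at h2
    linarith
  rcases eq_or_lt_of_le hst with h | h
  · rw [← h]; simp; positivity
  · obtain ⟨ξ, hξ, hξ2⟩ := exists_hasDerivAt_eq_slope g g' h
      (Continuous.continuousOn (by rw [continuous_iff_continuousAt]; exact fun x => (hd x).continuousAt))
      (fun x _ => hd x)
    have hξm : ξ ∈ Set.Icc s t := ⟨hξ.1.le, hξ.2.le⟩
    have h1 : δ ≤ g' ξ := hpos ξ hξm ((habs ξ).mpr ⟨hlb ξ hξm, hub ξ hξm⟩)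
    rw [hξ2] at h1
    have h2 : g t - g s ≤ 4 := by
      have := ((habs t).mp hgt).2; have := ((habs s).mp hgs).1; linarith
    have h3 : δ * (t - s) ≤ g t - g s := by
      calc δ * (t - s) ≤ (g t - g s) / (t - s) * (t - s) :=
            mul_le_mul_of_nonneg_right h1 (by linarith)
        _ = g t - g s := div_mul_cancel₀ _ (by linarith)
    rw [le_div_iff₀ hδ]
    nlinarith

lemma measure_bound (g g' : ℝ → ℝ) (hd : ∀ x, HasDerivAt g (g' x) x)
    {δ p q : ℝ} (hδ : 0 < δ)
    (hpos : ∀ x ∈ Set.Icc p q, |g x| ≤ 2 → δ ≤ g' x) :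
    volume {x ∈ Set.Icc p q | |g x| ≤ 2} ≤ ENNReal.ofReal (4 / δ) := by
  set S := {x ∈ Set.Icc p q | |g x| ≤ 2} with hS
  rcases Set.eq_empty_or_nonempty S with h | h
  · rw [h]; simp
  have hbdd : BddBelow S := ⟨p, fun x hx => hx.1.1⟩
  have hgc : Continuous g := by
    rw [continuous_iff_continuousAt]; exact fun x => (hd x).continuousAt
  have hcl : IsClosed S := by
    have : S = Set.Icc p q ∩ (fun x => |g x|) ⁻¹' Set.Iic 2 := rfl
    rw [this]
    exact isClosed_Icc.inter (isClosed_Iic.preimage (hgc.abs))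
  set u := sInf S with hu
  have huS : u ∈ S := hcl.csInf_mem h hbdd
  have hsub : S ⊆ Set.Icc u (u + 4 / δ) := by
    intro x hx
    have h1 : u ≤ x := csInf_le hbdd hx
    have h2 : x - u ≤ 4 / δ := by
      refine twosided g g' hd hδ h1 (fun y hy => hpos y ⟨huS.1.1.trans hy.1, hy.2.trans hx.1.2⟩) huS.2 hx.2
    exact ⟨h1, by linarith⟩
  calc volume S ≤ volume (Set.Icc u (u + 4 / δ)) := measure_mono hsub
    _ = ENNReal.ofReal (4 / δ) := by rw [Real.volume_Icc]; ring_nf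

noncomputable def Gf (a b c : ℕ) : ℝ → ℝ := fun α => (c:ℝ)^α - (a:ℝ)^α - (b:ℝ)^α
noncomputable def Gf' (a b c : ℕ) : ℝ → ℝ := fun α =>
  (c:ℝ)^α * Real.log c - (a:ℝ)^α * Real.log a - (b:ℝ)^α * Real.log b

lemma hasDeriv_Gf {a b c : ℕ} (ha : 1 ≤ a) (hb : 1 ≤ b) (hc : 1 ≤ c) (α : ℝ) :
    HasDerivAt (Gf a b c) (Gf' a b c α) α := by
  have pa : (0:ℝ) < a := by exact_mod_cast ha
  have pb : (0:ℝ) < b := by exact_mod_cast hb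
  have pc : (0:ℝ) < c := by exact_mod_cast hc
  exact (((Real.hasStrictDerivAt_const_rpow pc α).hasDerivAt.sub
    (Real.hasStrictDerivAt_const_rpow pa α).hasDerivAt).sub
    (Real.hasStrictDerivAt_const_rpow pb α).hasDerivAt)

lemma deriv_lower {k a b c : ℕ} (hk : 1 ≤ k) (ha : 1 ≤ a) (hab : a ≤ b)
    (hbc : b < c) (hc2 : c ≤ 2*b) {α : ℝ} (hα1 : 3 + 1/(k:ℝ) ≤ α) (hα2 : α ≤ (k:ℝ))
    (hgabs : |Gf a b c α| ≤ 2) :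
    ((c:ℝ) - (b:ℝ)) * (b:ℝ) ^ ((2:ℝ) + 1/(k:ℝ)) / 2 ≤ Gf' a b c α := by
  have hb : 1 ≤ b := le_trans ha hab
  have hc : 1 ≤ c := le_trans hb hbc.le
  have ha1 : (1:ℝ) ≤ a := by exact_mod_cast ha
  have hb1 : (1:ℝ) ≤ b := by exact_mod_cast hb
  have hc1 : (1:ℝ) ≤ c := by exact_mod_cast hc
  have hab' : (a:ℝ) ≤ b := by exact_mod_cast hab
  have hbc' : (b:ℝ) < c := by exact_mod_cast hbc
  have hk1 : (1:ℝ) ≤ k := by exact_mod_cast hk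
  have hd1 : (1:ℝ) ≤ (c:ℝ) - b := by
    have : (b:ℝ) + 1 ≤ c := by exact_mod_cast hbc
    linarith
  have hR0 : (0:ℝ) < (b:ℝ) ^ ((2:ℝ) + 1/(k:ℝ)) := Real.rpow_pos_of_pos (by linarith) _
  have hkpos : (0:ℝ) < 1/(k:ℝ) := one_div_pos.mpr (by linarith)
  rw [abs_le] at hgabs
  have hGeq : Gf a b c α = (c:ℝ)^α - (a:ℝ)^α - (b:ℝ)^α := rfl
  rw [hGeq] at hgabs
  have hA0 : (0:ℝ) ≤ (a:ℝ)^α := Real.rpow_nonneg (by linarith) _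
  have hC0 : (0:ℝ) ≤ (c:ℝ)^α := Real.rpow_nonneg (by linarith) _
  have hLb0 : (0:ℝ) ≤ Real.log b := Real.log_nonneg hb1
  have e1 : (a:ℝ)^α * Real.log a ≤ (a:ℝ)^α * Real.log b :=
    mul_le_mul_of_nonneg_left (Real.log_le_log (by linarith) hab') hA0
  have e3 : ((c:ℝ) - b) / c ≤ Real.log c - Real.log b := by
    have h1 : Real.log ((b:ℝ)/c) ≤ (b:ℝ)/c - 1 :=
      Real.log_le_sub_one_of_pos (by positivity)
    rw [Real.log_div (by linarith) (by linarith)] at h1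
    have h2 : (b:ℝ)/c - 1 = -(((c:ℝ) - b)/c) := by field_simp; try ring
    rw [h2] at h1
    linarith
  have e4 : (c:ℝ)^α * (((c:ℝ) - b) / c) = (c:ℝ)^(α - 1) * ((c:ℝ) - b) := by
    rw [Real.rpow_sub (by linarith : (0:ℝ) < c), Real.rpow_one]
    field_simp
    try ring
  have e5 : (b:ℝ) ^ ((2:ℝ) + 1/(k:ℝ)) ≤ (c:ℝ)^(α-1) := by
    calc (b:ℝ) ^ ((2:ℝ) + 1/(k:ℝ)) ≤ (b:ℝ)^(α-1) :=
          Real.rpow_le_rpow_of_exponent_le hb1 (by linarith)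
      _ ≤ (c:ℝ)^(α-1) := Real.rpow_le_rpow (by linarith) hbc'.le (by linarith)
  have e6 : Real.log b ≤ (b:ℝ) - 1 := Real.log_le_sub_one_of_pos (by linarith)
  have e7 : (4:ℝ) * Real.log b ≤ (b:ℝ) ^ ((2:ℝ) + 1/(k:ℝ)) := by
    have h1 : (b:ℝ)^(2:ℕ) ≤ (b:ℝ) ^ ((2:ℝ) + 1/(k:ℝ)) := by
      rw [← Real.rpow_natCast (b:ℝ) 2]
      exact Real.rpow_le_rpow_of_exponent_le hb1 (by push_cast; linarith)
    nlinarith [sq_nonneg ((b:ℝ) - 2), e6, h1]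
  have f1 : (c:ℝ)^α * (((c:ℝ) - b)/c) ≤ (c:ℝ)^α * (Real.log c - Real.log b) :=
    mul_le_mul_of_nonneg_left e3 hC0
  have f2 : (b:ℝ) ^ ((2:ℝ) + 1/(k:ℝ)) * ((c:ℝ) - b) ≤ (c:ℝ)^(α-1) * ((c:ℝ) - b) :=
    mul_le_mul_of_nonneg_right e5 (by linarith)
  have f3 : (-2 : ℝ) * Real.log b ≤ ((c:ℝ)^α - (a:ℝ)^α - (b:ℝ)^α) * Real.log b :=
    mul_le_mul_of_nonneg_right hgabs.1 hLb0
  have f5 : (b:ℝ) ^ ((2:ℝ) + 1/(k:ℝ)) ≤ (b:ℝ) ^ ((2:ℝ) + 1/(k:ℝ)) * ((c:ℝ) - b) :=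
    le_mul_of_one_le_right hR0.le hd1
  have id1 : (c:ℝ)^α * Real.log c - (a:ℝ)^α * Real.log b - (b:ℝ)^α * Real.log b
      = (c:ℝ)^α * (Real.log c - Real.log b)
        + ((c:ℝ)^α - (a:ℝ)^α - (b:ℝ)^α) * Real.log b := by ring
  have hG'eq : Gf' a b c α
      = (c:ℝ)^α * Real.log c - (a:ℝ)^α * Real.log a - (b:ℝ)^α * Real.log b := rfl
  rw [hG'eq]
  linarith [e1, f1, f2, f3, f5, id1, e4, e7]

lemma triple_bound (k a b c : ℕ) (hk : 1 ≤ k) (ha : 1 ≤ a) (hab : a ≤ b)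
    (hbc : b < c) (hc2 : c ≤ 2*b) :
    volume {α ∈ Set.Icc (3 + 1/(k:ℝ)) (k:ℝ) | |Gf a b c α| ≤ 2}
      ≤ ENNReal.ofReal (8 / (((c:ℝ) - (b:ℝ)) * (b:ℝ) ^ ((2:ℝ) + 1/(k:ℝ)))) := by
  have hb : 1 ≤ b := le_trans ha hab
  have hc : 1 ≤ c := le_trans hb hbc.le
  have ha1 : (1:ℝ) ≤ a := by exact_mod_cast ha
  have hb1 : (1:ℝ) ≤ b := by exact_mod_cast hb
  have hc1 : (1:ℝ) ≤ c := by exact_mod_cast hc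
  have hab' : (a:ℝ) ≤ b := by exact_mod_cast hab
  have hbc' : (b:ℝ) < c := by exact_mod_cast hbc
  have hk1 : (1:ℝ) ≤ k := by exact_mod_cast hk
  have hd1 : (1:ℝ) ≤ (c:ℝ) - b := by
    have : (b:ℝ) + 1 ≤ c := by exact_mod_cast hbc
    linarith
  set d : ℝ := (c:ℝ) - b with hd
  set R : ℝ := (b:ℝ) ^ ((2:ℝ) + 1/(k:ℝ)) with hR
  have hR0 : 0 < R := Real.rpow_pos_of_pos (by linarith) _
  set δ : ℝ := d * R / 2 with hδdef
  have hδ : 0 < δ := by positivity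
  have key := measure_bound (Gf a b c) (Gf' a b c) (hasDeriv_Gf ha hb hc)
    (p := 3 + 1/(k:ℝ)) (q := (k:ℝ)) hδ ?_
  · refine le_trans key (le_of_eq ?_)
    congr 1
    rw [hδdef]
    field_simp
    ring
  · -- the derivative bound
    rintro α ⟨hα1, hα2⟩ hgabs
    exact deriv_lower hk ha hab hbc hc2 hα1 hα2 hgabs

noncomputable def Fb (k b : ℕ) : Set ℝ :=
  ⋃ a ∈ Finset.Icc 1 b, ⋃ c ∈ Finset.Ioc b (2*b),
    {α ∈ Set.Icc (3 + 1/(k:ℝ)) (k:ℝ) | |Gf a b c α| ≤ 2}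

lemma Fb_bound (k b : ℕ) (hk : 1 ≤ k) :
    volume (Fb k b)
      ≤ ENNReal.ofReal ((b:ℝ) * (8 * (1 + Real.log b) / (b:ℝ)^((2:ℝ)+1/(k:ℝ)))) := by
  rcases Nat.eq_zero_or_pos b with rfl | hb
  · have : Fb k 0 = ∅ := by simp [Fb]
    rw [this]; simp
  have hb1 : (1:ℝ) ≤ b := by exact_mod_cast hb
  have hR0 : (0:ℝ) < (b:ℝ)^((2:ℝ)+1/(k:ℝ)) := Real.rpow_pos_of_pos (by linarith) _
  -- harmonic sum bound
  have hharm : ∑ c ∈ Finset.Ioc b (2*b), (1:ℝ)/((c:ℝ) - b) ≤ 1 + Real.log b := by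
    have heq : ∑ c ∈ Finset.Ioc b (2*b), (1:ℝ)/((c:ℝ) - b)
        = ∑ d ∈ Finset.Icc 1 b, (1:ℝ)/(d:ℝ) := by
      have hmap : Finset.Ioc b (2*b) = (Finset.Icc 1 b).map (addLeftEmbedding b) := by
        rw [Finset.map_add_left_Icc]
        ext x
        simp only [Finset.mem_Ioc, Finset.mem_Icc]
        omega
      rw [hmap, Finset.sum_map]
      refine Finset.sum_congr rfl fun d hd => ?_
      simp only [addLeftEmbedding_apply]
      have : ((b + d : ℕ):ℝ) - (b:ℝ) = (d:ℝ) := by push_cast; ring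
      rw [this]
    rw [heq]
    have : ∑ d ∈ Finset.Icc 1 b, (1:ℝ)/(d:ℝ) = (harmonic b : ℝ) := by
      rw [harmonic_eq_sum_Icc]
      push_cast
      simp [one_div]
    rw [this]
    exact harmonic_le_one_add_log b
  have step1 : volume (Fb k b)
      ≤ ∑ a ∈ Finset.Icc 1 b, ∑ c ∈ Finset.Ioc b (2*b),
          volume {α ∈ Set.Icc (3 + 1/(k:ℝ)) (k:ℝ) | |Gf a b c α| ≤ 2} := by
    refine (measure_biUnion_finset_le _ _).trans (Finset.sum_le_sum fun a _ => ?_)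
    exact measure_biUnion_finset_le _ _
  have step2 : ∀ a ∈ Finset.Icc 1 b,
      ∑ c ∈ Finset.Ioc b (2*b),
          volume {α ∈ Set.Icc (3 + 1/(k:ℝ)) (k:ℝ) | |Gf a b c α| ≤ 2}
        ≤ ENNReal.ofReal (8 * (1 + Real.log b) / (b:ℝ)^((2:ℝ)+1/(k:ℝ))) := by
    intro a ha
    rw [Finset.mem_Icc] at ha
    have h1 : ∀ c ∈ Finset.Ioc b (2*b),
        volume {α ∈ Set.Icc (3 + 1/(k:ℝ)) (k:ℝ) | |Gf a b c α| ≤ 2}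
          ≤ ENNReal.ofReal (8 / (((c:ℝ) - (b:ℝ)) * (b:ℝ) ^ ((2:ℝ) + 1/(k:ℝ)))) := by
      intro c hc
      rw [Finset.mem_Ioc] at hc
      exact triple_bound k a b c hk ha.1 ha.2 hc.1 hc.2
    refine (Finset.sum_le_sum h1).trans ?_
    rw [← ENNReal.ofReal_sum_of_nonneg (fun c hc => ?_)]
    · refine ENNReal.ofReal_le_ofReal ?_
      have : ∑ c ∈ Finset.Ioc b (2*b), 8 / (((c:ℝ) - b) * (b:ℝ) ^ ((2:ℝ) + 1/(k:ℝ)))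
          = (∑ c ∈ Finset.Ioc b (2*b), (1:ℝ)/((c:ℝ) - b)) * (8 / (b:ℝ)^((2:ℝ)+1/(k:ℝ))) := by
        rw [Finset.sum_mul]
        refine Finset.sum_congr rfl fun c hc => ?_
        rw [Finset.mem_Ioc] at hc
        have hcb : (0:ℝ) < (c:ℝ) - b := by
          have : (b:ℝ) < c := by exact_mod_cast hc.1
          linarith
        field_simp
      rw [this]
      have hlog : (0:ℝ) ≤ 1 + Real.log b := by
        have := Real.log_nonneg hb1; linarith
      calc (∑ c ∈ Finset.Ioc b (2*b), (1:ℝ)/((c:ℝ) - b)) * (8 / (b:ℝ)^((2:ℝ)+1/(k:ℝ)))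
          ≤ (1 + Real.log b) * (8 / (b:ℝ)^((2:ℝ)+1/(k:ℝ))) := by
            apply mul_le_mul_of_nonneg_right hharm (div_nonneg (by norm_num) hR0.le)
        _ = 8 * (1 + Real.log b) / (b:ℝ)^((2:ℝ)+1/(k:ℝ)) := by ring
    · rw [Finset.mem_Ioc] at hc
      have : (b:ℝ) < c := by exact_mod_cast hc.1
      exact div_nonneg (by norm_num) (mul_nonneg (by linarith) hR0.le)
  refine step1.trans ?_
  calc ∑ a ∈ Finset.Icc 1 b, ∑ c ∈ Finset.Ioc b (2*b),
          volume {α ∈ Set.Icc (3 + 1/(k:ℝ)) (k:ℝ) | |Gf a b c α| ≤ 2}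
      ≤ ∑ _a ∈ Finset.Icc 1 b,
          ENNReal.ofReal (8 * (1 + Real.log b) / (b:ℝ)^((2:ℝ)+1/(k:ℝ))) :=
        Finset.sum_le_sum step2
    _ = (b : ℝ≥0∞) * ENNReal.ofReal (8 * (1 + Real.log b) / (b:ℝ)^((2:ℝ)+1/(k:ℝ))) := by
        rw [Finset.sum_const, Nat.card_Icc]
        simp [nsmul_eq_mul]
    _ = ENNReal.ofReal ((b:ℝ) * (8 * (1 + Real.log b) / (b:ℝ)^((2:ℝ)+1/(k:ℝ)))) := by
        rw [ENNReal.ofReal_mul (by positivity)]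
        congr 1
        exact (ENNReal.ofReal_natCast b).symm

lemma tsum_Fb_ne_top (k : ℕ) (hk : 1 ≤ k) : ∑' b, volume (Fb k b) ≠ ∞ := by
  have hk1 : (1:ℝ) ≤ k := by exact_mod_cast hk
  set s : ℝ := 1 + 1/(2*(k:ℝ)) with hs
  have hs1 : 1 < s := by
    rw [hs]
    have : (0:ℝ) < 1/(2*(k:ℝ)) := by positivity
    linarith
  set v : ℕ → ℝ := fun b => 8*(2*(k:ℝ)+1)/(b:ℝ)^s with hv
  have hv0 : ∀ b, 0 ≤ v b := by
    intro b
    have : (0:ℝ) ≤ (b:ℝ)^s := Real.rpow_nonneg (Nat.cast_nonneg b) _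
    positivity
  have hvsum : Summable v := by
    have h1 : Summable (fun b : ℕ => 1/(b:ℝ)^s) := Real.summable_one_div_nat_rpow.mpr hs1
    have := h1.mul_left (8*(2*(k:ℝ)+1))
    refine this.congr fun b => ?_
    rw [hv]
    ring
  have hbound : ∀ b : ℕ, volume (Fb k b) ≤ ENNReal.ofReal (v b) := by
    intro b
    refine (Fb_bound k b hk).trans (ENNReal.ofReal_le_ofReal ?_)
    rcases Nat.eq_zero_or_pos b with rfl | hb
    · simp [hv]
      positivity
    have hb1 : (1:ℝ) ≤ b := by exact_mod_cast hb
    have hbpos : (0:ℝ) < b := by linarith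
    set P : ℝ := (b:ℝ)^s with hP
    have hP1 : 1 ≤ P := Real.one_le_rpow hb1 (by linarith)
    have hPpos : 0 < P := by linarith
    have hRP : (b:ℝ)^((2:ℝ)+1/(k:ℝ)) = P^2 := by
      have hk0 : (k:ℝ) ≠ 0 := by linarith
      have h2s : (2:ℝ)+1/(k:ℝ) = s * 2 := by rw [hs]; field_simp
      rw [h2s, hP, ← Real.rpow_natCast ((b:ℝ)^s) 2, ← Real.rpow_mul (by linarith)]
      norm_num
    have hbP : (b:ℝ) * (b:ℝ)^(1/(2*(k:ℝ))) = P := by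
      rw [hP, hs, Real.rpow_add hbpos, Real.rpow_one]
    have hlog : 1 + Real.log b ≤ (2*(k:ℝ)+1) * (b:ℝ)^(1/(2*(k:ℝ))) := by
      have h1 : Real.log ((b:ℝ)^(1/(2*(k:ℝ)))) ≤ (b:ℝ)^(1/(2*(k:ℝ))) - 1 :=
        Real.log_le_sub_one_of_pos (Real.rpow_pos_of_pos hbpos _)
      rw [Real.log_rpow hbpos] at h1
      have h2 : Real.log b ≤ 2*(k:ℝ) * ((b:ℝ)^(1/(2*(k:ℝ))) - 1) := by
        have hkpos : (0:ℝ) < 2*(k:ℝ) := by linarith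
        have h4 := mul_le_mul_of_nonneg_left h1 hkpos.le
        have h5 : 2*(k:ℝ)*(1/(2*(k:ℝ)) * Real.log b) = Real.log b := by
          field_simp
        linarith [h4, h5.symm.le, h5.le]
      have h3 : (1:ℝ) ≤ (b:ℝ)^(1/(2*(k:ℝ))) := Real.one_le_rpow hb1 (by positivity)
      nlinarith [h2, h3]
    rw [hRP]
    have key : (b:ℝ) * (1 + Real.log b) ≤ (2*(k:ℝ)+1) * P := by
      calc (b:ℝ) * (1 + Real.log b) ≤ (b:ℝ) * ((2*(k:ℝ)+1) * (b:ℝ)^(1/(2*(k:ℝ)))) :=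
            mul_le_mul_of_nonneg_left hlog (by linarith)
        _ = (2*(k:ℝ)+1) * ((b:ℝ) * (b:ℝ)^(1/(2*(k:ℝ)))) := by ring
        _ = (2*(k:ℝ)+1) * P := by rw [hbP]
    have hlhs : (b:ℝ) * (8 * (1 + Real.log b) / P^2) = 8 * ((b:ℝ) * (1 + Real.log b)) / P^2 := by
      ring
    rw [hlhs, hv]
    rw [div_le_div_iff₀ (by positivity) (Real.rpow_pos_of_pos hbpos s)]
    calc 8 * ((b:ℝ) * (1 + Real.log b)) * (b:ℝ)^s = 8 * ((b:ℝ)*(1+Real.log b)) * P := rfl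
      _ ≤ 8 * ((2*(k:ℝ)+1) * P) * P := by nlinarith [key, hPpos]
      _ = 8*(2*(k:ℝ)+1) * P^2 := by ring
  have final : ∑' b, volume (Fb k b) ≤ ENNReal.ofReal (∑' b, v b) := by
    calc ∑' b, volume (Fb k b) ≤ ∑' b, ENNReal.ofReal (v b) := ENNReal.tsum_le_tsum hbound
      _ = ENNReal.ofReal (∑' b, v b) := (ENNReal.ofReal_tsum_of_nonneg hv0 hvsum).symm
  exact ne_top_of_le_ne_top ENNReal.ofReal_ne_top final

def SolSet (α : ℝ) : Set (ℤ × ℤ × ℤ) :=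
  {T : ℤ × ℤ × ℤ | T.1 ∈ PS α ∧ T.2.1 ∈ PS α ∧ T.2.2 ∈ PS α ∧ T.1 + T.2.1 = T.2.2}

lemma mem_PS_one_le {α : ℝ} (hα : 0 ≤ α) {m : ℤ} (hm : m ∈ PS α) : 1 ≤ m := by
  obtain ⟨n, hn, rfl⟩ := hm
  have h1 : (1:ℝ) ≤ (n:ℝ)^α := Real.one_le_rpow (by exact_mod_cast hn) hα
  exact_mod_cast Int.le_floor.mpr (by exact_mod_cast h1)

lemma exists_big_sol {α : ℝ} (hα : 0 ≤ α) (h : (SolSet α).Infinite) (M : ℤ) :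
    ∃ T ∈ SolSet α, M < T.2.2 := by
  by_contra hcon
  push_neg at hcon
  refine h (Set.Finite.subset (Set.finite_Icc ((1,1,1) : ℤ×ℤ×ℤ) (M, M, M)) ?_)
  rintro ⟨x, y, z⟩ ⟨px, py, pz, hsum⟩
  have h1 : 1 ≤ x := mem_PS_one_le hα px
  have h2 : 1 ≤ y := mem_PS_one_le hα py
  have h3 : 1 ≤ z := mem_PS_one_le hα pz
  have h4 : z ≤ M := hcon _ ⟨px, py, pz, hsum⟩
  simp only [Set.mem_Icc, Prod.le_def] at *
  omega

lemma wit_aux {α : ℝ} (hα : 0 ≤ α) {x y : ℤ} (hxy : x ≤ y) {na nb : ℕ}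
    (h1 : 1 ≤ na) (h2 : 1 ≤ nb) (hx : x = ⌊(na:ℝ)^α⌋) (hy : y = ⌊(nb:ℝ)^α⌋) :
    ∃ a b : ℕ, 1 ≤ a ∧ a ≤ b ∧ x = ⌊(a:ℝ)^α⌋ ∧ y = ⌊(b:ℝ)^α⌋ := by
  rcases le_or_gt na nb with h | h
  · exact ⟨na, nb, h1, h, hx, hy⟩
  · refine ⟨nb, nb, h2, le_refl _, ?_, hy⟩
    have hba : (nb:ℝ)^α ≤ (na:ℝ)^α :=
      Real.rpow_le_rpow (by positivity) (by exact_mod_cast h.le) hα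
    have : y ≤ x := by rw [hx, hy]; exact Int.floor_le_floor hba
    have hxyeq : x = y := le_antisymm hxy this
    rw [hxyeq, hy]

lemma core {k : ℕ} (hk : 1 ≤ k) {α : ℝ} (hα : α ∈ Set.Icc (3+1/(k:ℝ)) (k:ℝ))
    (hinf : (SolSet α).Infinite) (N : ℕ) : ∃ b, N ≤ b ∧ α ∈ Fb k b := by
  have hk1 : (1:ℝ) ≤ k := by exact_mod_cast hk
  have hkpos : (0:ℝ) < 1/(k:ℝ) := one_div_pos.mpr (by linarith)
  have hα3 : 3 < α := by have := hα.1; linarith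
  have hα0 : (0:ℝ) ≤ α := by linarith
  obtain ⟨⟨x, y, z⟩, ⟨px, py, pz, hsum⟩, hz⟩ :=
    exists_big_sol hα0 hinf (2*((N:ℤ)+1)^k)
  simp only at px py pz hsum hz
  -- order x ≤ y (wlog)
  obtain ⟨x, y, hxy, px, py, hsum⟩ :
      ∃ x' y' : ℤ, x' ≤ y' ∧ x' ∈ PS α ∧ y' ∈ PS α ∧ x' + y' = z := by
    rcases le_total x y with h | h
    · exact ⟨x, y, h, px, py, hsum⟩
    · exact ⟨y, x, h, py, px, by linarith⟩
  obtain ⟨na, hna, hxa⟩ := px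
  obtain ⟨nb, hnb, hyb⟩ := py
  obtain ⟨c, hc1, hzc⟩ := pz
  obtain ⟨a, b, ha1, hab, hxa', hyb'⟩ := wit_aux hα0 hxy hna hnb hxa hyb
  have hb1 : 1 ≤ b := le_trans ha1 hab
  -- real bounds
  have ha1' : (1:ℝ) ≤ (a:ℝ) := by exact_mod_cast ha1
  have hb1' : (1:ℝ) ≤ (b:ℝ) := by exact_mod_cast hb1
  have hc1' : (1:ℝ) ≤ (c:ℝ) := by exact_mod_cast hc1
  set A := (a:ℝ)^α with hA
  set B := (b:ℝ)^α with hB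
  set C := (c:ℝ)^α with hC
  have hA1 : (1:ℝ) ≤ A := Real.one_le_rpow ha1' hα0
  have hB1 : (1:ℝ) ≤ B := Real.one_le_rpow hb1' hα0
  have hxA : (x:ℝ) ≤ A ∧ A < (x:ℝ) + 1 := by
    constructor
    · rw [hxa']; exact Int.floor_le _
    · rw [hxa']; exact Int.lt_floor_add_one _
  have hyB : (y:ℝ) ≤ B ∧ B < (y:ℝ) + 1 := by
    constructor
    · rw [hyb']; exact Int.floor_le _
    · rw [hyb']; exact Int.lt_floor_add_one _
  have hzC : (z:ℝ) ≤ C ∧ C < (z:ℝ) + 1 := by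
    constructor
    · rw [hzc]; exact Int.floor_le _
    · rw [hzc]; exact Int.lt_floor_add_one _
  have hzxy : (z:ℝ) = (x:ℝ) + (y:ℝ) := by exact_mod_cast hsum.symm
  have hgub : C - A - B < 2 := by linarith [hzC.2, hxA.1, hyB.1]
  have hglb : -2 < C - A - B := by linarith [hzC.1, hxA.2, hyB.2]
  have hx1 : (1:ℤ) ≤ x := by
    rw [hxa']
    exact_mod_cast Int.le_floor.mpr (by exact_mod_cast hA1)
  have hy1 : (1:ℤ) ≤ y := by
    rw [hyb']
    exact_mod_cast Int.le_floor.mpr (by exact_mod_cast hB1)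
  have h2α : (2:ℝ) ≤ (2:ℝ)^α := by
    calc (2:ℝ) = (2:ℝ)^(1:ℝ) := (Real.rpow_one 2).symm
      _ ≤ (2:ℝ)^α := Real.rpow_le_rpow_of_exponent_le (by norm_num) (by linarith)
  have h8α : (8:ℝ) ≤ (2:ℝ)^α := by
    calc (8:ℝ) = (2:ℝ)^((3:ℕ):ℝ) := by
          rw [Real.rpow_natCast]; norm_num
      _ ≤ (2:ℝ)^α := Real.rpow_le_rpow_of_exponent_le (by norm_num) (by push_cast; linarith)
  -- b < c
  have hbc : b < c := by
    by_contra hcon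
    push_neg at hcon
    have hCB : C ≤ B :=
      Real.rpow_le_rpow (by positivity) (by exact_mod_cast hcon) hα0
    have hA2 : A < 2 := by linarith
    have ha1eq : a = 1 := by
      by_contra hne
      have : 2 ≤ a := by omega
      have : (2:ℝ) ≤ (a:ℝ) := by exact_mod_cast this
      have : (2:ℝ)^α ≤ A := Real.rpow_le_rpow (by norm_num) this hα0
      linarith
    have hAeq : A = 1 := by
      have h' : (a:ℝ) = 1 := by exact_mod_cast ha1eq
      rw [hA, h', Real.one_rpow]
    have hxeq : x = 1 := by
      rw [hxa', hAeq]
      exact Int.floor_one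
    have hzy : z ≤ y := by
      rw [hzc, hyb']
      exact Int.floor_le_floor hCB
    omega
  -- c ≤ 2b
  have hc2 : c ≤ 2*b := by
    by_contra hcon
    push_neg at hcon
    have h1 : (2*(b:ℝ)) ≤ (c:ℝ) := by
      have : (2*b:ℕ) ≤ c := by omega
      exact_mod_cast this
    have h2 : (2*(b:ℝ))^α ≤ C := Real.rpow_le_rpow (by positivity) h1 hα0
    have h3 : (2*(b:ℝ))^α = (2:ℝ)^α * B := Real.mul_rpow (by norm_num) (by positivity)
    have h4 : 8 * B ≤ C := by
      have : (8:ℝ) * B ≤ (2:ℝ)^α * B := mul_le_mul_of_nonneg_right h8α (by linarith)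
      linarith
    have hAB : A ≤ B := Real.rpow_le_rpow (by positivity) (by exact_mod_cast hab) hα0
    linarith
  -- N ≤ b
  have hNb : N ≤ b := by
    by_contra hcon
    push_neg at hcon
    have hbN : (b:ℝ) ≤ (N:ℝ) + 1 := by
      have : b ≤ N + 1 := by omega
      exact_mod_cast this
    have h1 : B ≤ ((N:ℝ)+1)^α := Real.rpow_le_rpow (by positivity) hbN hα0
    have hN1 : (1:ℝ) ≤ (N:ℝ)+1 := by
      have : (0:ℝ) ≤ N := Nat.cast_nonneg N
      linarith
    have h2 : ((N:ℝ)+1)^α ≤ ((N:ℝ)+1)^((k:ℕ):ℝ) :=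
      Real.rpow_le_rpow_of_exponent_le hN1 (by push_cast; exact hα.2)
    have h3 : ((N:ℝ)+1)^((k:ℕ):ℝ) = ((N:ℝ)+1)^(k:ℕ) := Real.rpow_natCast _ k
    have hzB : (z:ℝ) ≤ 2*B := by
      have : (y:ℝ) ≤ B := hyB.1
      have hxy' : (x:ℝ) ≤ (y:ℝ) := by exact_mod_cast hxy
      linarith
    have hMz : (2*((N:ℝ)+1)^(k:ℕ)) < (z:ℝ) := by exact_mod_cast hz
    linarith
  refine ⟨b, hNb, ?_⟩
  simp only [Fb, Set.mem_iUnion]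
  refine ⟨a, ?_, c, ?_, hα, ?_⟩
  · rw [Finset.mem_Icc]; exact ⟨ha1, hab⟩
  · rw [Finset.mem_Ioc]; exact ⟨hbc, hc2⟩
  · have : Gf a b c α = C - A - B := rfl
    rw [this, abs_le]
    exact ⟨hglb.le, hgub.le⟩

lemma perk (k : ℕ) : volume {α ∈ Set.Icc (3+1/(k:ℝ)) (k:ℝ) | (SolSet α).Infinite} = 0 := by
  rcases Nat.eq_zero_or_pos k with rfl | hk
  · have : {α ∈ Set.Icc (3+1/((0:ℕ):ℝ)) ((0:ℕ):ℝ) | (SolSet α).Infinite} = ∅ := by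
      ext α
      simp only [Set.mem_setOf_eq, Set.mem_Icc, Set.mem_empty_iff_false, iff_false]
      rintro ⟨⟨h1, h2⟩, -⟩
      norm_num at h1 h2
      linarith
    rw [this]
    simp
  refine measure_mono_null ?_ (measure_limsup_atTop_eq_zero (tsum_Fb_ne_top k hk))
  rintro α ⟨hα, hinf⟩
  rw [mem_limsup_iff_frequently_mem, Filter.frequently_atTop]
  intro N
  obtain ⟨b, hb, hmem⟩ := core hk hα hinf N
  exact ⟨b, hb, hmem⟩

/-- For almost every `α > 3`, the equation `x + y = z` has at most finitely many
solutions `(x, y, z) ∈ PS(α)³`. -/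
theorem statement0 :
    volume {α : ℝ | 3 < α ∧
      {T : ℤ × ℤ × ℤ | T.1 ∈ PS α ∧ T.2.1 ∈ PS α ∧ T.2.2 ∈ PS α ∧
        T.1 + T.2.1 = T.2.2}.Infinite} = 0 := by
  have hsub : {α : ℝ | 3 < α ∧ (SolSet α).Infinite}
      ⊆ ⋃ k : ℕ, {α ∈ Set.Icc (3+1/(k:ℝ)) (k:ℝ) | (SolSet α).Infinite} := by
    rintro α ⟨h3, hinf⟩
    obtain ⟨n, hn⟩ := exists_nat_one_div_lt (by linarith : (0:ℝ) < α - 3)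
    obtain ⟨m, hm⟩ := exists_nat_ge α
    set K := max (n+1) m with hK
    have h1 : (n:ℝ)+1 ≤ K := by exact_mod_cast le_max_left (n+1) m
    have h2 : (m:ℝ) ≤ K := by exact_mod_cast le_max_right (n+1) m
    have hKpos : (0:ℝ) < K := by linarith [Nat.cast_nonneg (α := ℝ) n]
    rw [Set.mem_iUnion]
    refine ⟨K, ⟨⟨?_, by linarith⟩, hinf⟩⟩
    have : 1/(K:ℝ) ≤ 1/((n:ℝ)+1) := by
      apply one_div_le_one_div_of_le (by linarith) h1
    push_cast at hn ⊢
    linarith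
  exact measure_mono_null hsub (measure_iUnion_null fun k => perk k)
end

section
/- For (Lebesgue) almost every real number α > 10, the set PS(α) contains at most finitely many arithmetic progressions of length 3; that is, the set of pairs (a, d) with d a positive integer such that a, a + d, a + 2d all belong to PS(α) is finite. -/
open MeasureTheory

open Real Filter
open scoped ENNReal

lemma grad_ineq {b : ℝ} (hb : 0 < b) (x y : ℝ) :
    b ^ x * (1 + (y - x) * Real.log b) ≤ b ^ y := by
  have h1 : b ^ y = b ^ x * Real.exp ((y - x) * Real.log b) := by
    rw [Real.rpow_def_of_pos hb, Real.rpow_def_of_pos hb, ← Real.exp_add]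
    ring_nf
  rw [h1]
  have := Real.add_one_le_exp ((y - x) * Real.log b)
  have hx : (0:ℝ) < b ^ x := Real.rpow_pos_of_pos hb x
  nlinarith

lemma gradq_ineq {q : ℝ} (hq : 1 < q) {x z : ℝ} (hxz : x ≤ z) :
    q ^ x * (1 + (z - x) * Real.log q + (z - x) ^ 2 * (Real.log q) ^ 2 / 2) ≤ q ^ z := by
  have hlq : 0 < Real.log q := Real.log_pos hq
  have ht : 0 ≤ (z - x) * Real.log q := mul_nonneg (by linarith) hlq.le
  have h1 : q ^ z = q ^ x * Real.exp ((z - x) * Real.log q) := by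
    rw [Real.rpow_def_of_pos (by linarith), Real.rpow_def_of_pos (by linarith), ← Real.exp_add]
    ring_nf
  rw [h1]
  have h2 := Real.quadratic_le_exp_of_nonneg ht
  have hx : (0:ℝ) < q ^ x := Real.rpow_pos_of_pos (by linarith) x
  nlinarith [sq_nonneg ((z-x) * Real.log q)]

/-- lower gradient bound (any direction) for h(α) = p^α + q^α - 2 -/
lemma ineqB {p q : ℝ} (hp : 0 < p) (hq : 1 < q) (x z : ℝ) :
    (p ^ z + q ^ z - 2) + (p ^ z * Real.log p + q ^ z * Real.log q) * (x - z)
      ≤ p ^ x + q ^ x - 2 := by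
  have h1 := grad_ineq hp z x
  have h2 := grad_ineq (show (0:ℝ) < q by linarith) z x
  nlinarith

/-- strong convexity going right, base point x ≥ 0 -/
lemma ineqA {p q : ℝ} (hp : 0 < p) (hq : 1 < q) {x z : ℝ} (hx : 0 ≤ x) (hxz : x ≤ z) :
    (p ^ x + q ^ x - 2) + (p ^ x * Real.log p + q ^ x * Real.log q) * (z - x)
      + (Real.log q) ^ 2 / 2 * (z - x) ^ 2 ≤ p ^ z + q ^ z - 2 := by
  have h1 := grad_ineq hp x z
  have h2 := gradq_ineq hq hxz
  have h3 : (1:ℝ) ≤ q ^ x := Real.one_le_rpow hq.le hx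
  have h4 : (0:ℝ) ≤ (z - x) ^ 2 * (Real.log q) ^ 2 / 2 := by positivity
  nlinarith



set_option maxHeartbeats 1000000 in
lemma claim_one {p q ε L : ℝ} (hp : 0 < p) (hq : 1 < q)
    (hLsq : (Real.log q) ^ 2 * L ^ 2 = ε) (hL0 : 0 ≤ L)
    {x z : ℝ} (hx10 : 10 < x) (hxz : x ≤ z)
    (hxε : |p ^ x + q ^ x - 2| < ε) (hzε : |p ^ z + q ^ z - 2| < ε)
    (hDx : 0 ≤ p ^ x * Real.log p + q ^ x * Real.log q) : z - x ≤ 2 * L := by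
  have hlq : 0 < Real.log q := Real.log_pos hq
  have hm0 : 0 < (Real.log q) ^ 2 := by positivity
  have hA := ineqA hp hq (show (0:ℝ) ≤ x by linarith) hxz
  rw [abs_lt] at hxε hzε
  obtain ⟨hxε1, hxε2⟩ := hxε
  obtain ⟨hzε1, hzε2⟩ := hzε
  have key : (Real.log q) ^ 2 / 2 * (z - x) ^ 2 ≤ 2 * ε := by
    nlinarith [mul_nonneg hDx (sub_nonneg.mpr hxz)]
  have h2 : (Real.log q) ^ 2 * (z - x) ^ 2 ≤ (Real.log q) ^ 2 * (2 * L) ^ 2 := by nlinarith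
  have h2' : (z - x) ^ 2 ≤ (2 * L) ^ 2 := le_of_mul_le_mul_left h2 hm0
  nlinarith [sub_nonneg.mpr hxz, hL0, h2']

set_option maxHeartbeats 1000000 in
lemma claim_two {p q ε L : ℝ} (hp : 0 < p) (hq : 1 < q)
    (hLsq : (Real.log q) ^ 2 * L ^ 2 = ε) (hL0 : 0 ≤ L)
    {x z' : ℝ} (hx10 : 10 < x) (hxz : x ≤ z')
    (hxε : |p ^ x + q ^ x - 2| < ε) (hzε : |p ^ z' + q ^ z' - 2| < ε)
    (hDz : p ^ z' * Real.log p + q ^ z' * Real.log q < 0) : z' - x ≤ 4 * L := by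
  have hlq : 0 < Real.log q := Real.log_pos hq
  have hm0 : 0 < (Real.log q) ^ 2 := by positivity
  rw [abs_lt] at hxε hzε
  obtain ⟨hxε1, hxε2⟩ := hxε
  obtain ⟨hzε1, hzε2⟩ := hzε
  have hB1 := ineqB hp hq ((x + z') / 2) z'
  have hA := ineqA hp hq (show (0:ℝ) ≤ (x + z') / 2 by linarith)
      (show (x + z') / 2 ≤ z' by linarith)
  have hB2 := ineqB hp hq x ((x + z') / 2)
  set w : ℝ := p ^ ((x + z') / 2) + q ^ ((x + z') / 2) - 2 with hw
  set Dz : ℝ := p ^ ((x + z') / 2) * Real.log p + q ^ ((x + z') / 2) * Real.log q with hDzd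
  set t : ℝ := z' - (x + z') / 2 with htd
  have ht0 : 0 ≤ t := by rw [htd]; linarith
  have hxt : x - (x + z') / 2 = -t := by rw [htd]; ring
  have hzx : z' - x = 2 * t := by rw [htd]; ring
  have hzt : (x + z') / 2 - z' = -t := by rw [htd]; ring
  rw [hxt] at hB2
  rw [hzt] at hB1
  clear_value w Dz t
  clear hw hDzd htd hxt hzt
  -- h((x+z')/2) > -ε
  have hDz'0 : 0 ≤ (-(p ^ z' * Real.log p + q ^ z' * Real.log q)) * t :=
    mul_nonneg (neg_nonneg.mpr hDz.le) ht0
  have hhz : -ε < w := by nlinarith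
  have key : (Real.log q) ^ 2 / 2 * t ^ 2 ≤ 2 * ε := by
    have h5 : Dz * t ≤ (p ^ z' * Real.log p + q ^ z' * Real.log q) * t
        - (Real.log q) ^ 2 / 2 * t ^ 2 := by nlinarith
    have h6 : (Real.log q) ^ 2 / 2 * t ^ 2 ≤ -(Dz * t) := by nlinarith
    nlinarith
  have h2 : (Real.log q) ^ 2 * t ^ 2 ≤ (Real.log q) ^ 2 * (2 * L) ^ 2 := by nlinarith
  have h2' : t ^ 2 ≤ (2 * L) ^ 2 := le_of_mul_le_mul_left h2 hm0
  have h3 : t ≤ 2 * L := by nlinarith [ht0, hL0, h2']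
  linarith

/-- Measure bound for the near-vanishing set of p^α + q^α - 2 on (10,∞). -/
lemma vol_S_le {p q ε : ℝ} (hp : 0 < p) (hq : 1 < q) (hε : 0 < ε) :
    volume {α : ℝ | 10 < α ∧ |p ^ α + q ^ α - 2| < ε}
      ≤ ENNReal.ofReal (12 * Real.sqrt ε / Real.log q) := by
  classical
  have hlq : 0 < Real.log q := Real.log_pos hq
  set L : ℝ := Real.sqrt ε / Real.log q with hL
  have hL0 : 0 ≤ L := by positivity
  have hLsq : (Real.log q) ^ 2 * L ^ 2 = ε := by
    rw [hL, div_pow, Real.sq_sqrt hε.le]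
    field_simp
  set S : Set ℝ := {α : ℝ | 10 < α ∧ |p ^ α + q ^ α - 2| < ε} with hS
  set Sp : Set ℝ := {α ∈ S | 0 ≤ p ^ α * Real.log p + q ^ α * Real.log q} with hSp
  set Sm : Set ℝ := {α ∈ S | p ^ α * Real.log p + q ^ α * Real.log q < 0} with hSm
  have hsplit : S ⊆ Sp ∪ Sm := by
    intro α hα
    by_cases hd : 0 ≤ p ^ α * Real.log p + q ^ α * Real.log q
    · exact Or.inl ⟨hα, hd⟩
    · exact Or.inr ⟨hα, lt_of_not_ge hd⟩
  have hp_bound : volume Sp ≤ ENNReal.ofReal (4 * L) := by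
    rcases Set.eq_empty_or_nonempty Sp with he | ⟨a, ha⟩
    · rw [he]; simp
    · have hsub : Sp ⊆ Set.Icc (a - 2 * L) (a + 2 * L) := by
        intro z hz
        rcases le_total a z with hle | hle
        · have := claim_one hp hq hLsq hL0 ha.1.1 hle ha.1.2 hz.1.2 ha.2
          constructor <;> linarith
        · have := claim_one hp hq hLsq hL0 hz.1.1 hle hz.1.2 ha.1.2 hz.2
          constructor <;> linarith
      calc volume Sp ≤ volume (Set.Icc (a - 2 * L) (a + 2 * L)) := measure_mono hsub
        _ = ENNReal.ofReal (4 * L) := by rw [Real.volume_Icc]; ring_nf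
  have hm_bound : volume Sm ≤ ENNReal.ofReal (8 * L) := by
    rcases Set.eq_empty_or_nonempty Sm with he | ⟨a, ha⟩
    · rw [he]; simp
    · have hsub : Sm ⊆ Set.Icc (a - 4 * L) (a + 4 * L) := by
        intro z hz
        rcases le_total a z with hle | hle
        · have := claim_two hp hq hLsq hL0 ha.1.1 hle ha.1.2 hz.1.2 hz.2
          constructor <;> linarith
        · have := claim_two hp hq hLsq hL0 hz.1.1 hle hz.1.2 ha.1.2 ha.2
          constructor <;> linarith
      calc volume Sm ≤ volume (Set.Icc (a - 4 * L) (a + 4 * L)) := measure_mono hsub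
        _ = ENNReal.ofReal (8 * L) := by rw [Real.volume_Icc]; ring_nf
  calc volume S ≤ volume (Sp ∪ Sm) := measure_mono hsplit
    _ ≤ volume Sp + volume Sm := measure_union_le _ _
    _ ≤ ENNReal.ofReal (4 * L) + ENNReal.ofReal (8 * L) := add_le_add hp_bound hm_bound
    _ = ENNReal.ofReal (12 * Real.sqrt ε / Real.log q) := by
        rw [← ENNReal.ofReal_add (by positivity) (by positivity)]
        congr 1
        rw [hL]
        ring
/-- The exceptional set for a triple `(n1, n2, n3)`. -/
def Eset (n1 n2 n3 : ℕ) : Set ℝ :=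
  {α : ℝ | 10 < α ∧ 1 ≤ n1 ∧ n1 < n2 ∧ n2 < n3 ∧ n3 < 2 * n2 ∧
    |(n1 : ℝ) ^ α + (n3 : ℝ) ^ α - 2 * (n2 : ℝ) ^ α| < 2}

set_option maxHeartbeats 1000000 in
lemma vol_Eset (n1 n2 n3 : ℕ) :
    volume (Eset n1 n2 n3) ≤ ENNReal.ofReal (48 / (n2 : ℝ) ^ 4) := by
  by_cases hc : 1 ≤ n1 ∧ n1 < n2 ∧ n2 < n3 ∧ n3 < 2 * n2
  swap
  · have he : Eset n1 n2 n3 = ∅ := by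
      ext α
      simp only [Eset, Set.mem_setOf_eq, Set.mem_empty_iff_false, iff_false, not_and]
      intro _ h1 h2 h3 h4
      exact absurd ⟨h1, h2, h3, h4⟩ hc
    rw [he]
    simp
  obtain ⟨h1, h12, h23, h32⟩ := hc
  -- real casts
  have hn2 : 2 ≤ n2 := by omega
  have hn1R : (1 : ℝ) ≤ (n1 : ℝ) := by exact_mod_cast h1
  have hn2R : (2 : ℝ) ≤ (n2 : ℝ) := by exact_mod_cast hn2
  have hn2R0 : (0 : ℝ) < (n2 : ℝ) := by linarith
  have hn3R : (n2 : ℝ) < (n3 : ℝ) := by exact_mod_cast h23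
  set p : ℝ := (n1 : ℝ) / (n2 : ℝ) with hpd
  set q : ℝ := (n3 : ℝ) / (n2 : ℝ) with hqd
  set ε : ℝ := 2 / (n2 : ℝ) ^ 10 with hεd
  have hp : 0 < p := by rw [hpd]; positivity
  have hq : 1 < q := by rw [hqd]; rw [lt_div_iff₀ hn2R0]; linarith
  have hε : 0 < ε := by rw [hεd]; positivity
  have hsub : Eset n1 n2 n3 ⊆ {α : ℝ | 10 < α ∧ |p ^ α + q ^ α - 2| < ε} := by
    intro α hα
    obtain ⟨hα10, -, -, -, -, habs⟩ := hα
    refine ⟨hα10, ?_⟩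
    have hpow : (0 : ℝ) < (n2 : ℝ) ^ α := Real.rpow_pos_of_pos hn2R0 α
    have hid : p ^ α + q ^ α - 2
        = ((n1 : ℝ) ^ α + (n3 : ℝ) ^ α - 2 * (n2 : ℝ) ^ α) / (n2 : ℝ) ^ α := by
      rw [hpd, hqd, Real.div_rpow (by positivity) hn2R0.le,
        Real.div_rpow (by positivity) hn2R0.le]
      field_simp
    rw [hid, abs_div, abs_of_pos hpow]
    calc |(n1 : ℝ) ^ α + (n3 : ℝ) ^ α - 2 * (n2 : ℝ) ^ α| / (n2 : ℝ) ^ α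
        < 2 / (n2 : ℝ) ^ α := div_lt_div_of_pos_right habs hpow
      _ ≤ ε := by
          rw [hεd]
          apply div_le_div_of_nonneg_left (by norm_num) (by positivity)
          calc ((n2 : ℝ)) ^ (10 : ℕ) = (n2 : ℝ) ^ ((10 : ℕ) : ℝ) := (Real.rpow_natCast _ _).symm
            _ ≤ (n2 : ℝ) ^ α := by
                apply Real.rpow_le_rpow_of_exponent_le (by linarith)
                push_cast
                linarith
  refine le_trans (measure_mono hsub) (le_trans (vol_S_le hp hq hε) ?_)
  apply ENNReal.ofReal_le_ofReal
  -- numeric estimate : 12 √ε / log q ≤ 48 / n2^4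
  have hlq : 0 < Real.log q := Real.log_pos hq
  have hqpos : 0 < q := by linarith
  have hlog : 1 / (2 * (n2 : ℝ)) ≤ Real.log q := by
    have h0 := Real.one_sub_inv_le_log_of_pos hqpos
    have hn3pos : (0 : ℝ) < (n3 : ℝ) := by linarith
    have hinv : q⁻¹ = (n2 : ℝ) / (n3 : ℝ) := by
      rw [hqd]; rw [inv_div]
    rw [hinv] at h0
    have h32R : (n3 : ℝ) ≤ 2 * (n2 : ℝ) := by
      have : (n3 : ℝ) < 2 * (n2 : ℝ) := by exact_mod_cast h32
      linarith
    have h1n3 : (1 : ℝ) ≤ (n3 : ℝ) - (n2 : ℝ) := by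
      have : n2 + 1 ≤ n3 := h23
      have := (Nat.cast_le (α := ℝ)).mpr this
      push_cast at this
      linarith
    have : 1 / (2 * (n2 : ℝ)) ≤ 1 - (n2 : ℝ) / (n3 : ℝ) := by
      rw [div_le_iff₀ (by positivity)]
      have hd : (1 - (n2 : ℝ) / (n3 : ℝ)) = ((n3 : ℝ) - (n2 : ℝ)) / (n3 : ℝ) := by
        field_simp
      rw [hd, div_mul_eq_mul_div, le_div_iff₀ hn3pos]
      nlinarith
    linarith
  have hs : Real.sqrt ε ≤ 2 / (n2 : ℝ) ^ 5 := by
    have he1 : ε ≤ (2 / (n2 : ℝ) ^ 5) ^ 2 := by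
      rw [hεd, div_pow]
      rw [div_le_div_iff₀ (by positivity) (by positivity)]
      ring_nf
      nlinarith [pow_pos hn2R0 10]
    calc Real.sqrt ε ≤ Real.sqrt ((2 / (n2 : ℝ) ^ 5) ^ 2) := Real.sqrt_le_sqrt he1
      _ = 2 / (n2 : ℝ) ^ 5 := Real.sqrt_sq (by positivity)
  rw [div_le_iff₀ hlq]
  have e1 : 48 / (n2 : ℝ) ^ 4 * (1 / (2 * (n2 : ℝ))) = 24 / (n2 : ℝ) ^ 5 := by
    field_simp
    ring
  have e2 : 48 / (n2 : ℝ) ^ 4 * (1 / (2 * (n2 : ℝ))) ≤ 48 / (n2 : ℝ) ^ 4 * Real.log q :=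
    mul_le_mul_of_nonneg_left hlog (by positivity)
  have e3 : 12 * Real.sqrt ε ≤ 24 / (n2 : ℝ) ^ 5 := by
    have := mul_le_mul_of_nonneg_left hs (by norm_num : (0:ℝ) ≤ 12)
    calc 12 * Real.sqrt ε ≤ 12 * (2 / (n2 : ℝ) ^ 5) := this
      _ = 24 / (n2 : ℝ) ^ 5 := by ring
  linarith [e1 ▸ e2]
/-- enumeration of triples : `t = (n2, n1, n3)` -/
def tripleEquiv : ℕ ≃ ℕ × ℕ × ℕ :=
  Nat.pairEquiv.symm.trans ((Equiv.refl ℕ).prodCongr Nat.pairEquiv.symm)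

def sSeq : ℕ → Set ℝ := fun k =>
  Eset (tripleEquiv k).2.1 (tripleEquiv k).1 (tripleEquiv k).2.2

lemma tsum_sSeq_ne_top : (∑' k, volume (sSeq k)) ≠ ⊤ := by
  classical
  have h1 : (∑' k, volume (sSeq k))
      = ∑' t : ℕ × ℕ × ℕ, volume (Eset t.2.1 t.1 t.2.2) :=
    tripleEquiv.tsum_eq (fun t : ℕ × ℕ × ℕ => volume (Eset t.2.1 t.1 t.2.2))
  rw [h1]
  -- termwise bound
  set g : ℕ × ℕ × ℕ → ℝ≥0∞ := fun t =>
    if t.2.1 < t.1 ∧ t.2.2 < 2 * t.1 then ENNReal.ofReal (48 / (t.1 : ℝ) ^ 4) else 0 with hg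
  have hbound : ∀ t : ℕ × ℕ × ℕ, volume (Eset t.2.1 t.1 t.2.2) ≤ g t := by
    rintro ⟨n2, n1, n3⟩
    by_cases hc : n1 < n2 ∧ n3 < 2 * n2
    · simp only [hg, if_pos hc]
      exact vol_Eset n1 n2 n3
    · have he : Eset n1 n2 n3 = ∅ := by
        ext α
        simp only [Eset, Set.mem_setOf_eq, Set.mem_empty_iff_false, iff_false, not_and]
        intro _ _ h2 _ h4
        exact absurd ⟨h2, h4⟩ hc
      simp only [hg, if_neg hc, he, measure_empty, le_refl]
  refine ne_top_of_le_ne_top ?_ (ENNReal.tsum_le_tsum hbound)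
  -- compute the sum of g
  rw [ENNReal.tsum_prod']
  have hinner : ∀ n2 : ℕ, (∑' u : ℕ × ℕ, g (n2, u))
      ≤ ((n2 : ℝ≥0∞) * ((2 * n2 : ℕ) * ENNReal.ofReal (48 / (n2 : ℝ) ^ 4))) := by
    intro n2
    rw [ENNReal.tsum_prod']
    set c : ℝ≥0∞ := ENNReal.ofReal (48 / (n2 : ℝ) ^ 4) with hc
    have hn3sum : ∀ n1 : ℕ, (∑' n3 : ℕ, g (n2, n1, n3))
        ≤ if n1 < n2 then ((2 * n2 : ℕ) : ℝ≥0∞) * c else 0 := by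
      intro n1
      by_cases h12 : n1 < n2
      · rw [if_pos h12]
        have heq : (∑' n3 : ℕ, g (n2, n1, n3))
            = ∑ n3 ∈ Finset.range (2 * n2), g (n2, n1, n3) := by
          apply tsum_eq_sum
          intro b hb
          simp only [Finset.mem_range, not_lt] at hb
          simp only [hg]
          rw [if_neg (by omega)]
        rw [heq]
        calc ∑ n3 ∈ Finset.range (2 * n2), g (n2, n1, n3)
            ≤ (Finset.range (2 * n2)).card • c := by
              apply Finset.sum_le_card_nsmul
              intro x _
              simp only [hg]
              split
              · exact le_rfl
              · exact zero_le
          _ = ((2 * n2 : ℕ) : ℝ≥0∞) * c := by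
              rw [Finset.card_range, nsmul_eq_mul]
      · have hz : ∀ n3 : ℕ, g (n2, n1, n3) = 0 := by
          intro n3
          simp only [hg]
          rw [if_neg (by omega)]
        rw [if_neg h12]
        simp [hz]
    calc (∑' n1 : ℕ, ∑' n3 : ℕ, g (n2, n1, n3))
        ≤ ∑' n1 : ℕ, (if n1 < n2 then ((2 * n2 : ℕ) : ℝ≥0∞) * c else 0) :=
          ENNReal.tsum_le_tsum hn3sum
      _ = ∑ n1 ∈ Finset.range n2, (if n1 < n2 then ((2 * n2 : ℕ) : ℝ≥0∞) * c else 0) := by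
          apply tsum_eq_sum
          intro b hb
          simp only [Finset.mem_range, not_lt] at hb
          rw [if_neg (by omega)]
      _ ≤ (Finset.range n2).card • (((2 * n2 : ℕ) : ℝ≥0∞) * c) := by
          apply Finset.sum_le_card_nsmul
          intro x _
          split
          · exact le_rfl
          · exact zero_le
      _ = (n2 : ℝ≥0∞) * (((2 * n2 : ℕ) : ℝ≥0∞) * c) := by
          rw [Finset.card_range, nsmul_eq_mul]
  refine ne_top_of_le_ne_top ?_ (ENNReal.tsum_le_tsum hinner)
  -- the majorant is ofReal (96 / n2^2)
  have hmaj : ∀ n2 : ℕ, ((n2 : ℝ≥0∞) * ((2 * n2 : ℕ) * ENNReal.ofReal (48 / (n2 : ℝ) ^ 4)))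
      = ENNReal.ofReal (96 / (n2 : ℝ) ^ 2) := by
    intro n2
    rcases Nat.eq_zero_or_pos n2 with h0 | h0
    · subst h0; simp
    · have hn2R : (0 : ℝ) < (n2 : ℝ) := by exact_mod_cast h0
      rw [← ENNReal.ofReal_natCast n2, ← ENNReal.ofReal_natCast (2 * n2),
        ← ENNReal.ofReal_mul (by positivity), ← ENNReal.ofReal_mul (by positivity)]
      congr 1
      push_cast
      field_simp
      ring
  calc (∑' n2 : ℕ, ((n2 : ℝ≥0∞) * ((2 * n2 : ℕ) * ENNReal.ofReal (48 / (n2 : ℝ) ^ 4))))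
      = ∑' n2 : ℕ, ENNReal.ofReal (96 / (n2 : ℝ) ^ 2) := by
        exact tsum_congr hmaj
    _ = ENNReal.ofReal (∑' n2 : ℕ, 96 / (n2 : ℝ) ^ 2) := by
        rw [← ENNReal.ofReal_tsum_of_nonneg]
        · intro n; positivity
        · have hs : Summable (fun n : ℕ => 1 / (n : ℝ) ^ 2) :=
            summable_one_div_nat_pow.mpr (by norm_num)
          have := hs.mul_left 96
          refine this.congr ?_
          intro n
          ring
    _ ≠ ⊤ := ENNReal.ofReal_ne_top
set_option maxHeartbeats 1000000 in
lemma mem_Eset_of_AP {α : ℝ} (hα : 10 < α) {a d : ℤ} (hd : 0 < d)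
    {n1 n2 n3 : ℕ} (h1 : 1 ≤ n1) (e1 : a = ⌊(n1 : ℝ) ^ α⌋)
    (h2 : 1 ≤ n2) (e2 : a + d = ⌊(n2 : ℝ) ^ α⌋)
    (h3 : 1 ≤ n3) (e3 : a + 2 * d = ⌊(n3 : ℝ) ^ α⌋) :
    α ∈ Eset n1 n2 n3 := by
  have hα0 : (0 : ℝ) ≤ α := by linarith
  have hα1 : (1 : ℝ) ≤ α := by linarith
  -- strict monotonicity detection
  have mono : ∀ m n : ℕ, ⌊(m : ℝ) ^ α⌋ < ⌊(n : ℝ) ^ α⌋ → m < n := by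
    intro m n h
    by_contra hle
    push_neg at hle
    have : (n : ℝ) ≤ (m : ℝ) := by exact_mod_cast hle
    have : (n : ℝ) ^ α ≤ (m : ℝ) ^ α := Real.rpow_le_rpow (by positivity) this hα0
    exact absurd (Int.floor_mono this) (not_le.mpr h)
  have h12 : n1 < n2 := by
    apply mono; rw [← e1, ← e2]; omega
  have h23 : n2 < n3 := by
    apply mono; rw [← e2, ← e3]; omega
  -- floor bounds
  have fl1a : ((a : ℝ)) ≤ (n1 : ℝ) ^ α := by
    have := Int.floor_le ((n1 : ℝ) ^ α); rw [← e1] at this; exact_mod_cast this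
  have fl1b : (n1 : ℝ) ^ α < (a : ℝ) + 1 := by
    have := Int.lt_floor_add_one ((n1 : ℝ) ^ α); rw [← e1] at this; exact_mod_cast this
  have fl2a : ((a : ℝ) + (d : ℝ)) ≤ (n2 : ℝ) ^ α := by
    have := Int.floor_le ((n2 : ℝ) ^ α); rw [← e2] at this; push_cast at this; linarith
  have fl2b : (n2 : ℝ) ^ α < (a : ℝ) + (d : ℝ) + 1 := by
    have := Int.lt_floor_add_one ((n2 : ℝ) ^ α); rw [← e2] at this; push_cast at this; linarith
  have fl3a : ((a : ℝ) + 2 * (d : ℝ)) ≤ (n3 : ℝ) ^ α := by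
    have := Int.floor_le ((n3 : ℝ) ^ α); rw [← e3] at this; push_cast at this; linarith
  have fl3b : (n3 : ℝ) ^ α < (a : ℝ) + 2 * (d : ℝ) + 1 := by
    have := Int.lt_floor_add_one ((n3 : ℝ) ^ α); rw [← e3] at this; push_cast at this; linarith
  -- a ≥ 1
  have ha1 : (1 : ℝ) ≤ (a : ℝ) := by
    have hx : (1 : ℝ) ≤ (n1 : ℝ) ^ α :=
      Real.one_le_rpow (by exact_mod_cast h1) hα0
    have : (1 : ℤ) ≤ a := by
      rw [e1]; exact Int.le_floor.mpr (by exact_mod_cast hx)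
    exact_mod_cast this
  have hdR : (1 : ℝ) ≤ (d : ℝ) := by exact_mod_cast hd
  -- n3 < 2 * n2
  have hreal : (n3 : ℝ) ^ α < 2 * (n2 : ℝ) ^ α := by linarith
  have h32 : n3 < 2 * n2 := by
    by_contra hle
    push_neg at hle
    have hc : ((2 * n2 : ℕ) : ℝ) ≤ (n3 : ℝ) := by exact_mod_cast hle
    have hc2 : ((2 * n2 : ℕ) : ℝ) ^ α ≤ (n3 : ℝ) ^ α :=
      Real.rpow_le_rpow (by positivity) hc hα0
    have hsplit : ((2 * n2 : ℕ) : ℝ) ^ α = (2 : ℝ) ^ α * (n2 : ℝ) ^ α := by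
      push_cast
      exact Real.mul_rpow (by norm_num) (by positivity)
    have h2α : (2 : ℝ) ≤ (2 : ℝ) ^ α := by
      calc (2 : ℝ) = (2 : ℝ) ^ (1 : ℝ) := (Real.rpow_one 2).symm
        _ ≤ (2 : ℝ) ^ α := Real.rpow_le_rpow_of_exponent_le one_le_two hα1
    have hn2pos : (0 : ℝ) < (n2 : ℝ) ^ α := Real.rpow_pos_of_pos (by positivity) α
    nlinarith
  refine ⟨hα, h1, h12, h23, h32, ?_⟩
  rw [abs_lt]
  constructor <;> linarith

/-- For almost every `α > 10`, the set `PS(α)` contains at most finitely many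
arithmetic progressions of length 3: the set of pairs `(a, d)` with `d > 0` such
that `a, a + d, a + 2d ∈ PS α` is finite. -/
theorem statement1 :
    volume {α : ℝ | 10 < α ∧
      {P : ℤ × ℤ | 0 < P.2 ∧ P.1 ∈ PS α ∧ P.1 + P.2 ∈ PS α ∧
        P.1 + 2 * P.2 ∈ PS α}.Infinite} = 0 := by
  classical
  have h0 : volume {α : ℝ | ∃ᶠ k in Filter.atTop, α ∈ sSeq k} = 0 :=
    measure_setOf_frequently_eq_zero (by simpa using tsum_sSeq_ne_top)
  refine measure_mono_null ?_ h0
  rintro α ⟨hα10, hinf⟩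
  simp only [Set.mem_setOf_eq]
  rw [Nat.frequently_atTop_iff_infinite]
  set T : Set (ℤ × ℤ) := {P : ℤ × ℤ | 0 < P.2 ∧ P.1 ∈ PS α ∧ P.1 + P.2 ∈ PS α ∧
      P.1 + 2 * P.2 ∈ PS α} with hT
  -- the encoding map
  set f : ℤ × ℤ → ℕ := fun P =>
    if h : P ∈ T then
      tripleEquiv.symm (h.2.2.1.choose, h.2.1.choose, h.2.2.2.choose)
    else 0 with hf
  have hmem : ∀ P (h : P ∈ T), α ∈ sSeq (f P) ∧
      P.1 = ⌊(h.2.1.choose : ℝ) ^ α⌋ ∧ P.1 + P.2 = ⌊(h.2.2.1.choose : ℝ) ^ α⌋ := by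
    intro P h
    obtain ⟨hd, hA, hB, hC⟩ := h
    have s1 := hA.choose_spec
    have s2 := hB.choose_spec
    have s3 := hC.choose_spec
    have hE : α ∈ Eset hA.choose hB.choose hC.choose :=
      mem_Eset_of_AP hα10 hd s1.1 s1.2 s2.1 s2.2 s3.1 s3.2
    constructor
    · have : f P = tripleEquiv.symm (hB.choose, hA.choose, hC.choose) := dif_pos ⟨hd, hA, hB, hC⟩
      rw [this]
      simpa only [sSeq, Equiv.apply_symm_apply] using hE
    · exact ⟨s1.2, s2.2⟩
  have hinj : Set.InjOn f T := by
    intro P hP Q hQ hfeq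
    have hP' := hmem P hP
    have hQ' := hmem Q hQ
    rw [hf] at hfeq
    simp only [dif_pos hP, dif_pos hQ] at hfeq
    have := tripleEquiv.symm.injective hfeq
    rw [Prod.mk.injEq, Prod.mk.injEq] at this
    obtain ⟨eq2, eq1, eq3⟩ := this
    have ha : P.1 = Q.1 := by rw [hP'.2.1, hQ'.2.1, eq1]
    have hd : P.2 = Q.2 := by
      have := hP'.2.2
      rw [eq2, ← hQ'.2.2, ha] at this
      omega
    exact Prod.ext ha hd
  have himg : (f '' T).Infinite := hinf.image hinj
  refine himg.mono ?_
  rintro k ⟨P, hP, rfl⟩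
  exact (hmem P hP).1
end

section
/- Let 3 < β < s < t be real numbers. For M > 0, define D(M) = {α ∈ [s, t] : there are infinitely many (p, q, r) ∈ ℕ³ with r ≥ M, 1 ≤ p ≤ r − 1, 1 ≤ q ≤ r − 1, and |(p/r)^α + (q/r)^α − 1| ≤ r^{−β}}. Then there exists M₀ > 1 such that for every M ≥ M₀, the set A(s,t) = {α ∈ [s, t] : there are infinitely many triples (x, y, z) ∈ PS(α)³ with x + y = z} is contained in D(M). -/
open MeasureTheory

/-- Let `3 < β < s < t`. There is `M₀ > 1` such that for every `M ≥ M₀`,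
`A(s,t) ⊆ D(M)`, where `D(M)` consists of those `α ∈ [s,t]` for which there are
infinitely many `(p,q,r) ∈ ℕ³` with `r ≥ M`, `1 ≤ p ≤ r − 1`, `1 ≤ q ≤ r − 1` and
`|(p/r)^α + (q/r)^α − 1| ≤ r^{−β}`. -/
theorem statement7 (β s t : ℝ) (hβ : 3 < β) (hβs : β < s) (hst : s < t) :
    ∃ M₀ : ℝ, 1 < M₀ ∧ ∀ M : ℝ, M₀ ≤ M →
      {α ∈ Set.Icc s t |
        {T : ℤ × ℤ × ℤ | T.1 ∈ PS α ∧ T.2.1 ∈ PS α ∧ T.2.2 ∈ PS α ∧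
          T.1 + T.2.1 = T.2.2}.Infinite} ⊆
      {α ∈ Set.Icc s t |
        {T : ℕ × ℕ × ℕ | M ≤ (T.2.2 : ℝ) ∧
          1 ≤ T.1 ∧ T.1 ≤ T.2.2 - 1 ∧ 1 ≤ T.2.1 ∧ T.2.1 ≤ T.2.2 - 1 ∧
          |((T.1 : ℝ) / (T.2.2 : ℝ)) ^ α + ((T.2.1 : ℝ) / (T.2.2 : ℝ)) ^ α - 1| ≤
            (T.2.2 : ℝ) ^ (-β)}.Infinite} := by
  have hsb : 0 < s - β := sub_pos.mpr hβs
  refine ⟨max 2 ((2:ℝ) ^ (s - β)⁻¹), lt_max_of_lt_left one_lt_two, ?_⟩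
  intro M hM α hα
  obtain ⟨hαIcc, hinf⟩ := hα
  have hαs : s ≤ α := hαIcc.1
  have hα0 : 0 < α := by linarith
  refine ⟨hαIcc, ?_⟩
  set g : ℕ × ℕ × ℕ → ℤ × ℤ × ℤ :=
    fun w => (⌊(w.1 : ℝ) ^ α⌋, ⌊(w.2.1 : ℝ) ^ α⌋, ⌊(w.2.2 : ℝ) ^ α⌋) with hg
  set Sint : Set (ℤ × ℤ × ℤ) :=
    {T | T.1 ∈ PS α ∧ T.2.1 ∈ PS α ∧ T.2.2 ∈ PS α ∧ T.1 + T.2.1 = T.2.2} with hSint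
  set W : Set (ℕ × ℕ × ℕ) :=
    {w | 1 ≤ w.1 ∧ 1 ≤ w.2.1 ∧ w.1 < w.2.2 ∧ w.2.1 < w.2.2 ∧ g w ∈ Sint} with hW
  have hone : ∀ k : ℕ, 1 ≤ k → (1:ℝ) ≤ (k:ℝ) ^ α := by
    intro k hk
    have : (1:ℝ) ^ α ≤ (k:ℝ) ^ α :=
      Real.rpow_le_rpow zero_le_one (by exact_mod_cast hk) hα0.le
    simpa using this
  -- every integer solution comes from a natural triple in W
  have hsub : Sint ⊆ g '' W := by
    intro T hT
    have hT' := hT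
    obtain ⟨⟨m, hm1, hmx⟩, ⟨n, hn1, hnx⟩, ⟨r, hr1, hrx⟩, hsum⟩ := hT
    have hkey : (⌊(m:ℝ)^α⌋ : ℤ) + ⌊(n:ℝ)^α⌋ = ⌊(r:ℝ)^α⌋ := by
      rw [← hmx, ← hnx, ← hrx]; exact hsum
    have hkeyR : ((⌊(m:ℝ)^α⌋ : ℝ)) + (⌊(n:ℝ)^α⌋ : ℝ) = (⌊(r:ℝ)^α⌋ : ℝ) := by
      exact_mod_cast hkey
    have hfx : (1:ℝ) ≤ (⌊(m:ℝ)^α⌋ : ℝ) := by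
      have h : (1:ℤ) ≤ ⌊(m:ℝ)^α⌋ := by
        rw [Int.le_floor]; push_cast; exact hone m hm1
      exact_mod_cast h
    have hfy : (1:ℝ) ≤ (⌊(n:ℝ)^α⌋ : ℝ) := by
      have h : (1:ℤ) ≤ ⌊(n:ℝ)^α⌋ := by
        rw [Int.le_floor]; push_cast; exact hone n hn1
      exact_mod_cast h
    have hmlt : (m:ℝ)^α < (r:ℝ)^α := by
      have h1 : (m:ℝ)^α < (⌊(m:ℝ)^α⌋ : ℝ) + 1 := Int.lt_floor_add_one _
      have h2 : ((⌊(r:ℝ)^α⌋ : ℝ)) ≤ (r:ℝ)^α := Int.floor_le _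
      linarith
    have hnlt : (n:ℝ)^α < (r:ℝ)^α := by
      have h1 : (n:ℝ)^α < (⌊(n:ℝ)^α⌋ : ℝ) + 1 := Int.lt_floor_add_one _
      have h2 : ((⌊(r:ℝ)^α⌋ : ℝ)) ≤ (r:ℝ)^α := Int.floor_le _
      linarith
    have hmr : m < r := by
      by_contra h
      push_neg at h
      have : (r:ℝ)^α ≤ (m:ℝ)^α :=
        Real.rpow_le_rpow (Nat.cast_nonneg r) (by exact_mod_cast h) hα0.le
      linarith
    have hnr : n < r := by
      by_contra h
      push_neg at h
      have : (r:ℝ)^α ≤ (n:ℝ)^α :=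
        Real.rpow_le_rpow (Nat.cast_nonneg r) (by exact_mod_cast h) hα0.le
      linarith
    have hgT : g (m, n, r) = T := by
      simp only [hg]
      exact Prod.ext hmx.symm (Prod.ext hnx.symm hrx.symm)
    exact ⟨(m, n, r), ⟨hm1, hn1, hmr, hnr, hgT ▸ hT'⟩, hgT⟩
  have hWinf : W.Infinite := Set.Infinite.of_image g (hinf.mono hsub)
  set N : ℕ := ⌈M⌉₊ with hNdef
  have hBfin : (W ∩ {w : ℕ × ℕ × ℕ | w.2.2 < N}).Finite := by
    apply Set.Finite.subset
      ((Set.finite_Iio N).prod ((Set.finite_Iio N).prod (Set.finite_Iio N)))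
    rintro ⟨m, n, r⟩ ⟨⟨_, _, hmr, hnr, _⟩, hrN⟩
    exact ⟨lt_trans hmr hrN, lt_trans hnr hrN, hrN⟩
  apply Set.Infinite.mono ?_ (hWinf.diff hBfin)
  rintro ⟨m, n, r⟩ ⟨hwW, hwB⟩
  obtain ⟨hm1, hn1, hmr, hnr, hgS⟩ := hwW
  have hrN : N ≤ r := by
    by_contra h
    push_neg at h
    exact hwB ⟨⟨hm1, hn1, hmr, hnr, hgS⟩, h⟩
  have hMr : M ≤ (r : ℝ) := le_trans (Nat.le_ceil M) (by exact_mod_cast hrN)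
  have hr2 : (2:ℝ) ≤ (r:ℝ) := le_trans (le_trans (le_max_left _ _) hM) hMr
  have hrM0' : ((2:ℝ) ^ (s - β)⁻¹) ≤ (r:ℝ) := le_trans (le_trans (le_max_right _ _) hM) hMr
  have hr1R : (1:ℝ) < (r:ℝ) := lt_of_lt_of_le one_lt_two hr2
  have hrpos : (0:ℝ) < (r:ℝ) := lt_trans zero_lt_one hr1R
  obtain ⟨_, _, _, hfl⟩ := hgS
  simp only [hg] at hfl
  have hfl' : ((⌊(m:ℝ)^α⌋ : ℝ)) + (⌊(n:ℝ)^α⌋ : ℝ) = (⌊(r:ℝ)^α⌋ : ℝ) := by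
    exact_mod_cast hfl
  have habs : |(m:ℝ)^α + (n:ℝ)^α - (r:ℝ)^α| ≤ 2 := by
    have h1 := Int.floor_le ((m:ℝ)^α)
    have h2 := Int.floor_le ((n:ℝ)^α)
    have h3 := Int.lt_floor_add_one ((m:ℝ)^α)
    have h4 := Int.lt_floor_add_one ((n:ℝ)^α)
    have h5 := Int.floor_le ((r:ℝ)^α)
    have h6 := Int.lt_floor_add_one ((r:ℝ)^α)
    rw [abs_le]
    constructor <;> linarith
  have hrpow : (0:ℝ) < (r:ℝ)^α := Real.rpow_pos_of_pos hrpos α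
  have hdivm : ((m:ℝ)/(r:ℝ))^α = (m:ℝ)^α / (r:ℝ)^α :=
    Real.div_rpow (Nat.cast_nonneg m) (Nat.cast_nonneg r) α
  have hdivn : ((n:ℝ)/(r:ℝ))^α = (n:ℝ)^α / (r:ℝ)^α :=
    Real.div_rpow (Nat.cast_nonneg n) (Nat.cast_nonneg r) α
  have h2le : (2:ℝ) ≤ (r:ℝ)^(α - β) := by
    calc (2:ℝ) = ((2:ℝ) ^ (s - β)⁻¹) ^ (s - β) := by
          rw [← Real.rpow_mul (by norm_num : (0:ℝ) ≤ 2), inv_mul_cancel₀ hsb.ne',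
            Real.rpow_one]
      _ ≤ (r:ℝ) ^ (s - β) :=
          Real.rpow_le_rpow (Real.rpow_nonneg (by norm_num) _) hrM0' hsb.le
      _ ≤ (r:ℝ) ^ (α - β) :=
          Real.rpow_le_rpow_of_exponent_le hr1R.le (by linarith)
  refine ⟨hMr, hm1, by omega, hn1, by omega, ?_⟩
  have heq : (m:ℝ)^α/(r:ℝ)^α + (n:ℝ)^α/(r:ℝ)^α - 1
      = ((m:ℝ)^α + (n:ℝ)^α - (r:ℝ)^α)/(r:ℝ)^α := by
    field_simp
  rw [hdivm, hdivn, heq, abs_div, abs_of_pos hrpow, div_le_iff₀ hrpow]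
  have hmul : (r:ℝ)^(-β) * (r:ℝ)^α = (r:ℝ)^(α - β) := by
    rw [← Real.rpow_add hrpos]; ring_nf
  rw [hmul]
  linarith
end

section
/- Let 3 < β < s < t be real numbers. For positive integers p, q, r with p, q ≤ r − 1, define J(p, q, r) = {α ∈ [s, t] : |(p/r)^α + (q/r)^α − 1| ≤ r^{−β}}. Then there exists M₀ > 1 such that for every integer M ≥ M₀, the set A(s,t) = {α ∈ [s, t] : there are infinitely many triples (x, y, z) ∈ PS(α)³ with x + y = z} is contained in the union ⋃_{r ≥ M} ⋃_{1 ≤ p, q ≤ r−1} J(p, q, r). -/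
open MeasureTheory

/-- Let `3 < β < s < t`. There is `M₀ > 1` such that for every integer `M ≥ M₀`,
`A(s,t)` is contained in `⋃_{r ≥ M} ⋃_{1 ≤ p,q ≤ r−1} J(p,q,r)`, where
`J(p,q,r) = {α ∈ [s,t] : |(p/r)^α + (q/r)^α − 1| ≤ r^{−β}}`. -/
theorem statement8 (β s t : ℝ) (hβ : 3 < β) (hβs : β < s) (hst : s < t) :
    ∃ M₀ : ℝ, 1 < M₀ ∧ ∀ M : ℕ, M₀ ≤ (M : ℝ) →
      {α ∈ Set.Icc s t |
        {T : ℤ × ℤ × ℤ | T.1 ∈ PS α ∧ T.2.1 ∈ PS α ∧ T.2.2 ∈ PS α ∧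
          T.1 + T.2.1 = T.2.2}.Infinite} ⊆
      ⋃ (r : ℕ) (_ : M ≤ r) (p : ℕ) (_ : p ∈ Set.Icc 1 (r - 1))
        (q : ℕ) (_ : q ∈ Set.Icc 1 (r - 1)),
        {α ∈ Set.Icc s t |
          |((p : ℝ) / (r : ℝ)) ^ α + ((q : ℝ) / (r : ℝ)) ^ α - 1| ≤ (r : ℝ) ^ (-β)} := by
  have hsβ : 0 < s - β := by linarith
  refine ⟨max 2 (2 ^ ((s - β)⁻¹)), lt_of_lt_of_le one_lt_two (le_max_left _ _), ?_⟩
  intro M hM α hα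
  obtain ⟨hαst, hinf⟩ := hα
  have hα0 : (0:ℝ) < α := by have := hαst.1; linarith
  have hM2 : (2:ℝ) ≤ M := le_trans (le_max_left _ _) hM
  have hMpow : (2:ℝ) ^ ((s-β)⁻¹) ≤ M := le_trans (le_max_right _ _) hM
  have hM1 : (1:ℝ) ≤ M := by linarith
  -- PS elements are ≥ 1
  have hPS1 : ∀ m ∈ PS α, (1:ℤ) ≤ m := by
    rintro m ⟨n, hn1, rfl⟩
    have h1 : (1:ℝ) ≤ (n : ℝ) ^ α :=
      Real.one_le_rpow (by exact_mod_cast hn1) hα0.le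
    exact Int.le_floor.mpr (by simpa using h1)
  set N : ℤ := ⌈(M:ℝ) ^ t⌉ with hN
  -- find a triple with large third coordinate
  obtain ⟨T, hTS, hTz⟩ : ∃ T ∈ {T : ℤ × ℤ × ℤ | T.1 ∈ PS α ∧ T.2.1 ∈ PS α ∧
      T.2.2 ∈ PS α ∧ T.1 + T.2.1 = T.2.2}, N < T.2.2 := by
    by_contra h
    push_neg at h
    apply hinf
    apply Set.Finite.subset
      (((Set.finite_Icc (1:ℤ) N).prod ((Set.finite_Icc (1:ℤ) N).prod (Set.finite_Icc (1:ℤ) N))))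
    rintro ⟨x, y, z⟩ ⟨hx, hy, hz, hxyz⟩
    have hx1 := hPS1 x hx
    have hy1 := hPS1 y hy
    have hz1 := hPS1 z hz
    have hzN : z ≤ N := h (x, y, z) ⟨hx, hy, hz, hxyz⟩
    simp only [Prod.fst, Prod.snd] at hxyz
    exact ⟨Set.mem_Icc.mpr ⟨hx1, by linarith⟩,
      Set.mem_Icc.mpr ⟨hy1, by linarith⟩, Set.mem_Icc.mpr ⟨hz1, hzN⟩⟩
  obtain ⟨x, y, z⟩ := T
  obtain ⟨hx, hy, hz, hxyz⟩ := hTS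
  simp only at hTz hxyz
  obtain ⟨n, hn1, rfl⟩ := hx
  obtain ⟨m, hm1, rfl⟩ := hy
  obtain ⟨r, hr1, rfl⟩ := hz
  have hrR : (1:ℝ) ≤ (r:ℝ) := by exact_mod_cast hr1
  have hrR0 : (0:ℝ) < (r:ℝ) := by linarith
  have hrpow0 : (0:ℝ) < (r:ℝ) ^ α := Real.rpow_pos_of_pos hrR0 α
  -- r ≥ M
  have hMr : M ≤ r := by
    by_contra hlt
    push_neg at hlt
    have h1 : ((r:ℝ)) ^ α ≤ (M:ℝ) ^ α :=
      Real.rpow_le_rpow (by positivity) (by exact_mod_cast hlt.le) hα0.le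
    have h2 : (M:ℝ) ^ α ≤ (M:ℝ) ^ t :=
      Real.rpow_le_rpow_of_exponent_le hM1 (le_trans hαst.2 le_rfl)
    have h3 : (M:ℝ) ^ t ≤ (N:ℝ) := Int.le_ceil _
    have h4 : ((⌊(r:ℝ) ^ α⌋ : ℤ) : ℝ) ≤ (r:ℝ) ^ α := Int.floor_le _
    have h5 : (N:ℝ) < ((⌊(r:ℝ) ^ α⌋ : ℤ) : ℝ) := by exact_mod_cast hTz
    linarith
  -- n < r and m < r
  have hnr : n < r := by
    by_contra hge
    push_neg at hge
    have : (r:ℝ) ^ α ≤ (n:ℝ) ^ α :=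
      Real.rpow_le_rpow (by positivity) (by exact_mod_cast hge) hα0.le
    have hf : ⌊(r:ℝ) ^ α⌋ ≤ ⌊(n:ℝ) ^ α⌋ := Int.floor_le_floor this
    have hm1' := hPS1 _ ⟨m, hm1, rfl⟩
    omega
  have hmr : m < r := by
    by_contra hge
    push_neg at hge
    have : (r:ℝ) ^ α ≤ (m:ℝ) ^ α :=
      Real.rpow_le_rpow (by positivity) (by exact_mod_cast hge) hα0.le
    have hf : ⌊(r:ℝ) ^ α⌋ ≤ ⌊(m:ℝ) ^ α⌋ := Int.floor_le_floor this
    have hn1' := hPS1 _ ⟨n, hn1, rfl⟩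
    omega
  -- the approximation
  have hfn1 : ((⌊(n:ℝ) ^ α⌋ : ℤ) : ℝ) ≤ (n:ℝ) ^ α := Int.floor_le _
  have hfn2 : (n:ℝ) ^ α < ((⌊(n:ℝ) ^ α⌋ : ℤ) : ℝ) + 1 := Int.lt_floor_add_one _
  have hfm1 : ((⌊(m:ℝ) ^ α⌋ : ℤ) : ℝ) ≤ (m:ℝ) ^ α := Int.floor_le _
  have hfm2 : (m:ℝ) ^ α < ((⌊(m:ℝ) ^ α⌋ : ℤ) : ℝ) + 1 := Int.lt_floor_add_one _
  have hfr1 : ((⌊(r:ℝ) ^ α⌋ : ℤ) : ℝ) ≤ (r:ℝ) ^ α := Int.floor_le _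
  have hfr2 : (r:ℝ) ^ α < ((⌊(r:ℝ) ^ α⌋ : ℤ) : ℝ) + 1 := Int.lt_floor_add_one _
  have hsum : ((⌊(n:ℝ) ^ α⌋ : ℤ) : ℝ) + ((⌊(m:ℝ) ^ α⌋ : ℤ) : ℝ)
      = ((⌊(r:ℝ) ^ α⌋ : ℤ) : ℝ) := by exact_mod_cast congrArg (fun k : ℤ => (k:ℝ)) hxyz
  have hkey : |(n:ℝ) ^ α + (m:ℝ) ^ α - (r:ℝ) ^ α| ≤ 2 := by
    rw [abs_le]; constructor <;> linarith
  -- r^(s-β) ≥ 2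
  have hr2 : (2:ℝ) ≤ (r:ℝ) ^ (s - β) := by
    have h1 : ((2:ℝ) ^ ((s-β)⁻¹)) ^ (s - β) ≤ (r:ℝ) ^ (s - β) := by
      apply Real.rpow_le_rpow (by positivity) _ hsβ.le
      calc (2:ℝ) ^ ((s-β)⁻¹) ≤ (M:ℝ) := hMpow
        _ ≤ (r:ℝ) := by exact_mod_cast hMr
    have h2 : ((2:ℝ) ^ ((s-β)⁻¹)) ^ (s - β) = 2 := by
      rw [← Real.rpow_mul (by norm_num : (0:ℝ) ≤ 2), inv_mul_cancel₀ hsβ.ne',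
        Real.rpow_one]
    linarith
  have hfinal : |((n : ℝ) / (r : ℝ)) ^ α + ((m : ℝ) / (r : ℝ)) ^ α - 1| ≤ (r : ℝ) ^ (-β) := by
    have hdivn : ((n : ℝ) / (r : ℝ)) ^ α = (n:ℝ) ^ α / (r:ℝ) ^ α :=
      Real.div_rpow (by positivity) hrR0.le _
    have hdivm : ((m : ℝ) / (r : ℝ)) ^ α = (m:ℝ) ^ α / (r:ℝ) ^ α :=
      Real.div_rpow (by positivity) hrR0.le _
    have heq : ((n : ℝ) / (r : ℝ)) ^ α + ((m : ℝ) / (r : ℝ)) ^ α - 1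
        = ((n:ℝ) ^ α + (m:ℝ) ^ α - (r:ℝ) ^ α) / (r:ℝ) ^ α := by
      rw [hdivn, hdivm]; field_simp
    rw [heq, abs_div, abs_of_pos hrpow0, div_le_iff₀ hrpow0]
    have hgoal : (2:ℝ) ≤ (r:ℝ) ^ (-β) * (r:ℝ) ^ α := by
      rw [← Real.rpow_add hrR0]
      calc (2:ℝ) ≤ (r:ℝ) ^ (s - β) := hr2
        _ ≤ (r:ℝ) ^ (-β + α) := by
            apply Real.rpow_le_rpow_of_exponent_le hrR
            have := hαst.1; linarith
    linarith
  simp only [Set.mem_iUnion]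
  exact ⟨r, hMr, n, Set.mem_Icc.mpr ⟨hn1, by omega⟩, m, Set.mem_Icc.mpr ⟨hm1, by omega⟩,
    hαst, hfinal⟩
end

section
/- Let 3 < β < s < t be real numbers. There exists a constant C > 0 (depending only on β, s, t) such that for all integers r ≥ 2 and all integers p, q with 1 ≤ p, q ≤ r − 1, the diameter of the set J(p, q, r) = {α ∈ [s, t] : |(p/r)^α + (q/r)^α − 1| ≤ r^{−β}} is at most C · r^{−β} / log(r / max(p, q)). -/
/-- Let `3 < β < s < t`. There is a constant `C > 0` (depending only on `β, s, t`)
such that for all integers `r ≥ 2` and `1 ≤ p, q ≤ r − 1`, the diameter of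
`J(p,q,r) = {α ∈ [s,t] : |(p/r)^α + (q/r)^α − 1| ≤ r^{−β}}` is at most
`C · r^{−β} / log(r / max(p,q))`. -/
theorem statement9 (β s t : ℝ) (hβ : 3 < β) (hβs : β < s) (hst : s < t) :
    ∃ C : ℝ, 0 < C ∧ ∀ r : ℕ, 2 ≤ r → ∀ p q : ℕ,
      1 ≤ p → p ≤ r - 1 → 1 ≤ q → q ≤ r - 1 →
      Metric.diam {α ∈ Set.Icc s t |
          |((p : ℝ) / (r : ℝ)) ^ α + ((q : ℝ) / (r : ℝ)) ^ α - 1| ≤ (r : ℝ) ^ (-β)} ≤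
        C * (r : ℝ) ^ (-β) / Real.log ((r : ℝ) / (max p q : ℕ)) := by
  refine ⟨32, by norm_num, ?_⟩
  intro r hr p q hp hpr hq hqr
  have hR2 : (2:ℝ) ≤ (r:ℝ) := by exact_mod_cast hr
  have hR0 : (0:ℝ) < (r:ℝ) := by linarith
  have hpltr : p < r := by omega
  have hqltr : q < r := by omega
  have hNltr : max p q < r := by omega
  have hN1 : 1 ≤ max p q := le_trans hp (le_max_left _ _)
  have hm1 : (1:ℝ) ≤ ((max p q : ℕ) : ℝ) := by exact_mod_cast hN1
  have hmR : ((max p q : ℕ) : ℝ) + 1 ≤ (r:ℝ) := by exact_mod_cast hNltr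
  set m : ℝ := ((max p q : ℕ) : ℝ) with hm
  have hm0 : (0:ℝ) < m := by linarith
  have hRm1 : 1 < (r:ℝ)/m := (one_lt_div hm0).mpr (by linarith)
  have hc : 0 < Real.log ((r:ℝ)/m) := Real.log_pos hRm1
  set c := Real.log ((r:ℝ)/m) with hcdef
  have hRb : (0:ℝ) < (r:ℝ) ^ (-β) := Real.rpow_pos_of_pos hR0 _
  -- r^{-β} ≤ 1/8
  have h2β : (8:ℝ) ≤ (r:ℝ) ^ β := by
    have h1 : (2:ℝ) ^ (3:ℝ) ≤ (2:ℝ) ^ β :=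
      Real.rpow_le_rpow_of_exponent_le one_le_two hβ.le
    have h2 : (2:ℝ) ^ β ≤ (r:ℝ) ^ β :=
      Real.rpow_le_rpow (by norm_num) hR2 (by linarith)
    have h3 : (2:ℝ) ^ (3:ℝ) = 8 := by
      rw [show (3:ℝ) = ((3:ℕ):ℝ) by norm_num, Real.rpow_natCast]; norm_num
    linarith
  have hRβle : (r:ℝ) ^ (-β) ≤ 1/8 := by
    rw [Real.rpow_neg hR0.le]
    have : ((r:ℝ) ^ β)⁻¹ ≤ (8:ℝ)⁻¹ := by
      apply inv_anti₀ (by norm_num) h2β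
    linarith
  -- bases
  set x : ℝ := (p:ℝ)/(r:ℝ) with hxdef
  set y : ℝ := (q:ℝ)/(r:ℝ) with hydef
  set w : ℝ := m/(r:ℝ) with hwdef
  have hx0 : 0 < x := by
    apply div_pos _ hR0; exact_mod_cast Nat.pos_of_ne_zero (by omega)
  have hy0 : 0 < y := by
    apply div_pos _ hR0; exact_mod_cast Nat.pos_of_ne_zero (by omega)
  have hw0 : 0 < w := div_pos hm0 hR0
  have hxle : x ≤ 1 := by
    rw [div_le_one hR0]
    have : (p:ℝ) ≤ (r:ℝ) := by exact_mod_cast hpltr.le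
    linarith
  have hyle : y ≤ 1 := by
    rw [div_le_one hR0]
    have : (q:ℝ) ≤ (r:ℝ) := by exact_mod_cast hqltr.le
    linarith
  have hw1 : w < 1 := by rw [div_lt_one hR0]; linarith
  have hxw : x ≤ w := by
    rw [hxdef, hwdef, hm]
    gcongr
    exact_mod_cast le_max_left p q
  have hyw : y ≤ w := by
    rw [hydef, hwdef, hm]
    gcongr
    exact_mod_cast le_max_right p q
  have hlogw : Real.log w = -c := by
    rw [hcdef, hwdef, Real.log_div (ne_of_gt hm0) (ne_of_gt hR0),
      Real.log_div (ne_of_gt hR0) (ne_of_gt hm0)]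
    ring
  -- key estimate
  have key : ∀ a b : ℝ, a ∈ Set.Icc s t → |x ^ a + y ^ a - 1| ≤ (r:ℝ) ^ (-β) →
      b ∈ Set.Icc s t → |x ^ b + y ^ b - 1| ≤ (r:ℝ) ^ (-β) → a ≤ b →
      b - a ≤ 32 * (r:ℝ) ^ (-β) / c := by
    intro a b haI ha2 hbI hb2 hab
    have ha0 : (0:ℝ) ≤ a := by have := haI.1; linarith
    have hb0 : (0:ℝ) ≤ b := by have := hbI.1; linarith
    obtain ⟨δ, hδdef⟩ : ∃ δ : ℝ, δ = b - a := ⟨_, rfl⟩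
    rw [← hδdef]
    have hδ0 : 0 ≤ δ := by rw [hδdef]; linarith
    -- sum difference bound
    have ha2' := abs_le.mp ha2
    have hb2' := abs_le.mp hb2
    have hsum : (x ^ a + y ^ a) - (x ^ b + y ^ b) ≤ 2 * (r:ℝ) ^ (-β) := by
      have := ha2'.2; have := hb2'.1; linarith
    have hxd : x ^ b ≤ x ^ a := Real.rpow_le_rpow_of_exponent_ge hx0 hxle hab
    have hyd : y ^ b ≤ y ^ a := Real.rpow_le_rpow_of_exponent_ge hy0 hyle hab
    -- w is one of x, y
    have hwd : w ^ a - w ^ b ≤ 2 * (r:ℝ) ^ (-β) := by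
      rcases max_choice p q with h | h
      · have hwx : w = x := by rw [hwdef, hxdef, hm, h]
        rw [hwx]; linarith
      · have hwy : w = y := by rw [hwdef, hydef, hm, h]
        rw [hwy]; linarith
    -- lower bound on w ^ b
    have hwb : (7:ℝ)/16 ≤ w ^ b := by
      have hx' : x ^ b ≤ w ^ b := Real.rpow_le_rpow hx0.le hxw hb0
      have hy' : y ^ b ≤ w ^ b := Real.rpow_le_rpow hy0.le hyw hb0
      have := hb2'.1
      linarith
    have hwa1 : w ^ a ≤ 1 := Real.rpow_le_one hw0.le hw1.le ha0
    -- exponential form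
    have hprod : w ^ b = w ^ a * w ^ δ := by
      rw [← Real.rpow_add hw0, hδdef]; ring_nf
    have hwδ : w ^ δ = Real.exp (-(c * δ)) := by
      rw [Real.rpow_def_of_pos hw0, hlogw]; ring_nf
    set E : ℝ := Real.exp (-(c * δ)) with hEdef
    have hE0 : 0 < E := Real.exp_pos _
    have hE1 : Real.exp (c * δ) * E = 1 := by
      rw [hEdef, ← Real.exp_add]; simp
    have hexp : c * δ + 1 ≤ Real.exp (c * δ) := Real.add_one_le_exp _
    have hEle1 : E ≤ 1 := by
      rw [hEdef]
      calc Real.exp (-(c * δ)) ≤ Real.exp 0 := by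
            apply Real.exp_le_exp.mpr
            have := mul_nonneg hc.le hδ0
            linarith
        _ = 1 := Real.exp_zero
    have hE716 : (7:ℝ)/16 ≤ E := by
      rw [hprod, hwδ] at hwb
      have h2 : w ^ a * E ≤ E := mul_le_of_le_one_left hE0.le hwa1
      linarith
    have h1E : c * δ * E ≤ 1 - E := by
      have h3 := mul_le_mul_of_nonneg_right hexp hE0.le
      rw [hE1] at h3
      linarith
    have hwa716 : (7:ℝ)/16 ≤ w ^ a := by
      have h4 : w ^ a * E ≤ w ^ a * 1 :=
        mul_le_mul_of_nonneg_left hEle1 (Real.rpow_nonneg hw0.le a)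
      rw [hprod] at hwb
      rw [hwδ] at hwb
      linarith
    -- combine: 2 r^{-β} ≥ w^a (1 - E) ≥ (7/16)^2 c δ
    have h1 : w ^ a - w ^ b = w ^ a * (1 - E) := by rw [hprod, hwδ]; ring
    have hstep : (7:ℝ)/16 * (c * δ * E) ≤ w ^ a * (1 - E) := by
      have h5 : 0 ≤ c * δ * E := mul_nonneg (mul_nonneg hc.le hδ0) hE0.le
      have h6 : (7:ℝ)/16 * (c * δ * E) ≤ (7:ℝ)/16 * (1 - E) :=
        mul_le_mul_of_nonneg_left h1E (by norm_num)
      have h7 : (7:ℝ)/16 * (1 - E) ≤ w ^ a * (1 - E) :=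
        mul_le_mul_of_nonneg_right hwa716 (by linarith)
      linarith
    have hstep2 : (7:ℝ)/16 * (c * δ * ((7:ℝ)/16)) ≤ (7:ℝ)/16 * (c * δ * E) := by
      have h5 : 0 ≤ c * δ := mul_nonneg hc.le hδ0
      exact mul_le_mul_of_nonneg_left
        (mul_le_mul_of_nonneg_left hE716 h5) (by norm_num)
    have hmain : (7:ℝ)/16 * ((7:ℝ)/16) * (c * δ) ≤ 2 * (r:ℝ) ^ (-β) := by
      have := hwd
      linarith
    rw [le_div_iff₀ hc]
    have h8 : 0 ≤ c * δ := mul_nonneg hc.le hδ0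
    linarith
  -- conclude via diam
  apply Metric.diam_le_of_forall_dist_le (by positivity)
  intro a ha b hb
  obtain ⟨haI, ha2⟩ := ha
  obtain ⟨hbI, hb2⟩ := hb
  have hbd : (0:ℝ) ≤ 32 * (r:ℝ) ^ (-β) / c := by positivity
  rcases le_total a b with h | h
  · have := key a b haI ha2 hbI hb2 h
    rw [Real.dist_eq, abs_sub_le_iff]
    constructor <;> linarith
  · have := key b a hbI hb2 haI ha2 h
    rw [Real.dist_eq, abs_sub_le_iff]
    constructor <;> linarith
end

section
/- Let σ > 0. There exists a constant C > 0 depending only on σ such that for all integers r ≥ 2: ∑_{q=1}^{r−1} (log(r/q))^{−σ} ≤ C · ( r + 𝟙(σ = 1) · r log r + r^σ ), where 𝟙(σ = 1) equals 1 if σ = 1 and 0 otherwise. -/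
open scoped Classical

-- termwise bound
lemma term_bound (σ : ℝ) (hσ : 0 < σ) (r q : ℕ) (hq : 1 ≤ q) (hqr : q < r) :
    (Real.log ((r : ℝ) / (q : ℝ))) ^ (-σ) ≤ (r : ℝ) ^ σ * ((r - q : ℕ) : ℝ) ^ (-σ) := by
  have hy : (0:ℝ) < q := by exact_mod_cast hq
  have hx : (0:ℝ) < r := by exact_mod_cast Nat.lt_of_le_of_lt (Nat.zero_le q) hqr
  have hyx : (q:ℝ) < r := by exact_mod_cast hqr
  have hsub : ((r - q : ℕ) : ℝ) = (r:ℝ) - q := by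
    push_cast [Nat.cast_sub hqr.le]; ring
  have h1 : ((r:ℝ) - q)/r ≤ Real.log ((r:ℝ)/q) := by
    have := Real.log_le_sub_one_of_pos (x := (q:ℝ)/r) (by positivity)
    have hlog : Real.log ((r:ℝ)/q) = - Real.log ((q:ℝ)/r) := by
      rw [← Real.log_inv, inv_div]
    rw [hlog]
    have : Real.log ((q:ℝ)/r) ≤ (q:ℝ)/r - 1 := this
    have h2 : (1:ℝ) - (q:ℝ)/r ≤ - Real.log ((q:ℝ)/r) := by linarith
    calc ((r:ℝ) - q)/r = 1 - (q:ℝ)/r := by field_simp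
      _ ≤ _ := h2
  have h2 : (0:ℝ) < ((r:ℝ) - q)/r := by
    apply div_pos <;> linarith
  have h3 : (Real.log ((r : ℝ) / (q : ℝ))) ^ (-σ) ≤ (((r:ℝ) - q)/r) ^ (-σ) := by
    have := Real.antitoneOn_rpow_Ioi_of_exponent_nonpos (neg_nonpos.mpr hσ.le)
    exact this (Set.mem_Ioi.mpr h2) (Set.mem_Ioi.mpr (lt_of_lt_of_le h2 h1)) h1
  refine h3.trans_eq ?_
  rw [hsub, Real.div_rpow (by linarith) hx.le, Real.rpow_neg hx.le, div_eq_mul_inv,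
    inv_inv, mul_comm]

-- reindex
lemma reindex (σ : ℝ) (r : ℕ) (hr : 2 ≤ r) :
    ∑ q ∈ Finset.Ico 1 r, ((r - q : ℕ) : ℝ) ^ (-σ) =
      ∑ k ∈ Finset.Ico 1 r, (k : ℝ) ^ (-σ) := by
  refine Finset.sum_nbij' (fun q => r - q) (fun q => r - q) ?_ ?_ ?_ ?_ ?_ <;>
    intro a ha <;> simp only [Finset.mem_Ico] at * <;> try omega

-- sum bound, σ ≠ 1 case
lemma sum_bound_ne (σ : ℝ) (hσ : 0 < σ) (hσ1 : σ ≠ 1) (r : ℕ) (hr : 2 ≤ r) :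
    ∑ k ∈ Finset.Ico 1 r, (k : ℝ) ^ (-σ) ≤
      (1 + |1 - σ|⁻¹) * ((r : ℝ) ^ (1 - σ) + 1) := by
  set n : ℕ := r - 1 with hn
  have hn1 : 1 ≤ n := by omega
  have hrn : r = n + 1 := by omega
  have hn0 : (1:ℝ) ≤ (n:ℝ) := by exact_mod_cast hn1
  have hsplit : ∑ k ∈ Finset.Ico 1 r, (k : ℝ) ^ (-σ) =
      1 + ∑ i ∈ Finset.Ico 1 n, ((i+1 : ℕ) : ℝ) ^ (-σ) := by
    rw [Finset.sum_eq_sum_Ico_succ_bot (by omega : 1 < r)]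
    rw [Nat.cast_one, Real.one_rpow]
    congr 1
    refine Finset.sum_nbij' (fun k => k - 1) (fun i => i + 1) ?_ ?_ ?_ ?_ ?_ <;>
      intro a ha <;> simp only [Finset.mem_Ico] at * <;> try omega
    congr 2
    omega
  have hanti : AntitoneOn (fun x : ℝ => x ^ (-σ)) (Set.Icc ((1:ℕ):ℝ) (n:ℕ)) := by
    apply (Real.antitoneOn_rpow_Ioi_of_exponent_nonpos (neg_nonpos.mpr hσ.le)).mono
    intro x hx
    have h1 : ((1:ℕ):ℝ) ≤ x := hx.1
    simp only [Set.mem_Ioi]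
    norm_num at h1
    linarith
  have hint : ∑ i ∈ Finset.Ico 1 n, ((i+1 : ℕ) : ℝ) ^ (-σ) ≤
      ∫ x in (1:ℕ)..(n:ℕ), x ^ (-σ) := by
    have := hanti.sum_le_integral_Ico hn1
    simpa using this
  have hval : (∫ x in (1:ℕ)..(n:ℕ), x ^ (-σ)) = ((n:ℝ) ^ (1-σ) - 1) / (1-σ) := by
    rw [Nat.cast_one]
    rw [integral_rpow (Or.inr ⟨by intro h; apply hσ1; linarith [neg_eq_iff_eq_neg.mp h], by
      rw [Set.mem_uIcc]; push_neg; constructor <;> intro h <;> [linarith; linarith]⟩)]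
    rw [Real.one_rpow]
    ring_nf
  have habs : 0 < |1 - σ| := abs_pos.mpr (by intro h; apply hσ1; linarith)
  have hrpos : (0:ℝ) < r := by positivity
  have hnr : (n:ℝ) ≤ r := by exact_mod_cast Nat.sub_le r 1
  have hIle : ((n:ℝ) ^ (1-σ) - 1) / (1-σ) ≤ |1 - σ|⁻¹ * ((r : ℝ) ^ (1 - σ) + 1) := by
    rcases lt_or_gt_of_ne (fun h => hσ1 (by linarith) : (1:ℝ) - σ ≠ 0) with h | h
    · -- 1 - σ < 0, i.e. σ > 1
      rw [abs_of_neg h]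
      have hnn : (0:ℝ) < (n:ℝ) ^ (1-σ) := Real.rpow_pos_of_pos (by linarith) _
      have hrr : (0:ℝ) ≤ (r:ℝ) ^ (1-σ) := (Real.rpow_pos_of_pos hrpos _).le
      rw [div_le_iff_of_neg h]
      have : (0:ℝ) < -(1-σ) := by linarith
      rw [← neg_inv]
      have key : -(1-σ)⁻¹ * ((r:ℝ)^(1-σ)+1) * (1-σ) = -((r:ℝ)^(1-σ)+1) := by
        field_simp
      rw [key]
      linarith
    · -- 1 - σ > 0
      rw [abs_of_pos h]
      have hmono : (n:ℝ) ^ (1-σ) ≤ (r:ℝ) ^ (1-σ) :=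
        Real.rpow_le_rpow (by linarith) hnr h.le
      rw [div_le_iff₀ h]
      have h1 : (0:ℝ) < (1-σ)⁻¹ := by positivity
      have expand : (1-σ)⁻¹ * ((r : ℝ) ^ (1 - σ) + 1) * (1-σ) = (r:ℝ) ^ (1-σ) + 1 := by
        field_simp
      rw [expand]
      linarith
  have hC1 : (0:ℝ) ≤ |1 - σ|⁻¹ := by positivity
  have hR : (0:ℝ) ≤ (r : ℝ) ^ (1 - σ) + 1 := by positivity
  calc ∑ k ∈ Finset.Ico 1 r, (k : ℝ) ^ (-σ)
      = 1 + ∑ i ∈ Finset.Ico 1 n, ((i+1 : ℕ) : ℝ) ^ (-σ) := hsplit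
    _ ≤ 1 + ((n:ℝ) ^ (1-σ) - 1) / (1-σ) := by linarith [hint.trans_eq hval]
    _ ≤ 1 + |1 - σ|⁻¹ * ((r : ℝ) ^ (1 - σ) + 1) := by linarith
    _ ≤ (1 + |1 - σ|⁻¹) * ((r : ℝ) ^ (1 - σ) + 1) := by nlinarith [Real.rpow_pos_of_pos hrpos (1-σ)]

/-- For `σ > 0` there is `C > 0` depending only on `σ` such that for all `r ≥ 2`,
`∑_{q=1}^{r−1} (log(r/q))^{−σ} ≤ C (r + 𝟙(σ=1) r log r + r^σ)`. -/
theorem statement10 (σ : ℝ) (hσ : 0 < σ) :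
    ∃ C : ℝ, 0 < C ∧ ∀ r : ℕ, 2 ≤ r →
      ∑ q ∈ Finset.Ico 1 r, (Real.log ((r : ℝ) / (q : ℝ))) ^ (-σ) ≤
        C * ((r : ℝ) + (if σ = 1 then 1 else 0) * (r : ℝ) * Real.log r + (r : ℝ) ^ σ) := by
  by_cases hσ1 : σ = 1
  · subst hσ1
    refine ⟨2, by norm_num, fun r hr => ?_⟩
    have hrpos : (0:ℝ) < r := by
      have : (0:ℕ) < r := by omega
      exact_mod_cast this
    have hr1 : (1:ℝ) ≤ r := by exact_mod_cast (by omega : 1 ≤ r)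
    have hlognn : 0 ≤ Real.log r := Real.log_nonneg hr1
    have step1 : ∑ q ∈ Finset.Ico 1 r, (Real.log ((r:ℝ)/(q:ℝ))) ^ (-(1:ℝ)) ≤
        ∑ q ∈ Finset.Ico 1 r, (r:ℝ) ^ (1:ℝ) * ((r - q : ℕ):ℝ) ^ (-(1:ℝ)) := by
      apply Finset.sum_le_sum
      intro q hq
      simp only [Finset.mem_Ico] at hq
      exact term_bound 1 one_pos r q hq.1 hq.2
    have step2 : ∑ q ∈ Finset.Ico 1 r, (r:ℝ) ^ (1:ℝ) * ((r - q : ℕ):ℝ) ^ (-(1:ℝ)) =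
        (r:ℝ) * ∑ k ∈ Finset.Ico 1 r, (k:ℝ) ^ (-(1:ℝ)) := by
      rw [← Finset.mul_sum, reindex 1 r hr, Real.rpow_one]
    have step3 : ∑ k ∈ Finset.Ico 1 r, (k:ℝ) ^ (-(1:ℝ)) = (harmonic (r-1) : ℝ) := by
      have : r = (r-1) + 1 := by omega
      rw [this, Finset.Ico_add_one_right_eq_Icc]
      rw [harmonic_eq_sum_Icc]
      push_cast
      refine Finset.sum_congr rfl fun k _ => Real.rpow_neg_one _
    have step4 : (harmonic (r-1) : ℝ) ≤ 1 + Real.log r := by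
      refine (harmonic_le_one_add_log (r-1)).trans ?_
      have h1 : ((r-1 : ℕ):ℝ) ≤ (r:ℝ) := by exact_mod_cast Nat.sub_le r 1
      have h2 : (0:ℝ) < ((r-1 : ℕ):ℝ) := by
        have : (0:ℕ) < r - 1 := by omega
        exact_mod_cast this
      linarith [Real.log_le_log h2 h1]
    calc ∑ q ∈ Finset.Ico 1 r, (Real.log ((r:ℝ)/(q:ℝ))) ^ (-(1:ℝ))
        ≤ (r:ℝ) * (harmonic (r-1) : ℝ) := by rw [← step3, ← step2]; exact step1
      _ ≤ (r:ℝ) * (1 + Real.log r) :=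
          mul_le_mul_of_nonneg_left step4 hrpos.le
      _ ≤ 2 * ((r : ℝ) + (if (1:ℝ) = 1 then 1 else 0) * (r : ℝ) * Real.log r + (r : ℝ) ^ (1:ℝ)) := by
          rw [if_pos rfl, Real.rpow_one]
          nlinarith
  · refine ⟨1 + |1 - σ|⁻¹, by positivity, fun r hr => ?_⟩
    have hrpos : (0:ℝ) < r := by
      have : (0:ℕ) < r := by omega
      exact_mod_cast this
    have hC : (0:ℝ) ≤ 1 + |1 - σ|⁻¹ := by positivity
    have step1 : ∑ q ∈ Finset.Ico 1 r, (Real.log ((r:ℝ)/(q:ℝ))) ^ (-σ) ≤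
        ∑ q ∈ Finset.Ico 1 r, (r:ℝ) ^ σ * ((r - q : ℕ):ℝ) ^ (-σ) := by
      apply Finset.sum_le_sum
      intro q hq
      simp only [Finset.mem_Ico] at hq
      exact term_bound σ hσ r q hq.1 hq.2
    have step2 : ∑ q ∈ Finset.Ico 1 r, (r:ℝ) ^ σ * ((r - q : ℕ):ℝ) ^ (-σ) =
        (r:ℝ) ^ σ * ∑ k ∈ Finset.Ico 1 r, (k:ℝ) ^ (-σ) := by
      rw [← Finset.mul_sum, reindex σ r hr]
    have hsum := sum_bound_ne σ hσ hσ1 r hr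
    have hpow : (r:ℝ) ^ σ * (r:ℝ) ^ (1 - σ) = (r:ℝ) := by
      rw [← Real.rpow_add hrpos]
      norm_num
    calc ∑ q ∈ Finset.Ico 1 r, (Real.log ((r:ℝ)/(q:ℝ))) ^ (-σ)
        ≤ (r:ℝ) ^ σ * ∑ k ∈ Finset.Ico 1 r, (k:ℝ) ^ (-σ) := by rw [← step2]; exact step1
      _ ≤ (r:ℝ) ^ σ * ((1 + |1 - σ|⁻¹) * ((r : ℝ) ^ (1 - σ) + 1)) :=
          mul_le_mul_of_nonneg_left hsum (Real.rpow_pos_of_pos hrpos σ).le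
      _ = (1 + |1 - σ|⁻¹) * ((r:ℝ) + (r:ℝ) ^ σ) := by
          linear_combination (1 + |1 - σ|⁻¹) * hpow
      _ = (1 + |1 - σ|⁻¹) * ((r : ℝ) + (if σ = 1 then 1 else 0) * (r : ℝ) * Real.log r + (r : ℝ) ^ σ) := by
          rw [if_neg hσ1]
          ring
end

section
/- Let B > 1 and σ > 0. There exists a constant C > 0 depending only on σ and B such that for all integers r ≥ 2: ∑_{r < q < Br} (log(q/r))^{−σ} ≤ C · ( r + 𝟙(σ = 1) · r log r + r^σ ), where the sum ranges over integers q with r < q < Br, and 𝟙(σ = 1) equals 1 if σ = 1 and 0 otherwise. -/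
open scoped Classical

private lemma tele_sum {σ : ℝ} (hσ0 : 0 < σ) (hσ1 : σ < 1) (m : ℕ) :
    ∑ k ∈ Finset.Icc 1 m, (k : ℝ) ^ (-σ) ≤ (m : ℝ) ^ (1 - σ) / (1 - σ) := by
  have h1σ : (0:ℝ) < 1 - σ := by linarith
  induction m with
  | zero => simp; positivity
  | succ n ih =>
    rw [Finset.sum_Icc_succ_top (by omega)]
    have hN : (0:ℝ) < (n:ℝ) + 1 := by positivity
    have key : (n:ℝ) ^ (1 - σ) + (1 - σ) * ((n:ℝ)+1) ^ (-σ) ≤ ((n:ℝ)+1) ^ (1 - σ) := by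
      have ha : (0:ℝ) ≤ (n:ℝ) / ((n:ℝ)+1) := by positivity
      have hgm : ((n:ℝ)/((n:ℝ)+1)) ^ (1-σ) * (1:ℝ) ^ σ ≤ (1-σ) * ((n:ℝ)/((n:ℝ)+1)) + σ * 1 :=
        Real.geom_mean_le_arith_mean2_weighted (by linarith) hσ0.le ha zero_le_one (by ring)
      rw [Real.one_rpow, mul_one, mul_one] at hgm
      have hdiv : ((n:ℝ)/((n:ℝ)+1)) ^ (1-σ) = (n:ℝ) ^ (1-σ) / ((n:ℝ)+1) ^ (1-σ) :=
        Real.div_rpow (Nat.cast_nonneg n) hN.le (1-σ)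
      rw [hdiv, div_le_iff₀ (Real.rpow_pos_of_pos hN _)] at hgm
      have hmul : ((n:ℝ)+1) ^ (1 - σ) = ((n:ℝ)+1) * ((n:ℝ)+1) ^ (-σ) := by
        rw [show ((n:ℝ)+1) * ((n:ℝ)+1)^(-σ) = ((n:ℝ)+1)^(1:ℝ) * ((n:ℝ)+1)^(-σ) by
          rw [Real.rpow_one], ← Real.rpow_add hN]
        ring_nf
      have hx : (0:ℝ) < ((n:ℝ)+1) ^ (-σ) := Real.rpow_pos_of_pos hN _
      have hexp : ((1-σ) * ((n:ℝ)/((n:ℝ)+1)) + σ) * ((n:ℝ)+1) ^ (1-σ)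
          = (1-σ) * (n:ℝ) * ((n:ℝ)+1) ^ (-σ) + σ * (((n:ℝ)+1) * ((n:ℝ)+1) ^ (-σ)) := by
        rw [hmul]; field_simp
      rw [hexp] at hgm
      nlinarith [hgm, hx]
    have hcast : ((n+1 : ℕ) : ℝ) = (n:ℝ) + 1 := by push_cast; ring
    rw [hcast]
    rw [le_div_iff₀ h1σ] at ih ⊢
    nlinarith [key, ih]

/-- For `B > 1` and `σ > 0` there is `C > 0` depending only on `σ, B` such that for
all `r ≥ 2`, `∑_{r < q < Br} (log(q/r))^{−σ} ≤ C (r + 𝟙(σ=1) r log r + r^σ)`. -/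
theorem statement11 (B σ : ℝ) (hB : 1 < B) (hσ : 0 < σ) :
    ∃ C : ℝ, 0 < C ∧ ∀ r : ℕ, 2 ≤ r →
      ∑ q ∈ (Finset.range (Nat.ceil (B * (r : ℝ)) + 1)).filter
          (fun q => r < q ∧ (q : ℝ) < B * (r : ℝ)),
        (Real.log ((q : ℝ) / (r : ℝ))) ^ (-σ) ≤
        C * ((r : ℝ) + (if σ = 1 then 1 else 0) * (r : ℝ) * Real.log r + (r : ℝ) ^ σ) := by
  have hB0 : (0:ℝ) < B := by linarith
  -- common reduction
  have main : ∀ r : ℕ, 2 ≤ r →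
      ∑ q ∈ (Finset.range (Nat.ceil (B * (r : ℝ)) + 1)).filter
          (fun q => r < q ∧ (q : ℝ) < B * (r : ℝ)),
        (Real.log ((q : ℝ) / (r : ℝ))) ^ (-σ) ≤
      (B * r) ^ σ * ∑ k ∈ Finset.Icc 1 (Nat.ceil (B * (r:ℝ)) - r), (k : ℝ) ^ (-σ) := by
    intro r hr
    set K := Nat.ceil (B * (r:ℝ)) with hK
    have hrpos : (0:ℝ) < r := by exact_mod_cast (by omega : 0 < r)
    have hBrpos : (0:ℝ) < B * r := by positivity
    have hrBr : (r:ℝ) ≤ B * r := by nlinarith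
    have hrK : r ≤ K := by
      have h := Nat.le_ceil (B * (r:ℝ))
      exact Nat.cast_le.mp (le_trans hrBr h)
    calc ∑ q ∈ (Finset.range (K + 1)).filter
          (fun q => r < q ∧ (q : ℝ) < B * (r : ℝ)),
        (Real.log ((q : ℝ) / (r : ℝ))) ^ (-σ)
        ≤ ∑ q ∈ (Finset.range (K + 1)).filter
          (fun q => r < q ∧ (q : ℝ) < B * (r : ℝ)),
          (B * r) ^ σ * (((q - r : ℕ) : ℝ)) ^ (-σ) := by
          apply Finset.sum_le_sum
          intro q hq
          rw [Finset.mem_filter] at hq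
          obtain ⟨-, hq1, hq2⟩ := hq
          have hqr : (r:ℝ) < q := by exact_mod_cast hq1
          have hqpos : (0:ℝ) < q := by linarith
          have hsub : ((q - r : ℕ) : ℝ) = (q:ℝ) - r := by
            push_cast [Nat.cast_sub hq1.le]; ring
          have hsubpos : (0:ℝ) < ((q - r : ℕ) : ℝ) := by rw [hsub]; linarith
          have hlog : ((q - r : ℕ) : ℝ) / (B * r) ≤ Real.log ((q:ℝ)/r) := by
            have h1 : Real.log ((r:ℝ)/q) ≤ (r:ℝ)/q - 1 :=
              Real.log_le_sub_one_of_pos (by positivity)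
            have h2 : Real.log ((r:ℝ)/q) = - Real.log ((q:ℝ)/r) := by
              rw [Real.log_div (by positivity) (by positivity),
                Real.log_div (by positivity) (by positivity)]; ring
            have h3 : 1 - (r:ℝ)/q ≤ Real.log ((q:ℝ)/r) := by
              rw [h2] at h1; linarith
            have h4 : ((q:ℝ) - r) / (B * r) ≤ ((q:ℝ) - r) / q :=
              div_le_div_of_nonneg_left (by linarith) hqpos hq2.le
            have h5 : ((q:ℝ) - r) / q = 1 - (r:ℝ)/q := by field_simp
            rw [hsub]; linarith
          have hstep : Real.log ((q:ℝ)/r) ^ (-σ) ≤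
              (((q - r : ℕ) : ℝ) / (B * r)) ^ (-σ) :=
            Real.rpow_le_rpow_of_nonpos (by positivity) hlog (by linarith)
          refine hstep.trans (le_of_eq ?_)
          rw [Real.div_rpow hsubpos.le hBrpos.le, Real.rpow_neg hBrpos.le,
            div_eq_mul_inv, inv_inv, mul_comm]
      _ ≤ ∑ q ∈ Finset.Ioc r K, (B * r) ^ σ * (((q - r : ℕ) : ℝ)) ^ (-σ) := by
          apply Finset.sum_le_sum_of_subset_of_nonneg
          · intro q hq
            rw [Finset.mem_filter, Finset.mem_range] at hq
            rw [Finset.mem_Ioc]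
            exact ⟨hq.2.1, by omega⟩
          · intro q _ _
            positivity
      _ = ∑ k ∈ Finset.Ioc 0 (K - r), (B * r) ^ σ * ((k : ℝ)) ^ (-σ) := by
          have hmap : Finset.Ioc r K =
              (Finset.Ioc 0 (K - r)).map (addRightEmbedding r) := by
            rw [Finset.map_add_right_Ioc]
            congr 1 <;> omega
          rw [hmap, Finset.sum_map]
          apply Finset.sum_congr rfl
          intro k _
          simp [addRightEmbedding_apply, Nat.add_sub_cancel]
      _ = (B * r) ^ σ * ∑ k ∈ Finset.Icc 1 (K - r), (k : ℝ) ^ (-σ) := by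
          rw [← Finset.Icc_add_one_left_eq_Ioc, ← Finset.mul_sum, zero_add]
  -- bound on m = K - r
  have hmle : ∀ r : ℕ, 2 ≤ r → ((Nat.ceil (B * (r:ℝ)) - r : ℕ) : ℝ) ≤ B * r := by
    intro r hr
    have hrpos : (0:ℝ) < r := by exact_mod_cast (by omega : 0 < r)
    have hBrpos : (0:ℝ) ≤ B * r := by positivity
    have h1 : (Nat.ceil (B * (r:ℝ)) : ℝ) < B * r + 1 := Nat.ceil_lt_add_one hBrpos
    have hr1 : (1:ℝ) ≤ r := by exact_mod_cast (by omega : 1 ≤ r)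
    by_cases hrK : r ≤ Nat.ceil (B * (r:ℝ))
    · rw [Nat.cast_sub hrK]; push_cast; linarith
    · rw [Nat.sub_eq_zero_of_le (by omega)]; simpa using hBrpos
  -- three cases on σ
  rcases lt_trichotomy σ 1 with hlt | heq | hgt
  · -- σ < 1
    have h1σ : (0:ℝ) < 1 - σ := by linarith
    refine ⟨B / (1 - σ) + 1, by positivity, fun r hr => ?_⟩
    have hrpos : (0:ℝ) < r := by exact_mod_cast (by omega : 0 < r)
    have hBrpos : (0:ℝ) < B * r := by positivity
    have hP : (0:ℝ) < (B * r) ^ σ := Real.rpow_pos_of_pos hBrpos _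
    set m := Nat.ceil (B * (r:ℝ)) - r with hm
    have hT : ∑ k ∈ Finset.Icc 1 m, (k : ℝ) ^ (-σ) ≤ (m : ℝ) ^ (1 - σ) / (1 - σ) :=
      tele_sum hσ hlt m
    have hm2 : ((m:ℕ):ℝ) ^ (1 - σ) ≤ (B * r) ^ (1 - σ) :=
      Real.rpow_le_rpow (Nat.cast_nonneg m) (hmle r hr) h1σ.le
    have hprod : (B * r) ^ σ * (B * r) ^ (1 - σ) = B * r := by
      rw [← Real.rpow_add hBrpos]
      norm_num
    have hchain : ∑ q ∈ (Finset.range (Nat.ceil (B * (r : ℝ)) + 1)).filter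
          (fun q => r < q ∧ (q : ℝ) < B * (r : ℝ)),
        (Real.log ((q : ℝ) / (r : ℝ))) ^ (-σ) ≤ (B * r) / (1 - σ) := by
      refine (main r hr).trans ?_
      calc (B * r) ^ σ * ∑ k ∈ Finset.Icc 1 m, (k : ℝ) ^ (-σ)
          ≤ (B * r) ^ σ * ((m : ℝ) ^ (1 - σ) / (1 - σ)) :=
            mul_le_mul_of_nonneg_left hT hP.le
        _ ≤ (B * r) ^ σ * ((B * r) ^ (1 - σ) / (1 - σ)) := by
            apply mul_le_mul_of_nonneg_left _ hP.le
            gcongr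
        _ = (B * r) / (1 - σ) := by rw [mul_div_assoc', hprod]
    rw [if_neg (by linarith : ¬ σ = 1)]
    have hrσ : (0:ℝ) ≤ (r:ℝ) ^ σ := Real.rpow_nonneg hrpos.le _
    have hid : (B * r) / (1 - σ) = (B / (1 - σ)) * r := by ring
    have hd : (0:ℝ) < B / (1 - σ) := by positivity
    nlinarith [hchain, hid, mul_nonneg (by positivity : (0:ℝ) ≤ B/(1-σ)+1) hrσ, hrpos, hd]
  · -- σ = 1
    subst heq
    have hlB : 0 < Real.log B := Real.log_pos hB
    refine ⟨B * (1 + Real.log B), by positivity, fun r hr => ?_⟩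
    have hrpos : (0:ℝ) < r := by exact_mod_cast (by omega : 0 < r)
    have hr1 : (1:ℝ) ≤ r := by exact_mod_cast (by omega : 1 ≤ r)
    have hBrpos : (0:ℝ) < B * r := by positivity
    have hlr : 0 ≤ Real.log r := Real.log_nonneg hr1
    set m := Nat.ceil (B * (r:ℝ)) - r with hm
    have hT : ∑ k ∈ Finset.Icc 1 m, (k : ℝ) ^ (-(1:ℝ)) ≤ 1 + Real.log m := by
      have h1 : ∑ k ∈ Finset.Icc 1 m, (k : ℝ) ^ (-(1:ℝ)) = ((harmonic m : ℚ) : ℝ) := by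
        rw [harmonic_eq_sum_Icc]
        push_cast
        refine Finset.sum_congr rfl fun k _ => ?_
        rw [Real.rpow_neg_one]
      rw [h1]; exact harmonic_le_one_add_log m
    have hlogm : Real.log m ≤ Real.log (B * r) := by
      rcases Nat.eq_zero_or_pos m with h0 | hpos
      · rw [h0]; simp
        exact Real.log_nonneg (by nlinarith)
      · exact Real.log_le_log (by exact_mod_cast hpos) (hmle r hr)
    have hlogBr : Real.log (B * r) = Real.log B + Real.log r :=
      Real.log_mul (by linarith) (by linarith)
    have hmain := main r hr
    rw [Real.rpow_one] at hmain
    refine hmain.trans ?_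
    rw [if_pos rfl, Real.rpow_one]
    calc (B * r) * ∑ k ∈ Finset.Icc 1 m, (k : ℝ) ^ (-(1:ℝ))
        ≤ (B * r) * (1 + Real.log B + Real.log r) := by
          apply mul_le_mul_of_nonneg_left _ hBrpos.le
          linarith [hT, hlogm, hlogBr]
      _ ≤ B * (1 + Real.log B) * ((r:ℝ) + 1 * r * Real.log r + (r:ℝ)) := by
          nlinarith [mul_nonneg (mul_nonneg hB0.le hrpos.le) (mul_nonneg hlr hlB.le),
            mul_pos hB0 hrpos, mul_nonneg (mul_nonneg hB0.le hrpos.le) hlr,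
            mul_nonneg (mul_nonneg hB0.le hrpos.le) hlB.le]
  · -- σ > 1
    have hsum : Summable (fun n : ℕ => (n : ℝ) ^ (-σ)) :=
      Real.summable_nat_rpow.mpr (by linarith)
    set E := ∑' n : ℕ, (n : ℝ) ^ (-σ) with hE
    have hEnn : 0 ≤ E := tsum_nonneg (fun n => Real.rpow_nonneg (Nat.cast_nonneg n) _)
    refine ⟨B ^ σ * (E + 1), by positivity, fun r hr => ?_⟩
    have hrpos : (0:ℝ) < r := by exact_mod_cast (by omega : 0 < r)
    have hBrpos : (0:ℝ) < B * r := by positivity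
    set m := Nat.ceil (B * (r:ℝ)) - r with hm
    have hT : ∑ k ∈ Finset.Icc 1 m, (k : ℝ) ^ (-σ) ≤ E :=
      Summable.sum_le_tsum _ (fun n _ => Real.rpow_nonneg (Nat.cast_nonneg n) _) hsum
    refine (main r hr).trans ?_
    calc (B * r) ^ σ * ∑ k ∈ Finset.Icc 1 m, (k : ℝ) ^ (-σ)
        ≤ (B * r) ^ σ * (E + 1) :=
          mul_le_mul_of_nonneg_left (hT.trans (by linarith)) (Real.rpow_nonneg hBrpos.le _)
      _ = (B ^ σ * (E + 1)) * (r:ℝ) ^ σ := by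
          rw [Real.mul_rpow hB0.le hrpos.le]; ring
      _ ≤ (B ^ σ * (E + 1)) * ((r:ℝ) + (if σ = 1 then 1 else 0) * r * Real.log r + (r:ℝ) ^ σ) := by
          apply mul_le_mul_of_nonneg_left _ (by positivity)
          rw [if_neg (by linarith : ¬ σ = 1)]
          linarith [hrpos]
end

section
/- Let k ≥ 1, let b₁, …, b_k be positive real numbers, let 1 < β < s < t < γ, and set B_j = max(b_j^{−1/β}, b_j^{−1/γ}) for j ∈ {1,…,k}. Define B(s,t) = {α ∈ [s, t] : there are infinitely many tuples (y, x₁, …, x_k) ∈ PS(α)^{k+1} with y = b₁x₁ + ⋯ + b_k x_k and #{y, x₁, …, x_k} = k + 1}. Then there exists M₀ > 0 such that for every integer M ≥ M₀ and every α ∈ B(s,t), there are infinitely many tuples (r, q₁, …, q_k) ∈ ℕ^{k+1} with r ≥ M, 1 ≤ q_j < B_j r and q_j ≠ r for every j ∈ {1,…,k}, such that |b₁(q₁/r)^α + ⋯ + b_k(q_k/r)^α − 1| ≤ r^{−β}. -/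
open MeasureTheory

/-- Auxiliary gap `ε` used in the proof of `statement12`. -/
noncomputable def epsAux (β s t γ b : ℝ) : ℝ :=
  if b < 1 then b ^ (-s / β) - b⁻¹ else b ^ (-t / γ) - b⁻¹

lemma epsAux_nonneg {β s t γ b : ℝ} (hb : 0 < b) (hβ : 0 < β) (hβs : β ≤ s)
    (hγ : 0 < γ) (htγ : t ≤ γ) : 0 ≤ epsAux β s t γ b := by
  unfold epsAux
  by_cases hb1 : b < 1
  · rw [if_pos hb1]
    have h : b ^ (-1 : ℝ) ≤ b ^ (-s / β) := by
      apply Real.rpow_le_rpow_of_exponent_ge hb hb1.le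
      rw [neg_div, neg_le_neg_iff]
      exact (one_le_div hβ).mpr hβs
    rw [Real.rpow_neg_one] at h
    linarith
  · rw [if_neg hb1]
    push_neg at hb1
    have h : b ^ (-1 : ℝ) ≤ b ^ (-t / γ) := by
      apply Real.rpow_le_rpow_of_exponent_le hb1
      rw [neg_div, neg_le_neg_iff]
      exact (div_le_one hγ).mpr htγ
    rw [Real.rpow_neg_one] at h
    linarith

lemma epsAux_pos {β s t γ b : ℝ} (hb : 0 < b) (hb1 : b ≠ 1) (hβ : 0 < β) (hβs : β < s)
    (ht : 0 < t) (htγ : t < γ) : 0 < epsAux β s t γ b := by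
  unfold epsAux
  by_cases hblt : b < 1
  · rw [if_pos hblt]
    have h : b ^ (-1 : ℝ) < b ^ (-s / β) := by
      apply Real.rpow_lt_rpow_of_exponent_gt hb hblt
      rw [neg_div, neg_lt_neg_iff]
      exact (one_lt_div hβ).mpr hβs
    rw [Real.rpow_neg_one] at h
    linarith
  · rw [if_neg hblt]
    push_neg at hblt
    have hb1' : 1 < b := lt_of_le_of_ne hblt (Ne.symm hb1)
    have h : b ^ (-1 : ℝ) < b ^ (-t / γ) := by
      apply Real.rpow_lt_rpow_of_exponent_lt hb1'
      rw [neg_div, neg_lt_neg_iff]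
      exact (div_lt_one (ht.trans htγ)).mpr htγ
    rw [Real.rpow_neg_one] at h
    linarith

lemma epsAux_le {β s t γ b α : ℝ} (hb : 0 < b) (hβ : 0 < β) (hγ : 0 < γ)
    (hsα : s ≤ α) (hαt : α ≤ t) (hα0 : 0 ≤ α) :
    b⁻¹ + epsAux β s t γ b ≤ (max (b ^ (-1 / β)) (b ^ (-1 / γ))) ^ α := by
  unfold epsAux
  by_cases hb1 : b < 1
  · rw [if_pos hb1]
    have key : b ^ (-s / β) ≤ (b ^ (-1 / β)) ^ α := by
      rw [← Real.rpow_mul hb.le]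
      apply Real.rpow_le_rpow_of_exponent_ge hb hb1.le
      have e : (-1 / β) * α = -(α / β) := by ring
      rw [e, neg_div, neg_le_neg_iff]
      exact (div_le_div_iff_of_pos_right hβ).mpr hsα
    have key2 : (b ^ (-1 / β)) ^ α ≤ (max (b ^ (-1 / β)) (b ^ (-1 / γ))) ^ α :=
      Real.rpow_le_rpow (Real.rpow_nonneg hb.le _) (le_max_left _ _) hα0
    linarith
  · rw [if_neg hb1]
    push_neg at hb1
    have key : b ^ (-t / γ) ≤ (b ^ (-1 / γ)) ^ α := by
      rw [← Real.rpow_mul hb.le]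
      apply Real.rpow_le_rpow_of_exponent_le hb1
      have e : (-1 / γ) * α = -(α / γ) := by ring
      rw [e, neg_div, neg_le_neg_iff]
      exact (div_le_div_iff_of_pos_right hγ).mpr hαt
    have key2 : (b ^ (-1 / γ)) ^ α ≤ (max (b ^ (-1 / β)) (b ^ (-1 / γ))) ^ α :=
      Real.rpow_le_rpow (Real.rpow_nonneg hb.le _) (le_max_right _ _) hα0
    linarith

lemma floor_rpow_facts {α : ℝ} (hα : 0 ≤ α) {n : ℕ} (hn : 1 ≤ n) :
    (1 : ℤ) ≤ ⌊(n : ℝ) ^ α⌋ ∧ ((⌊(n : ℝ) ^ α⌋ : ℝ) ≤ (n : ℝ) ^ α) ∧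
      (n : ℝ) ^ α < (⌊(n : ℝ) ^ α⌋ : ℝ) + 1 := by
  have h1 : (1 : ℝ) ≤ (n : ℝ) := by exact_mod_cast hn
  exact ⟨Int.le_floor.mpr (by push_cast; exact Real.one_le_rpow h1 hα),
    Int.floor_le _, Int.lt_floor_add_one _⟩

/-- Let `k ≥ 1`, `b₁, …, b_k > 0`, `1 < β < s < t < γ`, and
`B_j = max(b_j^{−1/β}, b_j^{−1/γ})`. There is `M₀ > 0` such that for every integer
`M ≥ M₀` and every `α ∈ [s,t]` for which `y = b₁x₁ + ⋯ + b_kx_k` has infinitely many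
solutions in `PS(α)^{k+1}` with all `k + 1` entries distinct, there are infinitely
many tuples `(r, q₁, …, q_k) ∈ ℕ^{k+1}` with `r ≥ M`, `1 ≤ q_j < B_j r`, `q_j ≠ r`,
and `|b₁(q₁/r)^α + ⋯ + b_k(q_k/r)^α − 1| ≤ r^{−β}`. -/
theorem statement12 (k : ℕ) (hk : 1 ≤ k) (b : Fin k → ℝ) (hb : ∀ j, 0 < b j)
    (β s t γ : ℝ) (h1 : 1 < β) (h2 : β < s) (h3 : s < t) (h4 : t < γ) :
    ∃ M₀ : ℝ, 0 < M₀ ∧ ∀ M : ℕ, M₀ ≤ (M : ℝ) → ∀ α ∈ Set.Icc s t,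
      {sol : ℤ × (Fin k → ℤ) |
        sol.1 ∈ PS α ∧ (∀ i, sol.2 i ∈ PS α) ∧
        (sol.1 : ℝ) = ∑ i, b i * (sol.2 i : ℝ) ∧
        Function.Injective (Fin.cons sol.1 sol.2 : Fin (k + 1) → ℤ)}.Infinite →
      {T : ℕ × (Fin k → ℕ) |
        M ≤ T.1 ∧
        (∀ j, 1 ≤ T.2 j ∧
          (T.2 j : ℝ) < max (b j ^ (-1 / β)) (b j ^ (-1 / γ)) * (T.1 : ℝ) ∧
          T.2 j ≠ T.1) ∧
        |∑ j, b j * ((T.2 j : ℝ) / (T.1 : ℝ)) ^ α - 1| ≤ (T.1 : ℝ) ^ (-β)}.Infinite := by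
  classical
  have hβ0 : (0 : ℝ) < β := lt_trans one_pos h1
  have ht0 : (0 : ℝ) < t := lt_trans (lt_trans (lt_trans one_pos h1) h2) h3
  have hγ0 : (0 : ℝ) < γ := lt_trans ht0 h4
  set C : ℝ := 1 + ∑ i, b i with hCdef
  have hsum_nonneg : (0 : ℝ) ≤ ∑ i, b i := Finset.sum_nonneg fun i _ => (hb i).le
  have hC1 : (1 : ℝ) ≤ C := by simp only [hCdef]; linarith
  have heps_nonneg : ∀ i, (0 : ℝ) ≤ (epsAux β s t γ (b i))⁻¹ := fun i =>
    inv_nonneg.mpr (epsAux_nonneg (hb i) hβ0 h2.le hγ0 h4.le)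
  refine ⟨max 1 (C ^ (s - β)⁻¹) + ∑ i, (epsAux β s t γ (b i))⁻¹, ?_, ?_⟩
  · have hh1 : (1 : ℝ) ≤ max 1 (C ^ (s - β)⁻¹) := le_max_left _ _
    have hh2 : (0 : ℝ) ≤ ∑ i, (epsAux β s t γ (b i))⁻¹ :=
      Finset.sum_nonneg fun i _ => heps_nonneg i
    linarith
  intro M hM α hα hS
  obtain ⟨hsα, hαt⟩ := hα
  have hα1 : (1 : ℝ) < α := lt_of_lt_of_le (h1.trans h2) hsα
  have hα0 : (0 : ℝ) ≤ α := by linarith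
  have hαβ : β < α := lt_of_lt_of_le h2 hsα
  -- choice function extracting n from membership in PS α
  let F : ℤ → ℕ := fun z => if h : z ∈ PS α then h.choose else 0
  have hF : ∀ z ∈ PS α, 1 ≤ F z ∧ z = ⌊(F z : ℝ) ^ α⌋ := by
    intro z hz
    simp only [F, dif_pos hz]
    exact ⟨hz.choose_spec.1, hz.choose_spec.2⟩
  set S : Set (ℤ × (Fin k → ℤ)) :=
    {sol : ℤ × (Fin k → ℤ) |
        sol.1 ∈ PS α ∧ (∀ i, sol.2 i ∈ PS α) ∧
        (sol.1 : ℝ) = ∑ i, b i * (sol.2 i : ℝ) ∧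
        Function.Injective (Fin.cons sol.1 sol.2 : Fin (k + 1) → ℤ)} with hSdef
  let g : ℤ × (Fin k → ℤ) → ℕ × (Fin k → ℕ) := fun sol => (F sol.1, fun i => F (sol.2 i))
  set Y : ℤ := ⌊(M : ℝ) ^ t⌋ with hYdef
  -- the bad set (small m) is finite
  have hbadfin : {sol ∈ S | (g sol).1 < M}.Finite := by
    apply Set.Finite.subset (((Set.finite_Icc (1 : ℤ) Y).prod
      (Set.finite_Icc (fun _ => (1 : ℤ)) (fun i => ⌈(Y : ℝ) / b i⌉))))
    rintro ⟨y, x⟩ ⟨hsol, hsmall⟩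
    have hyx : (y : ℝ) = ∑ i, b i * (x i : ℝ) := hsol.2.2.1
    have hym' := hF _ hsol.1
    have hm1 : 1 ≤ F y := hym'.1
    have hym : y = ⌊(F y : ℝ) ^ α⌋ := hym'.2
    have hmM : F y < M := hsmall
    have hyfacts := floor_rpow_facts hα0 hm1
    rw [← hym] at hyfacts
    have hy1 : (1 : ℤ) ≤ y := hyfacts.1
    have hy_le : (y : ℝ) ≤ (F y : ℝ) ^ α := hyfacts.2.1
    have hmr1 : (1 : ℝ) ≤ (F y : ℝ) := by exact_mod_cast hm1
    have hmα_le : (F y : ℝ) ^ α ≤ (M : ℝ) ^ t := by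
      calc (F y : ℝ) ^ α ≤ (F y : ℝ) ^ t := Real.rpow_le_rpow_of_exponent_le hmr1 hαt
        _ ≤ (M : ℝ) ^ t := Real.rpow_le_rpow (by positivity) (by exact_mod_cast hmM.le) ht0.le
    have hyY : y ≤ Y := by
      rw [hYdef]
      exact Int.le_floor.mpr (hy_le.trans hmα_le)
    have hx1 : ∀ i, (1 : ℤ) ≤ x i := by
      intro i
      have hxi := hF _ (hsol.2.1 i)
      have := floor_rpow_facts hα0 hxi.1
      rw [← hxi.2] at this
      exact this.1
    have hxy : ∀ i, b i * (x i : ℝ) ≤ (y : ℝ) := by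
      intro i
      rw [hyx]
      apply Finset.single_le_sum (f := fun i => b i * (x i : ℝ)) _ (Finset.mem_univ i)
      intro j _
      have hj1 : (1 : ℝ) ≤ (x j : ℝ) := by exact_mod_cast hx1 j
      have hj2 := (hb j).le
      positivity
    constructor
    · exact Set.mem_Icc.mpr ⟨hy1, hyY⟩
    · rw [Set.mem_Icc]
      refine ⟨fun i => hx1 i, fun i => ?_⟩
      have h1' : (x i : ℝ) ≤ (y : ℝ) / b i := (le_div_iff₀' (hb i)).mpr (hxy i)
      have hyY' : (y : ℝ) ≤ (Y : ℝ) := by exact_mod_cast hyY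
      have h2' : (y : ℝ) / b i ≤ (Y : ℝ) / b i := (div_le_div_iff_of_pos_right (hb i)).mpr hyY'
      have := (h1'.trans h2').trans (Int.le_ceil _)
      exact_mod_cast this
  -- the good set is infinite
  have hgoodinf : (S \ {sol ∈ S | (g sol).1 < M}).Infinite := hS.diff hbadfin
  -- g is injective on S
  have hginj : Set.InjOn g (S \ {sol ∈ S | (g sol).1 < M}) := by
    rintro ⟨y1, x1⟩ hs1 ⟨y2, x2⟩ hs2 heq
    have hym1 : y1 = ⌊(F y1 : ℝ) ^ α⌋ := (hF _ hs1.1.1).2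
    have hym2 : y2 = ⌊(F y2 : ℝ) ^ α⌋ := (hF _ hs2.1.1).2
    have hx1 : ∀ i, x1 i = ⌊(F (x1 i) : ℝ) ^ α⌋ := fun i => (hF _ (hs1.1.2.1 i)).2
    have hx2 : ∀ i, x2 i = ⌊(F (x2 i) : ℝ) ^ α⌋ := fun i => (hF _ (hs2.1.2.1 i)).2
    have he1 : F y1 = F y2 := congrArg Prod.fst heq
    have he2 : ∀ i, F (x1 i) = F (x2 i) := fun i => congrFun (congrArg Prod.snd heq) i
    have hy12 : y1 = y2 := by rw [hym1, hym2, he1]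
    refine Prod.ext hy12 (funext fun i => ?_)
    show x1 i = x2 i
    rw [hx1 i, hx2 i, he2 i]
  -- conclude via image
  apply Set.Infinite.mono (s := g '' (S \ {sol ∈ S | (g sol).1 < M}))
  swap
  · exact Set.Infinite.image hginj hgoodinf
  rintro T ⟨⟨y, x⟩, ⟨hsol, hnotbad⟩, rfl⟩
  have hyx : (y : ℝ) = ∑ i, b i * (x i : ℝ) := hsol.2.2.1
  have hinj : Function.Injective (Fin.cons y x : Fin (k + 1) → ℤ) := hsol.2.2.2
  have hym' := hF _ hsol.1
  have hm1 : 1 ≤ F y := hym'.1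
  have hym : y = ⌊(F y : ℝ) ^ α⌋ := hym'.2
  have hxF : ∀ i, 1 ≤ F (x i) ∧ x i = ⌊(F (x i) : ℝ) ^ α⌋ := fun i => hF _ (hsol.2.1 i)
  have hMm : M ≤ F y := by
    by_contra hcon
    exact hnotbad ⟨hsol, by push_neg at hcon; exact hcon⟩
  have hmr1 : (1 : ℝ) ≤ (F y : ℝ) := by exact_mod_cast hm1
  have hmr0 : (0 : ℝ) < (F y : ℝ) := lt_of_lt_of_le one_pos hmr1
  have hmα0 : (0 : ℝ) < (F y : ℝ) ^ α := Real.rpow_pos_of_pos hmr0 _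
  -- facts about y and x
  have hyfacts := floor_rpow_facts hα0 hm1
  rw [← hym] at hyfacts
  have hy1 : (1 : ℤ) ≤ y := hyfacts.1
  have hy_le : (y : ℝ) ≤ (F y : ℝ) ^ α := hyfacts.2.1
  have hy_gt : (F y : ℝ) ^ α < (y : ℝ) + 1 := hyfacts.2.2
  have hxfacts : ∀ i, (1 : ℤ) ≤ x i ∧ ((x i : ℝ) ≤ (F (x i) : ℝ) ^ α) ∧
      (F (x i) : ℝ) ^ α < (x i : ℝ) + 1 := by
    intro i
    have := floor_rpow_facts hα0 (hxF i).1
    rw [← (hxF i).2] at this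
    exact this
  have hxy : ∀ i, b i * (x i : ℝ) ≤ (y : ℝ) := by
    intro i
    rw [hyx]
    apply Finset.single_le_sum (f := fun i => b i * (x i : ℝ)) _ (Finset.mem_univ i)
    intro j _
    have h1' : (1 : ℝ) ≤ (x j : ℝ) := by exact_mod_cast (hxfacts j).1
    have h2' := (hb j).le
    positivity
  -- y ≠ x i from injectivity
  have hynex : ∀ i, y ≠ x i := by
    intro i hcon
    have h0 : (Fin.cons y x : Fin (k + 1) → ℤ) 0 = y := Fin.cons_zero _ _
    have hsc : (Fin.cons y x : Fin (k + 1) → ℤ) i.succ = x i := Fin.cons_succ _ _ _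
    have := hinj (a₁ := 0) (a₂ := i.succ) (by rw [h0, hsc, hcon])
    exact (Fin.succ_ne_zero i) this.symm
  -- largeness of m
  have hMr : (max 1 (C ^ (s - β)⁻¹) + ∑ i, (epsAux β s t γ (b i))⁻¹ : ℝ) ≤ (F y : ℝ) := by
    refine hM.trans ?_
    exact_mod_cast hMm
  have hsum_inv_nonneg : (0 : ℝ) ≤ ∑ i, (epsAux β s t γ (b i))⁻¹ :=
    Finset.sum_nonneg fun i _ => heps_nonneg i
  have hsβ : (0 : ℝ) < s - β := by linarith
  have hmC : C ≤ (F y : ℝ) ^ (α - β) := by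
    have h1' : C ^ (s - β)⁻¹ ≤ (F y : ℝ) :=
      le_trans (le_trans (le_max_right _ _) (by linarith)) hMr
    have e1 : (C ^ (s - β)⁻¹) ^ (s - β) = C := by
      rw [← Real.rpow_mul (by linarith), inv_mul_cancel₀ hsβ.ne', Real.rpow_one]
    have e2 : (C ^ (s - β)⁻¹) ^ (s - β) ≤ (F y : ℝ) ^ (s - β) :=
      Real.rpow_le_rpow (Real.rpow_nonneg (by linarith) _) h1' hsβ.le
    have e3 : (F y : ℝ) ^ (s - β) ≤ (F y : ℝ) ^ (α - β) :=
      Real.rpow_le_rpow_of_exponent_le hmr1 (by linarith)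
    linarith [e1 ▸ e2]
  have heps_m : ∀ i, (epsAux β s t γ (b i))⁻¹ ≤ (F y : ℝ) := by
    intro i
    have hsingle : (epsAux β s t γ (b i))⁻¹ ≤ ∑ j, (epsAux β s t γ (b j))⁻¹ :=
      Finset.single_le_sum (fun j _ => heps_nonneg j) (Finset.mem_univ i)
    have hmax1 : (1 : ℝ) ≤ max 1 (C ^ (s - β)⁻¹) := le_max_left _ _
    linarith
  have hm_self : (F y : ℝ) ≤ (F y : ℝ) ^ α := by
    have := Real.rpow_le_rpow_of_exponent_le hmr1 (le_of_lt hα1)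
    rwa [Real.rpow_one] at this
  -- verify membership in the target set
  simp only [Set.mem_setOf_eq]
  refine ⟨hMm, fun j => ⟨(hxF j).1, ?_, ?_⟩, ?_⟩
  · -- (n j : ℝ) < B_j * m
    show (F (x j) : ℝ) < max (b j ^ (-1 / β)) (b j ^ (-1 / γ)) * (F y : ℝ)
    have hnj0 : (0 : ℝ) ≤ (F (x j) : ℝ) := Nat.cast_nonneg _
    by_cases hbj : b j = 1
    · have hxley : (x j : ℝ) ≤ (y : ℝ) := by
        have := hxy j; rwa [hbj, one_mul] at this
      have hxley' : x j < y := lt_of_le_of_ne (by exact_mod_cast hxley) (Ne.symm (hynex j))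
      have hstep : (x j : ℝ) + 1 ≤ (y : ℝ) := by exact_mod_cast hxley'
      have hnlt : (F (x j) : ℝ) ^ α < (F y : ℝ) ^ α :=
        lt_of_lt_of_le (hxfacts j).2.2 (hstep.trans hy_le)
      have hnm : (F (x j) : ℝ) < (F y : ℝ) := by
        by_contra hcon
        push_neg at hcon
        exact absurd (Real.rpow_le_rpow hmr0.le hcon hα0) (not_le.mpr hnlt)
      simpa [hbj, Real.one_rpow] using hnm
    · set Bj : ℝ := max (b j ^ (-1 / β)) (b j ^ (-1 / γ)) with hBjdef
      have hBj0 : (0 : ℝ) ≤ Bj := le_trans (Real.rpow_nonneg (hb j).le _) (le_max_left _ _)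
      have heps_pos := epsAux_pos (hb j) hbj hβ0 h2 ht0 h4
      have hepsm1 : (1 : ℝ) ≤ epsAux β s t γ (b j) * (F y : ℝ) := by
        have := mul_le_mul_of_nonneg_left (heps_m j) heps_pos.le
        rwa [mul_inv_cancel₀ heps_pos.ne'] at this
      have hepsmα : (1 : ℝ) ≤ epsAux β s t γ (b j) * (F y : ℝ) ^ α := by
        have := mul_le_mul_of_nonneg_left hm_self heps_pos.le
        linarith
      have hBjα : (b j)⁻¹ + epsAux β s t γ (b j) ≤ Bj ^ α :=
        epsAux_le (hb j) hβ0 hγ0 hsα hαt hα0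
      have hchain : b j * (F (x j) : ℝ) ^ α < b j * (Bj * (F y : ℝ)) ^ α := by
        have e1 : b j * (F (x j) : ℝ) ^ α < b j * ((x j : ℝ) + 1) :=
          (mul_lt_mul_iff_right₀ (hb j)).mpr (hxfacts j).2.2
        have e2 : b j * ((x j : ℝ) + 1) ≤ (y : ℝ) + b j := by
          have := hxy j; linarith
        have e3 : (y : ℝ) + b j ≤ (F y : ℝ) ^ α + b j := by linarith
        have e4 : (F y : ℝ) ^ α + b j ≤ b j * (Bj * (F y : ℝ)) ^ α := by
          rw [Real.mul_rpow hBj0 hmr0.le]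
          have e5 : b j * ((b j)⁻¹ + epsAux β s t γ (b j)) * (F y : ℝ) ^ α
              ≤ b j * (Bj ^ α * (F y : ℝ) ^ α) := by
            rw [← mul_assoc]
            apply mul_le_mul_of_nonneg_right _ hmα0.le
            exact mul_le_mul_of_nonneg_left hBjα (hb j).le
          have e6 : b j * ((b j)⁻¹ + epsAux β s t γ (b j)) * (F y : ℝ) ^ α
              = (F y : ℝ) ^ α + b j * (epsAux β s t γ (b j) * (F y : ℝ) ^ α) := by
            have hbinv : b j * ((b j)⁻¹ + epsAux β s t γ (b j))
                = 1 + b j * epsAux β s t γ (b j) := by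
              rw [mul_add, mul_inv_cancel₀ (hb j).ne']
            rw [hbinv]
            ring
          have e7 : (F y : ℝ) ^ α + b j
              ≤ (F y : ℝ) ^ α + b j * (epsAux β s t γ (b j) * (F y : ℝ) ^ α) := by
            have := mul_le_mul_of_nonneg_left hepsmα (hb j).le
            linarith
          linarith [e6 ▸ e5]
        linarith
      have hpow : (F (x j) : ℝ) ^ α < (Bj * (F y : ℝ)) ^ α :=
        lt_of_mul_lt_mul_left hchain (hb j).le
      by_contra hcon
      push_neg at hcon
      exact absurd (Real.rpow_le_rpow (by positivity) hcon hα0) (not_le.mpr hpow)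
  · -- n j ≠ m
    show F (x j) ≠ F y
    intro hcon
    apply hynex j
    have hthis : x j = ⌊(F (x j) : ℝ) ^ α⌋ := (hxF j).2
    rw [hcon, ← hym] at hthis
    exact hthis.symm
  · -- the approximation inequality
    show |∑ j, b j * ((F (x j) : ℝ) / (F y : ℝ)) ^ α - 1| ≤ (F y : ℝ) ^ (-β)
    set A : ℝ := ∑ j, b j * (F (x j) : ℝ) ^ α with hAdef
    have hsplit : A - (F y : ℝ) ^ α
        = (∑ j, b j * ((F (x j) : ℝ) ^ α - (x j : ℝ))) + ((y : ℝ) - (F y : ℝ) ^ α) := by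
      have e : ∑ j, b j * ((F (x j) : ℝ) ^ α - (x j : ℝ))
          = A - ∑ j, b j * (x j : ℝ) := by
        rw [hAdef, ← Finset.sum_sub_distrib]
        exact Finset.sum_congr rfl fun j _ => by ring
      rw [e, ← hyx]
      ring
    have hup : A - (F y : ℝ) ^ α ≤ C := by
      have hterm : ∀ j ∈ Finset.univ, b j * ((F (x j) : ℝ) ^ α - (x j : ℝ)) ≤ b j := by
        intro j _
        have h1' : (F (x j) : ℝ) ^ α - (x j : ℝ) ≤ 1 := by linarith [(hxfacts j).2.2]
        calc b j * ((F (x j) : ℝ) ^ α - (x j : ℝ)) ≤ b j * 1 :=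
              mul_le_mul_of_nonneg_left h1' (hb j).le
          _ = b j := mul_one _
      have hsum_le : ∑ j, b j * ((F (x j) : ℝ) ^ α - (x j : ℝ)) ≤ ∑ j, b j :=
        Finset.sum_le_sum hterm
      have hy0 : (y : ℝ) - (F y : ℝ) ^ α ≤ 0 := by linarith
      rw [hsplit]
      simp only [hCdef]
      linarith
    have hlo : -C ≤ A - (F y : ℝ) ^ α := by
      have hsum_nn : (0 : ℝ) ≤ ∑ j, b j * ((F (x j) : ℝ) ^ α - (x j : ℝ)) := by
        apply Finset.sum_nonneg
        intro j _
        have ha := (hxfacts j).2.1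
        have hc := (hb j).le
        nlinarith
      rw [hsplit]
      simp only [hCdef]
      linarith
    have habs : |A - (F y : ℝ) ^ α| ≤ C := abs_le.mpr ⟨hlo, hup⟩
    have hre : ∑ j, b j * ((F (x j) : ℝ) / (F y : ℝ)) ^ α = A / (F y : ℝ) ^ α := by
      rw [hAdef, Finset.sum_div]
      apply Finset.sum_congr rfl
      intro j _
      rw [Real.div_rpow (Nat.cast_nonneg _) hmr0.le, mul_div_assoc]
    have hre2 : ∑ j, b j * ((F (x j) : ℝ) / (F y : ℝ)) ^ α - 1
        = (A - (F y : ℝ) ^ α) / (F y : ℝ) ^ α := by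
      rw [hre, sub_div, div_self hmα0.ne']
    rw [hre2, abs_div, abs_of_pos hmα0, div_le_iff₀ hmα0]
    calc |A - (F y : ℝ) ^ α| ≤ C := habs
      _ ≤ (F y : ℝ) ^ (α - β) := hmC
      _ = (F y : ℝ) ^ (-β) * (F y : ℝ) ^ α := by
        rw [← Real.rpow_add hmr0]; ring_nf
end

section
/- Let k ≥ 1, let b₁, …, b_k > 0 be real numbers, and let 1 < β < s < t with β > k + 1. For integers r ≥ 1 and q = (q₁, …, q_k) ∈ ℕ^k, define J(q; r) = {α ∈ [s, t] : |b₁(q₁/r)^α + ⋯ + b_k(q_k/r)^α − 1| ≤ r^{−β}}. Then for every real σ with (k+1)/β < σ < 1 and every integer M ≥ 1, the series ∑_{r ≥ M} ∑_{q ∈ {1,…,r−1}^k} (diam J(q; r))^σ converges. -/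
open Finset Real

set_option maxHeartbeats 1000000


lemma aux_one_sub_rpow (x h T : ℝ) (hx0 : 0 < x) (hx1 : x ≤ 1) (hh : 0 ≤ h)
    (hT : 0 ≤ T) (hhT : h ≤ T) :
    h * (1 - x) / (1 + T) ≤ 1 - x ^ h := by
  set u : ℝ := h * (1 - x) with hu
  have hu0 : 0 ≤ u := mul_nonneg hh (by linarith)
  have huT : u ≤ T := by
    calc u ≤ h * 1 := by nlinarith
    _ ≤ T := by linarith
  have h1 : x ^ h ≤ Real.exp (-u) := by
    rw [← Real.log_le_iff_le_exp (Real.rpow_pos_of_pos hx0 h)]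
    rw [Real.log_rpow hx0]
    have := Real.log_le_sub_one_of_pos hx0
    nlinarith
  have h2 : Real.exp (-u) ≤ 1 / (1 + u) := by
    rw [Real.exp_neg, one_div]
    exact inv_anti₀ (by linarith) (by linarith [Real.add_one_le_exp u])
  have h3 : 1 - 1 / (1 + u) = u / (1 + u) := by
    field_simp
    ring
  have h4 : u / (1 + T) ≤ u / (1 + u) := by
    apply div_le_div_of_nonneg_left hu0 (by linarith) (by linarith)
  calc u / (1 + T) ≤ u / (1 + u) := h4
    _ = 1 - 1 / (1 + u) := h3.symm
    _ ≤ 1 - x ^ h := by linarith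

/-- Partial sums of `a^{-σ}`. -/
lemma aux_sum_rpow (σ : ℝ) (hσ0 : 0 < σ) (hσ1 : σ < 1) (n : ℕ) :
    ∑ a ∈ Finset.Icc 1 n, (a : ℝ) ^ (-σ) ≤ (n : ℝ) ^ (1 - σ) / (1 - σ) := by
  have hpos : (0:ℝ) < 1 - σ := by linarith
  induction n with
  | zero => simp [Real.zero_rpow (by linarith : (1:ℝ) - σ ≠ 0)]
  | succ n ih =>
    rw [Finset.sum_Icc_succ_top (by omega : 1 ≤ n + 1)]
    have key : (1 - σ) * ((n:ℝ)+1) ^ (-σ) ≤ ((n:ℝ)+1) ^ (1-σ) - (n : ℝ) ^ (1-σ) := by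
      set y : ℝ := (n : ℝ) + 1 with hy
      have hy1 : (1:ℝ) ≤ y := by rw [hy]; have : (0:ℝ) ≤ (n:ℝ) := Nat.cast_nonneg n; linarith
      have hy0 : (0:ℝ) < y := by linarith
      have h1y : 1/y ≤ 1 := by rw [div_le_one hy0]; exact hy1
      have hber : (1 + (-1/y)) ^ (1-σ) ≤ 1 + (1-σ) * (-1/y) := by
        apply rpow_one_add_le_one_add_mul_self
        · rw [neg_div]; linarith
        · linarith
        · linarith
      have hin : (n : ℝ) = y * (1 + (-1/y)) := by
        field_simp
        rw [hy]; ring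
      have hmul : (n : ℝ) ^ (1-σ) ≤ y ^ (1-σ) * (1 + (1-σ) * (-1/y)) := by
        rw [hin, Real.mul_rpow (le_of_lt hy0) (by rw [neg_div]; linarith)]
        exact mul_le_mul_of_nonneg_left hber (Real.rpow_nonneg (le_of_lt hy0) _)
      have hsplit : y ^ (1-σ) * (1 + (1-σ) * (-1/y)) = y ^ (1-σ) - (1-σ) * y ^ (-σ) := by
        have hd : y ^ (1-σ) / y = y ^ (-σ) := by
          rw [← Real.rpow_sub_one (ne_of_gt hy0)]
          ring_nf
        rw [← hd]
        field_simp
        ring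
      rw [hsplit] at hmul
      linarith
    have h5 : ((n:ℝ)+1) ^ (-σ) ≤ (((n:ℝ)+1)^(1-σ) - (n:ℝ)^(1-σ)) / (1-σ) := by
      rw [le_div_iff₀ hpos]
      linarith [key]
    push_cast
    calc (∑ a ∈ Finset.Icc 1 n, (a:ℝ) ^ (-σ)) + ((n:ℝ)+1) ^ (-σ)
        ≤ (n:ℝ)^(1-σ)/(1-σ) + (((n:ℝ)+1)^(1-σ) - (n:ℝ)^(1-σ))/(1-σ) := add_le_add ih h5
      _ = ((n:ℝ)+1)^(1-σ)/(1-σ) := by rw [← add_div]; ring_nf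

lemma aux_diam_bound (k : ℕ) (hk : 1 ≤ k) (b : Fin k → ℝ) (hb : ∀ j, 0 < b j)
    (β s t : ℝ) (h1 : 1 < β) (hs : 1 < s) (hst : s < t)
    (r : ℕ) (hr : 2 ≤ r) (q : Fin k → ℕ)
    (hq1 : ∀ j, 1 ≤ q j) (hq2 : ∀ j, q j ≤ r - 1) :
    ∃ j : Fin k, Metric.diam {α ∈ Set.Icc s t |
        |∑ i, b i * ((q i : ℝ) / (r : ℝ)) ^ α - 1| ≤ (r : ℝ) ^ (-β)}
      ≤ 4 * k * (1 + t) * (r : ℝ) ^ (-β) / (1 - (q j : ℝ) / (r : ℝ)) := by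
  have hrR : (2:ℝ) ≤ (r:ℝ) := by exact_mod_cast hr
  have hr0 : (0:ℝ) < (r:ℝ) := by linarith
  have ht0 : (0:ℝ) < 1 + t := by linarith
  have hk0 : (0:ℝ) < (k:ℝ) := by exact_mod_cast hk
  set δ : ℝ := (r:ℝ) ^ (-β) with hδ
  have hδ0 : 0 < δ := Real.rpow_pos_of_pos hr0 _
  have hδhalf : δ ≤ 1/2 := by
    have h1' : δ ≤ (r:ℝ) ^ (-1 : ℝ) :=
      Real.rpow_le_rpow_of_exponent_le (by linarith) (by linarith)
    rw [Real.rpow_neg_one] at h1'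
    have : (r:ℝ)⁻¹ ≤ 1/2 := by
      rw [inv_le_comm₀ hr0 (by norm_num)]
      linarith
    linarith
  -- the x's
  set x : Fin k → ℝ := fun j => (q j : ℝ) / (r : ℝ) with hx
  have hx0 : ∀ j, 0 < x j := fun j =>
    div_pos (by exact_mod_cast hq1 j) hr0
  have hxlt : ∀ j, x j ≤ 1 - 1/(r:ℝ) := by
    intro j
    rw [hx]
    have : (q j : ℝ) ≤ (r : ℝ) - 1 := by
      have := hq2 j
      have : (q j : ℝ) ≤ ((r - 1 : ℕ) : ℝ) := by exact_mod_cast this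
      rwa [Nat.cast_sub (by omega : 1 ≤ r), Nat.cast_one] at this
    rw [div_le_iff₀ hr0]
    field_simp
    linarith
  have hx1 : ∀ j, x j ≤ 1 := by
    intro j
    have := hxlt j
    have : 1/(r:ℝ) > 0 := by positivity
    linarith [hxlt j]
  -- maximal index
  obtain ⟨j₀, -, hj₀⟩ := Finset.exists_mem_eq_sup Finset.univ
    (Finset.univ_nonempty_iff.2 (Fin.pos_iff_nonempty.1 (by omega))) q
  have hmax : ∀ j, q j ≤ q j₀ := by
    intro j
    rw [← hj₀]
    exact Finset.le_sup (Finset.mem_univ j)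
  have hxmax : ∀ j, 1 - x j₀ ≤ 1 - x j := by
    intro j
    have hj : x j ≤ x j₀ := by
      show (q j : ℝ)/(r:ℝ) ≤ (q j₀ : ℝ)/(r:ℝ)
      gcongr
      exact_mod_cast hmax j
    linarith
  have hden : 0 < 1 - x j₀ := by
    have h1r : (0:ℝ) < 1/(r:ℝ) := by positivity
    have := hxlt j₀
    linarith
  refine ⟨j₀, ?_⟩
  have hBnn : 0 ≤ 4 * (k:ℝ) * (1 + t) * δ / (1 - x j₀) := by positivity
  have hkey : ∀ α₁ ∈ {α ∈ Set.Icc s t |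
        |∑ i, b i * ((q i : ℝ) / (r : ℝ)) ^ α - 1| ≤ (r : ℝ) ^ (-β)},
      ∀ α₂ ∈ {α ∈ Set.Icc s t |
        |∑ i, b i * ((q i : ℝ) / (r : ℝ)) ^ α - 1| ≤ (r : ℝ) ^ (-β)},
      α₁ ≤ α₂ → α₂ - α₁ ≤ 4 * (k:ℝ) * (1 + t) * δ / (1 - x j₀) := by
    intro α₁ hα₁ α₂ hα₂ h12
    obtain ⟨⟨hs1, ht1⟩, habs1⟩ := hα₁
    obtain ⟨⟨hs2, ht2⟩, habs2⟩ := hα₂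
    rw [← hδ] at habs1 habs2
    obtain ⟨hl1, hu1⟩ := abs_le.mp habs1
    obtain ⟨hl2, hu2⟩ := abs_le.mp habs2
    have hhalf : (1:ℝ)/2 ≤ ∑ i, b i * ((q i : ℝ) / (r : ℝ)) ^ α₁ := by linarith
    -- a large term exists
    have hexists : ∃ j, 1/(2*(k:ℝ)) ≤ b j * ((q j : ℝ)/(r:ℝ)) ^ α₁ := by
      by_contra hcon
      push_neg at hcon
      have hlt : ∑ i, b i * ((q i : ℝ) / (r : ℝ)) ^ α₁
          < ∑ _i : Fin k, 1/(2*(k:ℝ)) := by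
        apply Finset.sum_lt_sum_of_nonempty
        · exact Finset.univ_nonempty_iff.2 (Fin.pos_iff_nonempty.1 (by omega))
        · intro i _
          exact hcon i
      rw [Finset.sum_const, Finset.card_univ, Fintype.card_fin, nsmul_eq_mul] at hlt
      have hkne : (k:ℝ) ≠ 0 := ne_of_gt hk0
      have : (k:ℝ) * (1/(2*(k:ℝ))) = 1/2 := by field_simp
      rw [this] at hlt
      linarith
    obtain ⟨j, hj⟩ := hexists
    have hmono : ∀ i, ((q i : ℝ)/(r:ℝ)) ^ α₂ ≤ ((q i : ℝ)/(r:ℝ)) ^ α₁ := fun i =>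
      Real.rpow_le_rpow_of_exponent_ge (hx0 i) (hx1 i) h12
    have hdiff : b j * ((q j : ℝ)/(r:ℝ)) ^ α₁ - b j * ((q j : ℝ)/(r:ℝ)) ^ α₂
        ≤ (∑ i, b i * ((q i : ℝ) / (r : ℝ)) ^ α₁)
          - ∑ i, b i * ((q i : ℝ) / (r : ℝ)) ^ α₂ := by
      rw [← Finset.sum_sub_distrib]
      exact Finset.single_le_sum (f := fun i =>
          b i * ((q i : ℝ)/(r:ℝ)) ^ α₁ - b i * ((q i : ℝ)/(r:ℝ)) ^ α₂)
        (fun i _ => by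
          have := hmono i
          have hbi := hb i
          nlinarith) (Finset.mem_univ j)
    have hfactor : b j * ((q j : ℝ)/(r:ℝ)) ^ α₁ - b j * ((q j : ℝ)/(r:ℝ)) ^ α₂
        = b j * ((q j : ℝ)/(r:ℝ)) ^ α₁ * (1 - ((q j : ℝ)/(r:ℝ)) ^ (α₂ - α₁)) := by
      have : ((q j : ℝ)/(r:ℝ)) ^ α₂
          = ((q j : ℝ)/(r:ℝ)) ^ α₁ * ((q j : ℝ)/(r:ℝ)) ^ (α₂ - α₁) := by
        rw [← Real.rpow_add (hx0 j)]
        ring_nf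
        simp only [hx, div_eq_mul_inv]
      rw [this]
      ring
    have haux : (α₂ - α₁) * (1 - (q j : ℝ)/(r:ℝ)) / (1 + t)
        ≤ 1 - ((q j : ℝ)/(r:ℝ)) ^ (α₂ - α₁) := by
      apply aux_one_sub_rpow _ _ _ (hx0 j) (hx1 j) (by linarith) (by linarith)
      linarith
    have hsmall : 1 - ((q j : ℝ)/(r:ℝ)) ^ (α₂ - α₁) ≤ 1 := by
      have : 0 ≤ ((q j : ℝ)/(r:ℝ)) ^ (α₂ - α₁) := Real.rpow_nonneg (le_of_lt (hx0 j)) _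
      linarith
    have hnn : (0:ℝ) ≤ 1 - ((q j : ℝ)/(r:ℝ)) ^ (α₂ - α₁) := by
      have : ((q j : ℝ)/(r:ℝ)) ^ (α₂ - α₁) ≤ 1 :=
        Real.rpow_le_one (le_of_lt (hx0 j)) (hx1 j) (by linarith)
      linarith
    have hxmj : 1 - x j₀ ≤ 1 - (q j : ℝ)/(r:ℝ) := hxmax j
    -- chain of inequalities
    have hchain : 1/(2*(k:ℝ)) * ((α₂ - α₁) * (1 - x j₀) / (1 + t)) ≤ 2 * δ := by
      have c1 : 1/(2*(k:ℝ)) * ((α₂ - α₁) * (1 - x j₀) / (1 + t))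
          ≤ 1/(2*(k:ℝ)) * ((α₂ - α₁) * (1 - (q j : ℝ)/(r:ℝ)) / (1 + t)) := by
        have h12' : (0:ℝ) ≤ α₂ - α₁ := by linarith
        gcongr
      have c2 : 1/(2*(k:ℝ)) * ((α₂ - α₁) * (1 - (q j : ℝ)/(r:ℝ)) / (1 + t))
          ≤ 1/(2*(k:ℝ)) * (1 - ((q j : ℝ)/(r:ℝ)) ^ (α₂ - α₁)) :=
        mul_le_mul_of_nonneg_left haux (by positivity)
      have c3 : 1/(2*(k:ℝ)) * (1 - ((q j : ℝ)/(r:ℝ)) ^ (α₂ - α₁))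
          ≤ b j * ((q j : ℝ)/(r:ℝ)) ^ α₁ * (1 - ((q j : ℝ)/(r:ℝ)) ^ (α₂ - α₁)) :=
        mul_le_mul_of_nonneg_right hj hnn
      have c4 : b j * ((q j : ℝ)/(r:ℝ)) ^ α₁ * (1 - ((q j : ℝ)/(r:ℝ)) ^ (α₂ - α₁)) ≤ 2 * δ := by
        rw [← hfactor]
        linarith
      linarith
    have hA : (α₂ - α₁) * (1 - x j₀)
        = (2*(k:ℝ)*(1+t)) * (1/(2*(k:ℝ)) * ((α₂ - α₁) * (1 - x j₀) / (1 + t))) := by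
      field_simp
    rw [le_div_iff₀ hden]
    calc (α₂ - α₁) * (1 - x j₀)
        = (2*(k:ℝ)*(1+t)) * (1/(2*(k:ℝ)) * ((α₂ - α₁) * (1 - x j₀) / (1 + t))) := hA
      _ ≤ (2*(k:ℝ)*(1+t)) * (2*δ) := mul_le_mul_of_nonneg_left hchain (by positivity)
      _ = 4*(k:ℝ)*(1+t)*δ := by ring
  apply Metric.diam_le_of_forall_dist_le hBnn
  intro a ha c hc
  rw [Real.dist_eq, abs_sub_le_iff]
  constructor
  · rcases le_total a c with h|h
    · linarith
    · exact hkey c hc a ha h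
  · rcases le_total c a with h|h
    · linarith
    · exact hkey a ha c hc h


lemma aux_total_bound (k : ℕ) (hk : 1 ≤ k) (b : Fin k → ℝ) (hb : ∀ j, 0 < b j)
    (β s t : ℝ) (h1 : 1 < β) (hs : 1 < s) (hst : s < t)
    (σ : ℝ) (hσ0 : 0 < σ) (hσ1 : σ < 1)
    (r : ℕ) (hr : 2 ≤ r) :
    ∑ q ∈ Fintype.piFinset (fun _ : Fin k => Finset.Icc 1 (r - 1)),
        (Metric.diam {α ∈ Set.Icc s t |
          |∑ j, b j * ((q j : ℝ) / (r : ℝ)) ^ α - 1| ≤ (r : ℝ) ^ (-β)}) ^ σ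
      ≤ ((4 * k * (1 + t)) ^ σ * k / (1 - σ)) * (r : ℝ) ^ ((k : ℝ) - β * σ) := by
  have hrR : (2:ℝ) ≤ (r:ℝ) := by exact_mod_cast hr
  have hr0 : (0:ℝ) < (r:ℝ) := by linarith
  have ht0 : (0:ℝ) < 1 + t := by linarith
  have hk0 : (0:ℝ) < (k:ℝ) := by exact_mod_cast hk
  have hσd : (0:ℝ) < 1 - σ := by linarith
  set δ : ℝ := (r:ℝ) ^ (-β) with hδ
  have hδ0 : 0 < δ := Real.rpow_pos_of_pos hr0 _
  have hC0 : (0:ℝ) ≤ 4 * (k:ℝ) * (1 + t) := by positivity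
  set A : ℝ := (4 * (k:ℝ) * (1 + t)) ^ σ with hA
  have hA0 : 0 ≤ A := Real.rpow_nonneg hC0 _
  set g : ℕ → ℝ := fun m => (1 - (m:ℝ)/(r:ℝ)) ^ (-σ) with hg
  -- nonneg of bases
  have hbase : ∀ m ∈ Finset.Icc 1 (r-1), (0:ℝ) < 1 - (m:ℝ)/(r:ℝ) := by
    intro m hm
    rw [Finset.mem_Icc] at hm
    have : (m:ℝ) ≤ (r:ℝ) - 1 := by
      have : (m : ℝ) ≤ ((r - 1 : ℕ) : ℝ) := by exact_mod_cast hm.2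
      rwa [Nat.cast_sub (by omega : 1 ≤ r), Nat.cast_one] at this
    have : (m:ℝ)/(r:ℝ) ≤ ((r:ℝ)-1)/(r:ℝ) := by gcongr
    have h2 : ((r:ℝ)-1)/(r:ℝ) < 1 := by
      rw [div_lt_one hr0]; linarith
    linarith
  -- step 1: pointwise bound
  have step1 : ∀ q ∈ Fintype.piFinset (fun _ : Fin k => Finset.Icc 1 (r - 1)),
      (Metric.diam {α ∈ Set.Icc s t |
        |∑ j, b j * ((q j : ℝ) / (r : ℝ)) ^ α - 1| ≤ (r : ℝ) ^ (-β)}) ^ σ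
      ≤ A * δ ^ σ * ∑ j, g (q j) := by
    intro q hqmem
    rw [Fintype.mem_piFinset] at hqmem
    have hq1 : ∀ j, 1 ≤ q j := fun j => (Finset.mem_Icc.mp (hqmem j)).1
    have hq2 : ∀ j, q j ≤ r - 1 := fun j => (Finset.mem_Icc.mp (hqmem j)).2
    obtain ⟨j, hj⟩ := aux_diam_bound k hk b hb β s t h1 hs hst r hr q hq1 hq2
    have hdj : (0:ℝ) < 1 - (q j : ℝ)/(r:ℝ) := hbase _ (hqmem j)
    have hd1 : (Metric.diam {α ∈ Set.Icc s t |
        |∑ i, b i * ((q i : ℝ) / (r : ℝ)) ^ α - 1| ≤ (r : ℝ) ^ (-β)}) ^ σ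
        ≤ (4 * (k:ℝ) * (1 + t) * δ / (1 - (q j : ℝ) / (r : ℝ))) ^ σ :=
      Real.rpow_le_rpow Metric.diam_nonneg hj (le_of_lt hσ0)
    have hd2 : (4 * (k:ℝ) * (1 + t) * δ / (1 - (q j : ℝ) / (r : ℝ))) ^ σ
        = A * δ ^ σ * g (q j) := by
      rw [Real.div_rpow (by positivity) (le_of_lt hdj)]
      rw [Real.mul_rpow hC0 (le_of_lt hδ0)]
      rw [hg]
      simp only []
      rw [Real.rpow_neg (le_of_lt hdj)]
      rw [div_eq_mul_inv]
    have hd3 : g (q j) ≤ ∑ i, g (q i) := by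
      apply Finset.single_le_sum (f := fun i => g (q i)) ?_ (Finset.mem_univ j)
      intro i _
      exact Real.rpow_nonneg (le_of_lt (hbase _ (hqmem i))) _
    calc (Metric.diam _) ^ σ ≤ (4 * (k:ℝ) * (1 + t) * δ / (1 - (q j : ℝ) / (r : ℝ))) ^ σ := hd1
      _ = A * δ ^ σ * g (q j) := hd2
      _ ≤ A * δ ^ σ * ∑ i, g (q i) := by
          apply mul_le_mul_of_nonneg_left hd3 (by positivity)
  -- step 2: sum the bound
  have step2 : ∑ q ∈ Fintype.piFinset (fun _ : Fin k => Finset.Icc 1 (r - 1)),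
      (Metric.diam {α ∈ Set.Icc s t |
        |∑ j, b j * ((q j : ℝ) / (r : ℝ)) ^ α - 1| ≤ (r : ℝ) ^ (-β)}) ^ σ
      ≤ A * δ ^ σ * ∑ q ∈ Fintype.piFinset (fun _ : Fin k => Finset.Icc 1 (r - 1)),
          ∑ j, g (q j) := by
    rw [Finset.mul_sum]
    exact Finset.sum_le_sum step1
  -- step 3: compute the double sum
  have step3 : ∑ q ∈ Fintype.piFinset (fun _ : Fin k => Finset.Icc 1 (r - 1)),
      ∑ j : Fin k, g (q j)
      = (k : ℝ) * ((r - 1 : ℕ) : ℝ) ^ (k - 1) * ∑ m ∈ Finset.Icc 1 (r-1), g m := by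
    rw [Finset.sum_comm]
    have hfix : ∀ j : Fin k, ∑ q ∈ Fintype.piFinset (fun _ : Fin k => Finset.Icc 1 (r - 1)),
        g (q j) = ((r - 1 : ℕ) : ℝ) ^ (k - 1) * ∑ m ∈ Finset.Icc 1 (r-1), g m := by
      intro j
      have hprod : ∀ q : Fin k → ℕ,
          (∏ i : Fin k, if i = j then g (q i) else 1) = g (q j) := by
        intro q
        simp
      calc ∑ q ∈ Fintype.piFinset (fun _ : Fin k => Finset.Icc 1 (r - 1)), g (q j)
          = ∑ q ∈ Fintype.piFinset (fun _ : Fin k => Finset.Icc 1 (r - 1)),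
              ∏ i : Fin k, (if i = j then g (q i) else 1) :=
            Finset.sum_congr rfl (fun q _ => (hprod q).symm)
        _ = ∏ i : Fin k, ∑ x ∈ Finset.Icc 1 (r-1), (if i = j then g x else 1) :=
            Finset.sum_prod_piFinset (Finset.Icc 1 (r-1))
              (fun i x => if i = j then g x else 1)
        _ = (∑ x ∈ Finset.Icc 1 (r-1), g x) *
              ∏ i ∈ Finset.univ.erase j, ∑ x ∈ Finset.Icc 1 (r-1), (if i = j then g x else 1) := by
            rw [← Finset.mul_prod_erase Finset.univ _ (Finset.mem_univ j)]
            simp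
        _ = (∑ x ∈ Finset.Icc 1 (r-1), g x) *
              ∏ _i ∈ Finset.univ.erase j, ((r - 1 : ℕ) : ℝ) := by
            congr 1
            apply Finset.prod_congr rfl
            intro i hi
            have hij : i ≠ j := (Finset.mem_erase.mp hi).1
            simp [hij, Nat.card_Icc]
        _ = ((r - 1 : ℕ) : ℝ) ^ (k - 1) * ∑ m ∈ Finset.Icc 1 (r-1), g m := by
            rw [Finset.prod_const, Finset.card_erase_of_mem (Finset.mem_univ j),
              Finset.card_univ, Fintype.card_fin]
            ring
    rw [Finset.sum_congr rfl (fun j _ => hfix j)]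
    rw [Finset.sum_const, Finset.card_univ, Fintype.card_fin, nsmul_eq_mul]
    ring
  -- step 4: bound the single sum
  have step4 : ∑ m ∈ Finset.Icc 1 (r-1), g m ≤ (r:ℝ)^σ * ((r:ℝ)^(1-σ)/(1-σ)) := by
    have hGeq : ∀ m ∈ Finset.Icc 1 (r-1), g m = ((r - m : ℕ) : ℝ)^(-σ) * (r:ℝ)^σ := by
      intro m hm
      rw [Finset.mem_Icc] at hm
      have hmr : (m:ℝ) ≤ (r:ℝ) - 1 := by
        have : (m : ℝ) ≤ ((r - 1 : ℕ) : ℝ) := by exact_mod_cast hm.2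
        rwa [Nat.cast_sub (by omega : 1 ≤ r), Nat.cast_one] at this
      have hcast : ((r - m : ℕ) : ℝ) = (r:ℝ) - (m:ℝ) := by
        rw [Nat.cast_sub (by omega)]
      have h1 : (1 : ℝ) - (m:ℝ)/(r:ℝ) = ((r:ℝ) - (m:ℝ))/(r:ℝ) := by field_simp
      show (1 - (m:ℝ)/(r:ℝ)) ^ (-σ) = ((r - m : ℕ) : ℝ)^(-σ) * (r:ℝ)^σ
      rw [h1, Real.div_rpow (by linarith) (le_of_lt hr0), hcast]
      rw [Real.rpow_neg (le_of_lt hr0) σ, div_inv_eq_mul]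
    rw [Finset.sum_congr rfl hGeq, ← Finset.sum_mul]
    have hre : ∑ m ∈ Finset.Icc 1 (r-1), ((r - m : ℕ):ℝ)^(-σ)
        = ∑ a ∈ Finset.Icc 1 (r-1), (a:ℝ)^(-σ) := by
      apply Finset.sum_nbij' (i := fun m => r - m) (j := fun a => r - a)
      · intro a ha; rw [Finset.mem_Icc] at *; omega
      · intro a ha; rw [Finset.mem_Icc] at *; omega
      · intro a ha; rw [Finset.mem_Icc] at ha; omega
      · intro a ha; rw [Finset.mem_Icc] at ha; omega
      · intro a ha; rfl
    rw [hre]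
    have hsum := aux_sum_rpow σ hσ0 hσ1 (r-1)
    have hle : ((r-1:ℕ):ℝ)^(1-σ) ≤ (r:ℝ)^(1-σ) := by
      apply Real.rpow_le_rpow (by positivity) ?_ (by linarith)
      exact_mod_cast Nat.sub_le r 1
    have : ∑ a ∈ Finset.Icc 1 (r-1), (a:ℝ)^(-σ) ≤ (r:ℝ)^(1-σ)/(1-σ) := by
      apply le_trans hsum
      gcongr
    calc (∑ a ∈ Finset.Icc 1 (r-1), (a:ℝ)^(-σ)) * (r:ℝ)^σ
        ≤ ((r:ℝ)^(1-σ)/(1-σ)) * (r:ℝ)^σ := by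
          apply mul_le_mul_of_nonneg_right this (by positivity)
      _ = (r:ℝ)^σ * ((r:ℝ)^(1-σ)/(1-σ)) := by ring
  -- assemble
  have hd : ((r-1:ℕ):ℝ)^(k-1) ≤ (r:ℝ)^(k-1 : ℕ) := by
    apply pow_le_pow_left₀ (by positivity)
    exact_mod_cast Nat.sub_le r 1
  have hGnn : (0:ℝ) ≤ ∑ m ∈ Finset.Icc 1 (r-1), g m := by
    apply Finset.sum_nonneg
    intro m hm
    exact Real.rpow_nonneg (le_of_lt (hbase m hm)) _
  have hδσ : δ ^ σ = (r:ℝ) ^ (-(β*σ)) := by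
    rw [hδ, ← Real.rpow_mul (le_of_lt hr0)]
    ring_nf
  have hpowk : (r:ℝ)^(k-1 : ℕ) = (r:ℝ)^((k:ℝ)-1) := by
    rw [← Real.rpow_natCast (r:ℝ) (k-1)]
    congr 1
    rw [Nat.cast_sub hk, Nat.cast_one]
  calc ∑ q ∈ Fintype.piFinset (fun _ : Fin k => Finset.Icc 1 (r - 1)),
        (Metric.diam {α ∈ Set.Icc s t |
          |∑ j, b j * ((q j : ℝ) / (r : ℝ)) ^ α - 1| ≤ (r : ℝ) ^ (-β)}) ^ σ
      ≤ A * δ ^ σ * ∑ q ∈ Fintype.piFinset (fun _ : Fin k => Finset.Icc 1 (r - 1)),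
          ∑ j, g (q j) := step2
    _ = A * δ ^ σ * ((k : ℝ) * ((r - 1 : ℕ) : ℝ) ^ (k - 1) * ∑ m ∈ Finset.Icc 1 (r-1), g m) := by
        rw [step3]
    _ ≤ A * δ ^ σ * ((k : ℝ) * (r:ℝ) ^ (k-1 : ℕ) * ((r:ℝ)^σ * ((r:ℝ)^(1-σ)/(1-σ)))) := by
        apply mul_le_mul_of_nonneg_left ?_ (by positivity)
        apply mul_le_mul ?_ step4 hGnn (by positivity)
        apply mul_le_mul_of_nonneg_left hd (by positivity)
    _ = ((4 * k * (1 + t)) ^ σ * k / (1 - σ)) *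
          ((r:ℝ) ^ (-(β*σ)) * ((r:ℝ)^((k:ℝ)-1) * ((r:ℝ)^σ * (r:ℝ)^(1-σ)))) := by
        rw [hδσ, hpowk, hA]
        ring
    _ = ((4 * k * (1 + t)) ^ σ * k / (1 - σ)) * (r : ℝ) ^ ((k : ℝ) - β * σ) := by
        rw [← Real.rpow_add hr0, ← Real.rpow_add hr0, ← Real.rpow_add hr0]
        ring_nf

/-- Let `k ≥ 1`, `b₁, …, b_k > 0`, `k + 1 < β < s < t`, and
`J(q; r) = {α ∈ [s,t] : |b₁(q₁/r)^α + ⋯ + b_k(q_k/r)^α − 1| ≤ r^{−β}}`. Then for every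
`(k+1)/β < σ < 1` and every integer `M ≥ 1`, the series
`∑_{r ≥ M} ∑_{q ∈ {1,…,r−1}^k} (diam J(q;r))^σ` converges. -/
theorem statement13 (k : ℕ) (hk : 1 ≤ k) (b : Fin k → ℝ) (hb : ∀ j, 0 < b j)
    (β s t : ℝ) (hβ : (k : ℝ) + 1 < β) (h1 : 1 < β) (h2 : β < s) (h3 : s < t)
    (σ : ℝ) (hσ1 : ((k : ℝ) + 1) / β < σ) (hσ2 : σ < 1) (M : ℕ) (hM : 1 ≤ M) :
    Summable (fun r : ℕ => if M ≤ r then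
      ∑ q ∈ Fintype.piFinset (fun _ : Fin k => Finset.Icc 1 (r - 1)),
        (Metric.diam {α ∈ Set.Icc s t |
          |∑ j, b j * ((q j : ℝ) / (r : ℝ)) ^ α - 1| ≤ (r : ℝ) ^ (-β)}) ^ σ
      else 0) := by
  have hβ0 : (0:ℝ) < β := by linarith
  have hσ0 : 0 < σ := lt_trans (by positivity) hσ1
  have hσd : (0:ℝ) < 1 - σ := by linarith
  have hs : 1 < s := by linarith
  have ht0 : (0:ℝ) < 1 + t := by linarith
  set K : ℝ := (4 * (k:ℝ) * (1 + t)) ^ σ * (k:ℝ) / (1 - σ) with hK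
  have hK0 : 0 ≤ K := by
    apply div_nonneg ?_ (le_of_lt hσd)
    apply mul_nonneg (Real.rpow_nonneg (by positivity) _) (by positivity)
  have hexp : (k:ℝ) - β * σ < -1 := by
    have : (k:ℝ) + 1 < β * σ := by
      rw [div_lt_iff₀ hβ0] at hσ1
      linarith [hσ1]
    linarith
  have hsummable : Summable (fun r : ℕ => K * (r:ℝ) ^ ((k:ℝ) - β * σ)) :=
    (Real.summable_nat_rpow.mpr hexp).mul_left K
  apply Summable.of_nonneg_of_le ?_ ?_ hsummable
  · intro r
    split
    · apply Finset.sum_nonneg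
      intro q _
      exact Real.rpow_nonneg Metric.diam_nonneg _
    · exact le_refl 0
  · intro r
    have hrhs : 0 ≤ K * (r:ℝ) ^ ((k:ℝ) - β * σ) :=
      mul_nonneg hK0 (Real.rpow_nonneg (Nat.cast_nonneg r) _)
    split
    · rename_i hMr
      rcases le_or_gt 2 r with hr2 | hr2
      · exact aux_total_bound k hk b hb β s t h1 hs h3 σ hσ0 hσ2 r hr2
      · -- r ≤ 1, and M ≤ r with 1 ≤ M forces r = 1
        have hr1 : r = 1 := by omega
        subst hr1
        have hempty : Fintype.piFinset (fun _ : Fin k => Finset.Icc 1 (1 - 1)) = ∅ := by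
          ext f
          simp only [Fintype.mem_piFinset, Finset.mem_Icc, Finset.notMem_empty, iff_false]
          push_neg
          exact ⟨⟨0, hk⟩, by omega⟩
        rw [hempty, Finset.sum_empty]
        exact hrhs
    · exact hrhs
end

section
/- Let k ≥ 1 and let b₁, …, b_k > 0 be real numbers with S := b₁ + ⋯ + b_k < 1, and let 1 < β < s < t < γ. Write E(u; Q) = ∑_{i=1}^k b_i Q_i^u for Q = (Q₁,…,Q_k) ∈ (0,∞)^k, so that the second derivative in u is E''(u; Q) = ∑_{i=1}^k b_i Q_i^u (log Q_i)². Then there exist constants c > 0 and M₀ > 0 (depending only on b₁,…,b_k, β, s, t, γ, k) such that for every integer r ≥ M₀ and every q = (q₁,…,q_k) ∈ ℕ^k: if there exists u' ∈ [s, t] with |E(u'; q₁/r, …, q_k/r) − 1| ≤ r^{−β}, then E''(u; q₁/r, …, q_k/r) ≥ c for all u > 0. -/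
/-- Let `k ≥ 1`, `b₁, …, b_k > 0` with `b₁ + ⋯ + b_k < 1`, and `1 < β < s < t < γ`.
Then there are `c > 0` and `M₀ > 0` such that for every integer `r ≥ M₀` and every
`q ∈ ℕ^k`: if some `u' ∈ [s,t]` satisfies `|E(u'; q/r) − 1| ≤ r^{−β}`, where
`E(u; Q) = ∑ bᵢ Qᵢ^u`, then `E''(u; q/r) = ∑ bᵢ (qᵢ/r)^u (log(qᵢ/r))² ≥ c` for all
`u > 0`. -/
theorem statement14 (k : ℕ) (hk : 1 ≤ k) (b : Fin k → ℝ) (hb : ∀ i, 0 < b i)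
    (hS : ∑ i, b i < 1) (β s t γ : ℝ) (h1 : 1 < β) (h2 : β < s) (h3 : s < t)
    (h4 : t < γ) :
    ∃ c : ℝ, 0 < c ∧ ∃ M₀ : ℝ, 0 < M₀ ∧ ∀ r : ℕ, M₀ ≤ (r : ℝ) →
      ∀ q : Fin k → ℕ, (∀ i, 1 ≤ q i) →
      (∃ u' ∈ Set.Icc s t,
        |∑ i, b i * ((q i : ℝ) / (r : ℝ)) ^ u' - 1| ≤ (r : ℝ) ^ (-β)) →
      ∀ u : ℝ, 0 < u →
        c ≤ ∑ i, b i * ((q i : ℝ) / (r : ℝ)) ^ u *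
              (Real.log ((q i : ℝ) / (r : ℝ))) ^ 2 := by
  haveI : Nonempty (Fin k) := ⟨⟨0, hk⟩⟩
  set S := ∑ i, b i with hSdef
  have hS0 : 0 < S := Finset.sum_pos (fun i _ => hb i) Finset.univ_nonempty
  set A : ℝ := (1 + S) / (2 * S) with hAdef
  have hA1 : 1 < A := by
    rw [hAdef, lt_div_iff₀ (by linarith)]; linarith
  have hA0 : (0:ℝ) < A := lt_trans one_pos hA1
  have ht0 : (0:ℝ) < t := by linarith
  set m : ℝ := Finset.univ.inf' Finset.univ_nonempty b with hmdef
  have hm0 : 0 < m := by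
    rw [hmdef, Finset.lt_inf'_iff]; exact fun i _ => hb i
  have hL0 : 0 < Real.log A / t := div_pos (Real.log_pos hA1) ht0
  refine ⟨m * (Real.log A / t) ^ 2, by positivity, max 1 (2 / (1 - S)), by positivity,
    ?_⟩
  intro r hr q hq ⟨u', hu', hE⟩ u hu
  have hr1 : (1:ℝ) ≤ r := le_trans (le_max_left _ _) hr
  have hrpos : (0:ℝ) < r := lt_of_lt_of_le one_pos hr1
  have h1S : (0:ℝ) < 1 - S := by linarith
  have hrβ : (r:ℝ) ^ (-β) ≤ (1 - S) / 2 := by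
    have hmax : 2 / (1 - S) ≤ (r:ℝ) := le_trans (le_max_right _ _) hr
    rw [div_le_iff₀ h1S] at hmax
    calc (r:ℝ) ^ (-β) ≤ (r:ℝ) ^ (-1:ℝ) :=
          Real.rpow_le_rpow_of_exponent_le hr1 (by linarith)
      _ = (r:ℝ)⁻¹ := Real.rpow_neg_one r
      _ ≤ (1 - S) / 2 := by
          rw [inv_le_comm₀ hrpos (by linarith), inv_div]
          rw [div_le_iff₀ h1S]; linarith
  have hEge : (1 + S) / 2 ≤ ∑ i, b i * ((q i : ℝ) / (r : ℝ)) ^ u' := by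
    have := abs_le.mp hE
    linarith [this.1, hrβ]
  -- some i has (q i / r)^u' ≥ A
  have hex : ∃ i, A ≤ ((q i : ℝ) / (r : ℝ)) ^ u' := by
    by_contra h
    push_neg at h
    have hlt : ∑ i, b i * ((q i : ℝ) / (r : ℝ)) ^ u' < ∑ i, b i * A :=
      Finset.sum_lt_sum_of_nonempty Finset.univ_nonempty
        (fun i _ => mul_lt_mul_of_pos_left (h i) (hb i))
    have hsum : ∑ i, b i * A = S * A := by rw [← Finset.sum_mul]
    have : S * A = (1 + S) / 2 := by
      rw [hAdef]; field_simp
    linarith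
  obtain ⟨i, hAle⟩ := hex
  set Q : Fin k → ℝ := fun j => (q j : ℝ) / (r : ℝ) with hQdef
  have hQnn : ∀ j, 0 ≤ Q j := fun j => by positivity
  have hu'0 : 0 < u' := by have := hu'.1; linarith
  have hQiu : A ^ (1 / u') ≤ Q i := by
    rw [one_div]
    have h1 : A ^ u'⁻¹ ≤ (Q i ^ u') ^ u'⁻¹ :=
      Real.rpow_le_rpow hA0.le hAle (by positivity)
    rwa [Real.rpow_rpow_inv (hQnn i) (ne_of_gt hu'0)] at h1
  have hQit : A ^ (1 / t) ≤ Q i := by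
    refine le_trans ?_ hQiu
    exact Real.rpow_le_rpow_of_exponent_le hA1.le
      (one_div_le_one_div_of_le hu'0 hu'.2)
  have hAt1 : 1 ≤ A ^ (1 / t) := Real.one_le_rpow hA1.le (by positivity)
  have hQi1 : 1 ≤ Q i := le_trans hAt1 hQit
  have hlog : Real.log A / t ≤ Real.log (Q i) := by
    have : Real.log (A ^ (1 / t)) ≤ Real.log (Q i) :=
      Real.log_le_log (by positivity) hQit
    rwa [Real.log_rpow hA0, one_div, inv_mul_eq_div] at this
  have hterm : m * (Real.log A / t) ^ 2 ≤ b i * Q i ^ u * Real.log (Q i) ^ 2 := by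
    have hm : m ≤ b i := Finset.inf'_le b (Finset.mem_univ i)
    have hlog2 : (Real.log A / t) ^ 2 ≤ Real.log (Q i) ^ 2 :=
      pow_le_pow_left₀ hL0.le hlog 2
    have hQu : 1 ≤ Q i ^ u := Real.one_le_rpow hQi1 hu.le
    calc m * (Real.log A / t) ^ 2 ≤ b i * (Real.log A / t) ^ 2 :=
          mul_le_mul_of_nonneg_right hm (sq_nonneg _)
      _ ≤ b i * Real.log (Q i) ^ 2 :=
          mul_le_mul_of_nonneg_left hlog2 (hb i).le
      _ ≤ b i * Q i ^ u * Real.log (Q i) ^ 2 := by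
          have : b i ≤ b i * Q i ^ u := by nlinarith [hb i]
          exact mul_le_mul_of_nonneg_right this (sq_nonneg _)
  refine le_trans hterm ?_
  exact Finset.single_le_sum
    (f := fun j => b j * Q j ^ u * Real.log (Q j) ^ 2)
    (fun j _ => mul_nonneg (mul_nonneg (hb j).le (Real.rpow_nonneg (hQnn j) u))
      (sq_nonneg _)) (Finset.mem_univ i)
end

section
/- Let k ≥ 1 and let b₁, …, b_k > 0 be real numbers with b₁ + ⋯ + b_k < 1, let 1 < β < s < t < γ, and set B_j = max(b_j^{−1/β}, b_j^{−1/γ}). For integers r ≥ 1 and q = (q₁, …, q_k) ∈ ℕ^k, define J(q; r) = {α ∈ [s, t] : |b₁(q₁/r)^α + ⋯ + b_k(q_k/r)^α − 1| ≤ r^{−β}}. Then there exist constants C > 0 and M₀ > 0 (depending only on b₁,…,b_k, β, s, t, γ, k) such that for all integers r ≥ M₀ and all q ∈ ℕ^k with 1 ≤ q_j < B_j r and q_j ≠ r for every j, and such that q_i < r for at least one index i and q_j > r for at least one index j, one has diam J(q; r) ≤ C r^{−β}. -/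
open Real

private lemma key_ineq15 (x : ℝ) (hx : 0 < x) (a d : ℝ) (ha : 0 < a) (hd : 0 ≤ d) :
    d / a * (x ^ a - 1) ≤ x ^ (a + d) - x ^ a := by
  have h1 : x ^ a = Real.exp (a * Real.log x) := by
    rw [Real.rpow_def_of_pos hx a, mul_comm]
  have h2 : x ^ (a + d) = Real.exp ((a + d) * Real.log x) := by
    rw [Real.rpow_def_of_pos hx _, mul_comm]
  set L := Real.log x with hL
  rw [h1, h2]
  have e1 : Real.exp ((a + d) * L) = Real.exp (a * L) * Real.exp (d * L) := by
    rw [← Real.exp_add]; ring_nf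
  have e2 : d * L + 1 ≤ Real.exp (d * L) := Real.add_one_le_exp _
  have e3 : (1 - a * L) * Real.exp (a * L) ≤ 1 := by
    have h5 := Real.add_one_le_exp (-(a * L))
    have h4 : Real.exp (-(a * L)) * Real.exp (a * L) = 1 := by
      rw [← Real.exp_add]; simp
    nlinarith [Real.exp_pos (a * L)]
  have hea : 0 < Real.exp (a * L) := Real.exp_pos _
  rw [e1, div_mul_eq_mul_div, div_le_iff₀ ha]
  nlinarith [mul_le_mul_of_nonneg_left e2 (le_of_lt hea),
    mul_nonneg hd (le_of_lt hea), mul_nonneg (mul_nonneg hd (le_of_lt hea)) ha.le]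

/-- Let `k ≥ 1`, `b₁, …, b_k > 0` with `b₁ + ⋯ + b_k < 1`, `1 < β < s < t < γ`, and
`B_j = max(b_j^{−1/β}, b_j^{−1/γ})`. There are `C > 0` and `M₀ > 0` such that for all
integers `r ≥ M₀` and all `q ∈ ℕ^k` with `1 ≤ q_j < B_j r`, `q_j ≠ r` for every `j`,
some `q_i < r` and some `q_j > r`, one has `diam J(q;r) ≤ C r^{−β}`, where
`J(q;r) = {α ∈ [s,t] : |b₁(q₁/r)^α + ⋯ + b_k(q_k/r)^α − 1| ≤ r^{−β}}`. -/
theorem statement15 (k : ℕ) (hk : 1 ≤ k) (b : Fin k → ℝ) (hb : ∀ j, 0 < b j)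
    (hS : ∑ j, b j < 1) (β s t γ : ℝ) (h1 : 1 < β) (h2 : β < s) (h3 : s < t)
    (h4 : t < γ) :
    ∃ C : ℝ, 0 < C ∧ ∃ M₀ : ℝ, 0 < M₀ ∧ ∀ r : ℕ, M₀ ≤ (r : ℝ) →
      ∀ q : Fin k → ℕ,
      (∀ j, 1 ≤ q j ∧
        (q j : ℝ) < max (b j ^ (-1 / β)) (b j ^ (-1 / γ)) * (r : ℝ) ∧ q j ≠ r) →
      (∃ i, q i < r) → (∃ j, r < q j) →
      Metric.diam {α ∈ Set.Icc s t |
          |∑ j, b j * ((q j : ℝ) / (r : ℝ)) ^ α - 1| ≤ (r : ℝ) ^ (-β)} ≤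
        C * (r : ℝ) ^ (-β) := by
  set S := ∑ j, b j with hSdef
  have hS1 : 0 < 1 - S := by linarith
  have hβ0 : (0:ℝ) < β := by linarith
  have ht0 : (0:ℝ) < t := by linarith
  have hs0 : (0:ℝ) < s := by linarith
  refine ⟨4 * t / (1 - S), by positivity, max 1 ((2 / (1 - S)) ^ (1 / β)), by positivity, ?_⟩
  intro r hr q hq _ _
  have hr1 : (1:ℝ) ≤ (r:ℝ) := le_trans (le_max_left _ _) hr
  have hr0 : (0:ℝ) < (r:ℝ) := by linarith
  set ε := (r:ℝ) ^ (-β) with hε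
  have hε0 : 0 ≤ ε := Real.rpow_nonneg hr0.le _
  -- ε ≤ (1 - S)/2
  have hεsmall : ε ≤ (1 - S) / 2 := by
    have hM : (2 / (1 - S)) ^ (1 / β) ≤ (r:ℝ) := le_trans (le_max_right _ _) hr
    have h2S : (0:ℝ) < 2 / (1 - S) := by positivity
    have hpow : 2 / (1 - S) ≤ (r:ℝ) ^ β := by
      calc 2 / (1 - S) = ((2 / (1 - S)) ^ (1 / β)) ^ β := by
            rw [← Real.rpow_mul h2S.le, one_div_mul_cancel (ne_of_gt hβ0), Real.rpow_one]
          _ ≤ (r:ℝ) ^ β := Real.rpow_le_rpow (by positivity) hM hβ0.le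
    have : ε = ((r:ℝ) ^ β)⁻¹ := by
      rw [hε, Real.rpow_neg hr0.le]
    rw [this]
    rw [inv_le_comm₀ (by positivity) (by positivity)]
    calc ((1 - S) / 2)⁻¹ = 2 / (1 - S) := by field_simp
      _ ≤ (r:ℝ) ^ β := hpow
  set J := {α ∈ Set.Icc s t |
      |∑ j, b j * ((q j : ℝ) / (r : ℝ)) ^ α - 1| ≤ (r : ℝ) ^ (-β)} with hJ
  set F : ℝ → ℝ := fun α => ∑ j, b j * ((q j : ℝ) / (r : ℝ)) ^ α with hF
  have hxpos : ∀ j : Fin k, 0 < (q j : ℝ) / (r : ℝ) := by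
    intro j
    have : (1:ℝ) ≤ (q j : ℝ) := by exact_mod_cast (hq j).1
    positivity
  -- key monotonicity estimate
  have key : ∀ α α' : ℝ, α ∈ J → α' ∈ J → α ≤ α' → α' - α ≤ 4 * t / (1 - S) * ε := by
    intro α α' hα hα' hle
    obtain ⟨⟨hαs, hαt⟩, hαF⟩ := hα
    obtain ⟨⟨hα's, hα't⟩, hα'F⟩ := hα'
    have hα0 : 0 < α := lt_of_lt_of_le hs0 hαs
    set d := α' - α with hd
    have hd0 : 0 ≤ d := by linarith
    -- per-term inequality summed
    have hstep : d / α * (F α - S) ≤ F α' - F α := by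
      have : ∀ j : Fin k, b j * (d / α * (((q j : ℝ) / (r : ℝ)) ^ α - 1)) ≤
          b j * ((q j : ℝ) / (r : ℝ)) ^ α' - b j * ((q j : ℝ) / (r : ℝ)) ^ α := by
        intro j
        have h := key_ineq15 _ (hxpos j) α d hα0 hd0
        have hαd : α + d = α' := by ring
        rw [hαd] at h
        nlinarith [(hb j).le, h, (hb j)]
      calc d / α * (F α - S)
          = ∑ j, b j * (d / α * (((q j : ℝ) / (r : ℝ)) ^ α - 1)) := by
            rw [hF, hSdef]
            rw [← Finset.sum_sub_distrib, Finset.mul_sum]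
            congr 1; ext j; ring
        _ ≤ ∑ j, (b j * ((q j : ℝ) / (r : ℝ)) ^ α' - b j * ((q j : ℝ) / (r : ℝ)) ^ α) :=
            Finset.sum_le_sum (fun j _ => this j)
        _ = F α' - F α := by rw [hF, Finset.sum_sub_distrib]
    have hFα : 1 - ε ≤ F α := by
      have := abs_le.mp hαF
      simp only [← hF, ← hε] at this ⊢
      linarith [this.1]
    have hFdiff : F α' - F α ≤ 2 * ε := by
      have hA := abs_le.mp hαF
      have hB := abs_le.mp hα'F
      simp only [← hF, ← hε] at hA hB
      linarith [hA.1, hB.2]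
    have hFS : (1 - S) / 2 ≤ F α - S := by linarith
    have hαt' : α ≤ t := hαt
    -- d / α * (1-S)/2 ≤ 2 ε, α ≤ t
    have hkey2 : d / t * ((1 - S) / 2) ≤ 2 * ε := by
      have hdt : d / t ≤ d / α := by
        apply div_le_div_of_nonneg_left hd0 hα0 hαt'
      calc d / t * ((1 - S) / 2) ≤ d / α * ((1 - S) / 2) := by nlinarith
        _ ≤ d / α * (F α - S) := by
            apply mul_le_mul_of_nonneg_left hFS (by positivity)
        _ ≤ F α' - F α := hstep
        _ ≤ 2 * ε := hFdiff
    rw [div_mul_eq_mul_div, div_le_iff₀ ht0] at hkey2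
    rw [div_mul_eq_mul_div, le_div_iff₀ hS1]
    nlinarith [hkey2]
  apply Metric.diam_le_of_forall_dist_le (by positivity)
  intro x hx y hy
  rw [Real.dist_eq]
  rcases le_total x y with h | h
  · rw [abs_sub_comm, abs_of_nonneg (by linarith)]
    exact key x y hx hy h
  · rw [abs_of_nonneg (by linarith)]
    exact key y x hy hx h
end
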